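/- arXiv:2505.08099 — 7 statements merged into one kernel-verified Lean document; each statement's English description precedes it below -/
import Mathlib

section
/- For every nonnegative integer n, the number of partitions of n equals the number of signed partitions of n in which the positive parts, listed in increasing order λ_1 < λ_2 < … < λ_k, satisfy λ_i ≡ i − 1 (mod 2) for all i (i.e., the positive parts alternate in parity with the smallest positive part even), and the negative part sizes are distinct and each at most the number of positive parts. -/
/-- An (ordinary) partition of `n`: a finite multiset of positive integers summing to `n`. -/
def IsPartitionOf (n : ℕ) (π : Multiset ℕ) : Prop :=
  (∀ x ∈ π, 0 < x) ∧ π.sum = n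

/-- A signed partition of `n`: a pair of finite multisets of positive integers,
the positive parts `π` and the negative part sizes `ν`, with `|π| - |ν| = n`. -/
def IsSignedPartitionOf (n : ℤ) (π ν : Multiset ℕ) : Prop :=
  (∀ x ∈ π, 0 < x) ∧ (∀ x ∈ ν, 0 < x) ∧ (π.sum : ℤ) - (ν.sum : ℤ) = n

namespace SgnP

/-- The forward map's core recursion: consumes the increasing partition list `xs`,
producing the strictly increasing parity-alternating list and the ν-list. -/
def build (k : ℕ) : ℕ → ℕ → List ℕ → List ℕ × List ℕ
  | _, _, [] => ([], [])
  | i, c, x :: xs =>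
    if (x + c) % 2 = i % 2 then
      ((x + c) :: (build k (i+1) c xs).1, (build k (i+1) c xs).2)
    else
      ((x + c + 1) :: (build k (i+1) (c+1) xs).1, (k - i) :: (build k (i+1) (c+1) xs).2)

/-- Subtracting counts: the inverse map's list operation. -/
def FL (k : ℕ) (v : Multiset ℕ) (c : ℕ) : ℕ → List ℕ → List ℕ
  | _, [] => []
  | i, x :: xs => (x - (c + Multiset.countP (fun a => k - i ≤ a) v)) :: FL k v c (i+1) xs

lemma FL_length (k : ℕ) (v : Multiset ℕ) (c : ℕ) : ∀ i xs, (FL k v c i xs).length = List.length xs := by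
  intro i xs
  induction xs generalizing i with
  | nil => simp [FL]
  | cons x xs ih => simp [FL, ih]

lemma FL_get (k : ℕ) (v : Multiset ℕ) (c : ℕ) : ∀ i xs (j : ℕ) (h : j < (FL k v c i xs).length),
    (FL k v c i xs).get ⟨j, h⟩ =
      xs.get ⟨j, by rwa [FL_length] at h⟩ - (c + Multiset.countP (fun a => k - (i + j) ≤ a) v) := by
  intro i xs
  induction xs generalizing i with
  | nil => intro j h; simp [FL] at h
  | cons x xs ih =>
    intro j h
    cases j with
    | zero => simp [FL]
    | succ j =>
      simp only [FL, List.get_cons_succ] at h ⊢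
      have h2 : i + 1 + j = i + (j + 1) := by omega
      rw [ih (i+1), h2]

/-- If all of `v` is at most `k - i₀` then for later indices counting over
`(k-i₀) ::ₘ v` is one more. -/
lemma FL_cons (k i₀ : ℕ) (v : Multiset ℕ) (c : ℕ) :
    ∀ i xs, i₀ ≤ i → FL k ((k - i₀) ::ₘ v) c i xs = FL k v (c + 1) i xs := by
  intro i xs
  induction xs generalizing i with
  | nil => simp [FL]
  | cons x xs ih =>
    intro hi
    simp only [FL]
    rw [ih (i+1) (by omega)]
    congr 1
    rw [Multiset.countP_cons]
    have : k - i ≤ k - i₀ := by omega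
    simp [this]
    omega


lemma build_spec : ∀ (xs : List ℕ) (k i c : ℕ), xs.Pairwise (· ≤ ·) →
    (∀ x ∈ xs, 0 < x) → i + xs.length = k →
    (build k i c xs).1.length = xs.length ∧
    (∀ j (h : j < (build k i c xs).1.length),
        ((build k i c xs).1.get ⟨j, h⟩) % 2 = (i + j) % 2) ∧
    (build k i c xs).1.IsChain (· < ·) ∧
    (∀ (h : 0 < (build k i c xs).1.length) (h' : 0 < xs.length),
        xs.get ⟨0, h'⟩ + c ≤ (build k i c xs).1.get ⟨0, h⟩) ∧
    (∀ a ∈ (build k i c xs).1, 0 < a) ∧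
    (build k i c xs).2.Pairwise (· > ·) ∧
    (∀ a ∈ (build k i c xs).2, 0 < a ∧ a + i ≤ k) ∧
    ((build k i c xs).1.sum : ℤ) - ((build k i c xs).2.sum : ℤ)
        = (xs.sum : ℤ) + (xs.length : ℤ) * c ∧
    FL k ↑(build k i c xs).2 c i (build k i c xs).1 = xs := by
  intro xs
  induction xs with
  | nil =>
    intro k i c _ _ _
    simp [build, FL]
  | cons x xs ih =>
    intro k i c hsort hpos hk
    have hsort' : xs.Pairwise (· ≤ ·) := (List.pairwise_cons.mp hsort).2
    have hle : ∀ y ∈ xs, x ≤ y := (List.pairwise_cons.mp hsort).1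
    have hpos' : ∀ y ∈ xs, 0 < y := fun y hy => hpos y (List.mem_cons_of_mem _ hy)
    have hxpos : 0 < x := hpos x (List.mem_cons_self)
    simp only [List.length_cons] at hk
    have hk' : (i+1) + xs.length = k := by omega
    by_cases hpar : (x + c) % 2 = i % 2
    · -- no emission
      obtain ⟨ih1, ih2, ih3, ih4, ih5, ih6, ih7, ih8, ih9⟩ := ih k (i+1) c hsort' hpos' hk'
      have hb1 : (build k i c (x :: xs)).1 = (x + c) :: (build k (i+1) c xs).1 := by
        simp [build, hpar]
      have hb2 : (build k i c (x :: xs)).2 = (build k (i+1) c xs).2 := by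
        simp [build, hpar]
      rw [hb1, hb2]
      refine ⟨by simpa using ih1, ?_, ?_, ?_, ?_, ih6, ?_, ?_, ?_⟩
      · intro j h
        cases j with
        | zero => simpa using hpar
        | succ j =>
          have := ih2 j (by simpa using h)
          simp only [List.get_cons_succ]
          rw [this]; congr 1; omega
      · rw [List.isChain_cons]
        refine ⟨?_, ih3⟩
        intro y hy
        have hy' : (build k (i+1) c xs).1[0]? = some y := by
          rw [← List.head?_eq_getElem?]; exact hy
        obtain ⟨hlen, hy0⟩ := List.getElem?_eq_some_iff.mp hy'
        have hxlen : 0 < xs.length := by rw [ih1] at hlen; exact hlen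
        have h4 := ih4 hlen hxlen
        have h2 := ih2 0 hlen
        have hxle : x ≤ xs.get ⟨0, hxlen⟩ := hle _ (List.get_mem _ _)
        rw [← hy0]
        simp only [List.get_eq_getElem] at *
        omega
      · intro h h'
        exact Nat.le_refl _
      · intro a ha
        rcases List.mem_cons.mp ha with h | h
        · omega
        · exact ih5 a h
      · intro a ha
        obtain ⟨h1, h2⟩ := ih7 a ha
        exact ⟨h1, by omega⟩
      · simp only [List.sum_cons, List.length_cons]
        push_cast at ih8 ⊢
        linear_combination ih8
      · simp only [FL]
        have hcnt : Multiset.countP (fun a => k - i ≤ a) ↑(build k (i+1) c xs).2 = 0 := by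
          rw [Multiset.countP_eq_zero]
          intro a ha
          have := (ih7 a (by simpa using ha)).2
          omega
        rw [hcnt, ih9]
        congr 1
        omega
    · -- emission of k - i
      obtain ⟨ih1, ih2, ih3, ih4, ih5, ih6, ih7, ih8, ih9⟩ := ih k (i+1) (c+1) hsort' hpos' hk'
      have hb1 : (build k i c (x :: xs)).1 = (x + c + 1) :: (build k (i+1) (c+1) xs).1 := by
        simp [build, hpar]
      have hb2 : (build k i c (x :: xs)).2 = (k - i) :: (build k (i+1) (c+1) xs).2 := by
        simp [build, hpar]
      rw [hb1, hb2]
      have hik : i < k := by omega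
      refine ⟨by simpa using ih1, ?_, ?_, ?_, ?_, ?_, ?_, ?_, ?_⟩
      · intro j h
        cases j with
        | zero =>
          show (x + c + 1) % 2 = (i + 0) % 2
          omega
        | succ j =>
          have := ih2 j (by simpa using h)
          simp only [List.get_cons_succ]
          rw [this]; congr 1; omega
      · rw [List.isChain_cons]
        refine ⟨?_, ih3⟩
        intro y hy
        have hy' : (build k (i+1) (c+1) xs).1[0]? = some y := by
          rw [← List.head?_eq_getElem?]; exact hy
        obtain ⟨hlen, hy0⟩ := List.getElem?_eq_some_iff.mp hy'
        have hxlen : 0 < xs.length := by rw [ih1] at hlen; exact hlen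
        have h4 := ih4 hlen hxlen
        have h2 := ih2 0 hlen
        have hxle : x ≤ xs.get ⟨0, hxlen⟩ := hle _ (List.get_mem _ _)
        rw [← hy0]
        simp only [List.get_eq_getElem] at *
        omega
      · intro h h'
        exact Nat.le_succ _
      · intro a ha
        rcases List.mem_cons.mp ha with h | h
        · omega
        · exact ih5 a h
      · rw [List.pairwise_cons]
        refine ⟨?_, ih6⟩
        intro b hb'
        have := (ih7 b hb').2
        omega
      · intro a ha
        rcases List.mem_cons.mp ha with h | h
        · omega
        · obtain ⟨h1, h2⟩ := ih7 a h
          exact ⟨h1, by omega⟩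
      · simp only [List.sum_cons, List.length_cons]
        have hki : ((k - i : ℕ) : ℤ) = (xs.length : ℤ) + 1 := by
          have h1 : k - i = xs.length + 1 := by omega
          rw [h1]; push_cast; ring
        push_cast at ih8 ⊢
        rw [hki]
        linear_combination ih8
      · simp only [FL]
        have hco : ((((k - i) :: (build k (i+1) (c+1) xs).2 : List ℕ)) : Multiset ℕ)
            = (k - i) ::ₘ (↑(build k (i+1) (c+1) xs).2 : Multiset ℕ) := by
          simp
        rw [hco]
        have h0 : Multiset.countP (fun a => k - i ≤ a) ↑(build k (i+1) (c+1) xs).2 = 0 := by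
          rw [Multiset.countP_eq_zero]
          intro a ha
          have := (ih7 a (by simpa using ha)).2
          omega
        have hcnt : Multiset.countP (fun a => k - i ≤ a)
            ((k - i) ::ₘ (↑(build k (i+1) (c+1) xs).2 : Multiset ℕ)) = 1 := by
          rw [Multiset.countP_cons, h0]
          simp
        rw [hcnt, FL_cons k i _ c (i+1) _ (by omega), ih9]
        congr 1
        omega

lemma build_inv : ∀ (l v : List ℕ) (k i c : ℕ),
    l.IsChain (· < ·) →
    (∀ j (h : j < l.length), l.get ⟨j, h⟩ % 2 = (i + j) % 2) →
    v.Pairwise (· > ·) →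
    (∀ a ∈ v, 0 < a ∧ a + i ≤ k) →
    i + l.length = k →
    (∀ j (h : j < l.length),
        c + Multiset.countP (fun a => k - (i + j) ≤ a) ↑v < l.get ⟨j, h⟩) →
    build k i c (FL k ↑v c i l) = (l, v) := by
  intro l
  induction l with
  | nil =>
    intro v k i c _ _ _ hv hk _
    have hv0 : v = [] := by
      cases v with
      | nil => rfl
      | cons b t =>
        exfalso
        have := hv b (List.mem_cons_self)
        simp only [List.length_nil] at hk
        omega
    subst hv0
    simp [FL, build]
  | cons x l ih =>
    intro v k i c hch hpar hvs hv hk hcnt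
    simp only [List.length_cons] at hk
    have hik : i < k := by omega
    have hpar0 : x % 2 = i % 2 := by
      have := hpar 0 (by simp)
      simpa using this
    have hch' : l.IsChain (· < ·) := hch.tail
    have hpar' : ∀ j (h : j < l.length), l.get ⟨j, h⟩ % 2 = (i + 1 + j) % 2 := by
      intro j h
      have := hpar (j+1) (by simp; omega)
      simp only [List.get_cons_succ] at this
      rw [this]; congr 1; omega
    by_cases hmem : (k - i) ∈ v
    · -- emission case
      cases v with
      | nil => simp at hmem
      | cons b t =>
        have hbub : b ≤ k - i := by
          have := hv b (List.mem_cons_self)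
          omega
        have hbt : b = k - i := by
          rcases List.mem_cons.mp hmem with h | h
          · omega
          · exfalso
            have : b > k - i := (List.rel_of_pairwise_cons hvs) h
            omega
        have htlt : ∀ a ∈ t, a < k - i := by
          intro a ha
          have := (List.rel_of_pairwise_cons hvs) ha
          omega
        have hcnt0 : Multiset.countP (fun a => k - i ≤ a) (↑(b :: t) : Multiset ℕ) = 1 := by
          rw [← Multiset.cons_coe, Multiset.countP_cons]
          have h0 : Multiset.countP (fun a => k - i ≤ a) (↑t : Multiset ℕ) = 0 := by
            rw [Multiset.countP_eq_zero]
            intro a ha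
            have := htlt a (by simpa using ha)
            omega
          rw [h0, if_pos (by omega)]
        have hx0 : c + 1 < x := by
          have := hcnt 0 (by simp)
          simp only [Nat.add_zero] at this
          rw [hcnt0] at this
          simpa using this
        -- the recursive call
        have hrec : build k (i+1) (c+1) (FL k (↑t : Multiset ℕ) (c+1) (i+1) l) = (l, t) := by
          apply ih
          · exact hch'
          · exact hpar'
          · exact (List.pairwise_cons.mp hvs).2
          · intro a ha
            have h1 := hv a (List.mem_cons_of_mem _ ha)
            have h2 := htlt a ha
            omega
          · omega
          · intro j h
            have h1 := hcnt (j+1) (by simp; omega)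
            simp only [List.get_cons_succ] at h1
            rw [← Multiset.cons_coe, Multiset.countP_cons, if_pos (by omega : k - (i + (j+1)) ≤ b)] at h1
            have e : i + 1 + j = i + (j + 1) := by omega
            rw [e]
            omega
        -- compute the first FL step
        simp only [FL]
        rw [hcnt0]
        have hflcons : FL k (↑(b :: t) : Multiset ℕ) c (i+1) l
            = FL k (↑t : Multiset ℕ) (c+1) (i+1) l := by
          rw [← Multiset.cons_coe, hbt]
          exact FL_cons k i _ c (i+1) l (by omega)
        rw [hflcons]
        have hxc : x - (c + 1) + (c + 1) = x := by omega
        have hcond : ¬ ((x - (c + 1) + c) % 2 = i % 2) := by omega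
        simp only [build, if_neg hcond]
        rw [hrec]
        have hxx : x - (c + 1) + c + 1 = x := by omega
        rw [hxx, hbt]
    · -- no emission
      have hsmall : ∀ a ∈ v, a < k - i := by
        intro a ha
        have h1 := hv a ha
        rcases Nat.lt_or_ge a (k - i) with h | h
        · exact h
        · exfalso
          have : a = k - i := by omega
          exact hmem (this ▸ ha)
      have hcnt0 : Multiset.countP (fun a => k - i ≤ a) (↑v : Multiset ℕ) = 0 := by
        rw [Multiset.countP_eq_zero]
        intro a ha
        have := hsmall a (by simpa using ha)
        omega
      have hx0 : c < x := by
        have := hcnt 0 (by simp)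
        simp only [Nat.add_zero] at this
        rw [hcnt0] at this
        simpa using this
      have hrec : build k (i+1) c (FL k (↑v : Multiset ℕ) c (i+1) l) = (l, v) := by
        apply ih
        · exact hch'
        · exact hpar'
        · exact hvs
        · intro a ha
          have h1 := hv a ha
          have h2 := hsmall a ha
          omega
        · omega
        · intro j h
          have h1 := hcnt (j+1) (by simp; omega)
          simp only [List.get_cons_succ] at h1
          have e : i + 1 + j = i + (j + 1) := by omega
          rw [e]
          omega
      simp only [FL]
      rw [hcnt0]
      simp only [Nat.add_zero]
      have hcond : (x - c + c) % 2 = i % 2 := by omega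
      simp only [build, if_pos hcond]
      rw [hrec]
      have hxx : x - c + c = x := by omega
      rw [hxx]

lemma countP_mono (p q : ℕ → Prop) [DecidablePred p] [DecidablePred q]
    (h : ∀ a, p a → q a) (v : Multiset ℕ) :
    Multiset.countP p v ≤ Multiset.countP q v := by
  induction v using Multiset.induction_on with
  | empty => simp
  | cons a s ih =>
    rw [Multiset.countP_cons, Multiset.countP_cons]
    by_cases hp : p a
    · rw [if_pos hp, if_pos (h a hp)]; omega
    · rw [if_neg hp]; split <;> omega

lemma countP_add_or (q r : ℕ → Prop) [DecidablePred q] [DecidablePred r] (v : Multiset ℕ) :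
    Multiset.countP (fun a => q a ∨ r a) v
      ≤ Multiset.countP q v + Multiset.countP r v := by
  induction v using Multiset.induction_on with
  | empty => simp
  | cons a s ih =>
    rw [Multiset.countP_cons, Multiset.countP_cons, Multiset.countP_cons]
    by_cases hq : q a <;> by_cases hr : r a <;>
      simp [hq, hr] <;> omega

lemma countP_nodup_le_card_Icc (v : Multiset ℕ) (hnd : v.Nodup) (lo hi : ℕ)
    (hmem : ∀ a, a ∈ v → (lo ≤ a → a ≤ hi)) :
    Multiset.countP (fun a => lo ≤ a) v ≤ hi + 1 - lo := by
  rw [Multiset.countP_eq_card_filter]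
  have hnd' : (v.filter (fun a => lo ≤ a)).Nodup := hnd.filter _
  have hsub : (v.filter (fun a => lo ≤ a)).toFinset ⊆ Finset.Icc lo hi := by
    intro a ha
    rw [Multiset.mem_toFinset, Multiset.mem_filter] at ha
    rw [Finset.mem_Icc]
    exact ⟨ha.2, hmem a ha.1 ha.2⟩
  calc Multiset.card (v.filter (fun a => lo ≤ a))
      = (v.filter (fun a => lo ≤ a)).toFinset.card :=
        (Multiset.toFinset_card_of_nodup hnd').symm
    _ ≤ (Finset.Icc lo hi).card := Finset.card_le_card hsub
    _ = hi + 1 - lo := Nat.card_Icc _ _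

lemma countP_eq_single_le_one (v : Multiset ℕ) (hnd : v.Nodup) (m : ℕ) :
    Multiset.countP (fun a => a = m) v ≤ 1 := by
  rw [Multiset.countP_eq_card_filter]
  have hnd' : (v.filter (fun a => a = m)).Nodup := hnd.filter _
  have hsub : (v.filter (fun a => a = m)).toFinset ⊆ {m} := by
    intro a ha
    rw [Multiset.mem_toFinset, Multiset.mem_filter] at ha
    simp [ha.2]
  calc Multiset.card (v.filter (fun a => a = m))
      = (v.filter (fun a => a = m)).toFinset.card :=
        (Multiset.toFinset_card_of_nodup hnd').symm
    _ ≤ ({m} : Finset ℕ).card := Finset.card_le_card hsub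
    _ = 1 := rfl

lemma countP_succ_le (v : Multiset ℕ) (hnd : v.Nodup) (k j : ℕ) :
    Multiset.countP (fun a => k - (j+1) ≤ a) v
      ≤ Multiset.countP (fun a => k - j ≤ a) v + 1 := by
  have h1 : Multiset.countP (fun a => k - (j+1) ≤ a) v
      ≤ Multiset.countP (fun a => k - j ≤ a ∨ a = k - (j+1)) v :=
    countP_mono _ _ (fun a ha => by omega) v
  have h2 := countP_add_or (fun a => k - j ≤ a) (fun a => a = k - (j+1)) v
  have h3 := countP_eq_single_le_one v hnd (k - (j+1))
  omega

lemma sorted_get_lower (l : List ℕ) (hch : l.IsChain (· < ·)) :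
    ∀ j (h : j < l.length) (h0 : 0 < l.length), l.get ⟨0, h0⟩ + j ≤ l.get ⟨j, h⟩ := by
  intro j
  induction j with
  | zero => intro h h0; simp
  | succ j ihj =>
    intro h h0
    have hj : j < l.length := by omega
    have h1 := ihj hj h0
    have hlt : l.get ⟨j, hj⟩ < l.get ⟨j+1, by omega⟩ :=
      List.isChain_iff_getElem.mp hch j (by omega)
    omega

lemma sort_coe_of_sorted {l : List ℕ} (h : l.Pairwise (· ≤ ·)) :
    Multiset.sort (↑l : Multiset ℕ) (· ≤ ·) = l :=
  List.Perm.eq_of_pairwise' (Multiset.pairwise_sort _ _) h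
    (Multiset.coe_eq_coe.mp (Multiset.sort_eq _ _))

lemma sorted_lt_of_sorted_le_nodup {l : List ℕ} (h1 : l.Pairwise (· ≤ ·)) (h2 : l.Nodup) :
    l.Pairwise (· < ·) :=
  (List.Pairwise.and h1 h2).imp (fun h => lt_of_le_of_ne h.1 h.2)

/-- The map from signed partitions to partitions. -/
def Fmap (σ : Multiset ℕ × Multiset ℕ) : Multiset ℕ :=
  ↑(FL (Multiset.card σ.1) σ.2 0 0 (Multiset.sort σ.1 (· ≤ ·)))

/-- The map from partitions to signed partitions. -/
def Gmap (μ : Multiset ℕ) : Multiset ℕ × Multiset ℕ :=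
  (↑(build (Multiset.sort μ (· ≤ ·)).length 0 0 (Multiset.sort μ (· ≤ ·))).1,
   ↑(build (Multiset.sort μ (· ≤ ·)).length 0 0 (Multiset.sort μ (· ≤ ·))).2)


lemma Aside (n : ℕ) (μ : Multiset ℕ) (hpos : ∀ x ∈ μ, 0 < x) (hsum : μ.sum = n) :
    (IsSignedPartitionOf n (Gmap μ).1 (Gmap μ).2 ∧
      (∃ l : List ℕ, (Gmap μ).1 = ↑l ∧ l.Pairwise (· < ·) ∧
        ∀ (i : ℕ) (h : i < l.length), l.get ⟨i, h⟩ % 2 = i % 2) ∧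
      (Gmap μ).2.Nodup ∧ (∀ x ∈ (Gmap μ).2, x ≤ Multiset.card (Gmap μ).1)) ∧
    Fmap (Gmap μ) = μ := by
  have hcoe : (↑(Multiset.sort μ (· ≤ ·)) : Multiset ℕ) = μ := Multiset.sort_eq _ _
  have hsort : (Multiset.sort μ (· ≤ ·)).Pairwise (· ≤ ·) := Multiset.pairwise_sort _ _
  have hposs : ∀ x ∈ Multiset.sort μ (· ≤ ·), 0 < x := by
    intro x hx; exact hpos x (by rwa [Multiset.mem_sort] at hx)
  obtain ⟨h1, h2, h3, h4, h5, h6, h7, h8, h9⟩ :=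
    build_spec (Multiset.sort μ (· ≤ ·)) (Multiset.sort μ (· ≤ ·)).length 0 0 hsort hposs
      (by simp)
  set s := Multiset.sort μ (· ≤ ·) with hs
  set l := (build s.length 0 0 s).1 with hl
  set v := (build s.length 0 0 s).2 with hv
  have hG1 : (Gmap μ).1 = ↑l := rfl
  have hG2 : (Gmap μ).2 = ↑v := rfl
  have hlsort : l.Pairwise (· < ·) := List.isChain_iff_pairwise.mp h3
  have hssum : s.sum = n := by
    have : (↑s : Multiset ℕ).sum = μ.sum := by rw [hcoe]
    rw [Multiset.sum_coe] at this
    omega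
  refine ⟨⟨⟨?_, ?_, ?_⟩, ⟨l, hG1, hlsort, ?_⟩, ?_, ?_⟩, ?_⟩
  · rw [hG1]; intro x hx; exact h5 x (Multiset.mem_coe.mp hx)
  · rw [hG2]; intro x hx; exact (h7 x (Multiset.mem_coe.mp hx)).1
  · rw [hG1, hG2, Multiset.sum_coe, Multiset.sum_coe]
    rw [hssum] at h8
    push_cast at h8 ⊢
    linarith
  · intro i hi
    have := h2 i hi
    simpa using this
  · rw [hG2]
    exact Multiset.coe_nodup.mpr (h6.imp ne_of_gt)
  · rw [hG1, hG2]
    intro x hx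
    have := (h7 x (Multiset.mem_coe.mp hx)).2
    have hcard : Multiset.card (↑l : Multiset ℕ) = s.length := by
      simp [h1]
    omega
  · show (↑(FL (Multiset.card (Gmap μ).1) (Gmap μ).2 0 0
        (Multiset.sort (Gmap μ).1 (· ≤ ·))) : Multiset ℕ) = μ
    rw [hG1, hG2]
    have hcard : Multiset.card (↑l : Multiset ℕ) = s.length := by simp [h1]
    have hsl : Multiset.sort (↑l : Multiset ℕ) (· ≤ ·) = l :=
      sort_coe_of_sorted (hlsort.imp le_of_lt)
    rw [hcard, hsl, h9, hcoe]

lemma Bside (n : ℕ) (σ : Multiset ℕ × Multiset ℕ)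
    (hsgn : IsSignedPartitionOf n σ.1 σ.2)
    (hex : ∃ l : List ℕ, σ.1 = ↑l ∧ l.Pairwise (· < ·) ∧
        ∀ (i : ℕ) (h : i < l.length), l.get ⟨i, h⟩ % 2 = i % 2)
    (hnd : σ.2.Nodup) (hbd : ∀ x ∈ σ.2, x ≤ Multiset.card σ.1) :
    (∀ x ∈ Fmap σ, 0 < x) ∧ (Fmap σ).sum = n ∧ Gmap (Fmap σ) = σ := by
  obtain ⟨hpos1, hpos2, hsum⟩ := hsgn
  obtain ⟨l, hl1, hl2, hl3⟩ := hex
  have hk : Multiset.card σ.1 = l.length := by rw [hl1]; simp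
  set k := l.length with hkdef
  -- the strictly decreasing list for ν
  set vs := (Multiset.sort σ.2 (· ≤ ·)).reverse with hvsdef
  have hvcoe : (↑vs : Multiset ℕ) = σ.2 := by
    rw [hvsdef, Multiset.coe_reverse, Multiset.sort_eq]
  have hvnodup : (Multiset.sort σ.2 (· ≤ ·)).Nodup := by
    have h0 : ((Multiset.sort σ.2 (· ≤ ·) : List ℕ) : Multiset ℕ).Nodup := by
      rw [Multiset.sort_eq]; exact hnd
    exact Multiset.coe_nodup.mp h0
  have hvsort : vs.Pairwise (· > ·) := by
    rw [hvsdef]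
    exact List.pairwise_reverse.mpr
      ((sorted_lt_of_sorted_le_nodup (Multiset.pairwise_sort _ _) hvnodup).imp (fun h => h))
  have hvmem : ∀ a ∈ vs, a ∈ σ.2 := by
    intro a ha
    rw [← hvcoe]
    exact Multiset.mem_coe.mpr ha
  -- hypotheses for build_inv
  have hch : l.IsChain (· < ·) := List.isChain_iff_pairwise.mpr hl2
  have hpar : ∀ j (h : j < l.length), l.get ⟨j, h⟩ % 2 = (0 + j) % 2 := by
    intro j h; simpa using hl3 j h
  have hv : ∀ a ∈ vs, 0 < a ∧ a + 0 ≤ k := by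
    intro a ha
    refine ⟨hpos2 a (hvmem a ha), ?_⟩
    have := hbd a (hvmem a ha)
    omega
  have hposl : ∀ x ∈ l, 0 < x := by
    intro x hx
    exact hpos1 x (by rw [hl1]; exact Multiset.mem_coe.mpr hx)
  have hgetlb : ∀ j (h : j < l.length), j + 2 ≤ l.get ⟨j, h⟩ := by
    intro j h
    have h0 : 0 < l.length := by omega
    have e := sorted_get_lower l hch j h h0
    have heven := hl3 0 h0
    have hp0 : 0 < l.get ⟨0, h0⟩ := hposl _ (List.get_mem _ _)
    omega
  have hvnd : (↑vs : Multiset ℕ).Nodup := by rw [hvcoe]; exact hnd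
  have hcntle : ∀ j, Multiset.countP (fun a => k - j ≤ a) ↑vs ≤ j + 1 := by
    intro j
    have := countP_nodup_le_card_Icc (↑vs) hvnd (k - j) k (by
      intro a ha _
      have := hbd a (hvmem a (Multiset.mem_coe.mp ha))
      omega)
    omega
  have hcnt : ∀ j (h : j < l.length),
      0 + Multiset.countP (fun a => k - (0 + j) ≤ a) ↑vs < l.get ⟨j, h⟩ := by
    intro j h
    have h1 := hcntle j
    have h2 := hgetlb j h
    simp only [Nat.zero_add]
    omega
  have hinv : build k 0 0 (FL k (↑vs) 0 0 l) = (l, vs) :=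
    build_inv l vs k 0 0 hch hpar hvsort hv (by omega) hcnt
  -- the partition list
  set m := FL k (↑vs : Multiset ℕ) 0 0 l with hm
  have hmlen : m.length = l.length := FL_length _ _ _ _ _
  have hmget : ∀ j (h : j < m.length),
      m.get ⟨j, h⟩ = l.get ⟨j, by rwa [hmlen] at h⟩
        - (0 + Multiset.countP (fun a => k - (0 + j) ≤ a) ↑vs) := by
    intro j h
    exact FL_get k (↑vs) 0 0 l j h
  have hmpos : ∀ x ∈ m, 0 < x := by
    intro x hx
    obtain ⟨⟨j, hj⟩, rfl⟩ := List.mem_iff_get.mp hx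
    rw [hmget j hj]
    have := hcnt j (by rwa [hmlen] at hj)
    omega
  have hchm : m.IsChain (· ≤ ·) := by
    rw [List.isChain_iff_getElem]
    intro j hj
    have hj1 : j + 1 < m.length := by omega
    have hj0 : j < m.length := by omega
    show m.get ⟨j, hj0⟩ ≤ m.get ⟨j+1, hj1⟩
    rw [hmget j hj0, hmget (j+1) hj1]
    have hlj : l.get ⟨j, by rwa [hmlen] at hj0⟩ < l.get ⟨j+1, by rwa [hmlen] at hj1⟩ :=
      List.isChain_iff_getElem.mp hch j (by rw [hmlen] at hj1; omega)
    have hstep : Multiset.countP (fun a => k - (j+1) ≤ a) ↑vs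
        ≤ Multiset.countP (fun a => k - j ≤ a) ↑vs + 1 := countP_succ_le _ hvnd k j
    have hc := hcnt j (by rwa [hmlen] at hj0)
    simp only [Nat.zero_add] at *
    omega
  have hmsorted : m.Pairwise (· ≤ ·) := List.isChain_iff_pairwise.mp hchm
  -- identification of Fmap σ
  have hsort1 : Multiset.sort σ.1 (· ≤ ·) = l := by
    rw [hl1]; exact sort_coe_of_sorted (hl2.imp le_of_lt)
  have hFdef : Fmap σ = ↑m := by
    show (↑(FL (Multiset.card σ.1) σ.2 0 0 (Multiset.sort σ.1 (· ≤ ·))) : Multiset ℕ) = ↑m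
    rw [hk, hsort1, ← hvcoe]
  -- build_spec on m
  obtain ⟨s1, s2, s3, s4, s5, s6, s7, s8, s9⟩ :=
    build_spec m k 0 0 hmsorted hmpos (by rw [hmlen]; omega)
  rw [hinv] at s8
  -- sum of m
  have hmsum : (m.sum : ℤ) = (n : ℤ) := by
    have e1 : (σ.1.sum : ℤ) = (l.sum : ℤ) := by rw [hl1, Multiset.sum_coe]
    have e2 : (σ.2.sum : ℤ) = (vs.sum : ℤ) := by rw [← hvcoe, Multiset.sum_coe]
    simp only [mul_zero, add_zero] at s8
    rw [e1, e2] at hsum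
    omega
  refine ⟨?_, ?_, ?_⟩
  · rw [hFdef]
    intro x hx
    exact hmpos x (Multiset.mem_coe.mp hx)
  · rw [hFdef, Multiset.sum_coe]
    omega
  · rw [hFdef]
    show (↑(build (Multiset.sort (↑m : Multiset ℕ) (· ≤ ·)).length 0 0
          (Multiset.sort (↑m : Multiset ℕ) (· ≤ ·))).1,
        (↑(build (Multiset.sort (↑m : Multiset ℕ) (· ≤ ·)).length 0 0
          (Multiset.sort (↑m : Multiset ℕ) (· ≤ ·))).2 : Multiset ℕ)) = σ
    have hsm : Multiset.sort (↑m : Multiset ℕ) (· ≤ ·) = m := sort_coe_of_sorted hmsorted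
    rw [hsm]
    have hlenm : m.length = k := by omega
    rw [hlenm, hinv]
    have : σ = (σ.1, σ.2) := rfl
    rw [this, hl1, hvcoe]

end SgnP

/-- Theorem 2 (p(n) = p₋₁(n)). -/
theorem partitions_eq_signed (n : ℕ) :
    {π : Multiset ℕ | IsPartitionOf n π}.ncard =
    {σ : Multiset ℕ × Multiset ℕ | IsSignedPartitionOf n σ.1 σ.2 ∧
      (∃ l : List ℕ, σ.1 = ↑l ∧ l.Pairwise (· < ·) ∧
        ∀ (i : ℕ) (h : i < l.length), l.get ⟨i, h⟩ % 2 = i % 2) ∧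
      σ.2.Nodup ∧ (∀ x ∈ σ.2, x ≤ Multiset.card σ.1)}.ncard := by
  have hbij : Set.BijOn SgnP.Gmap {π : Multiset ℕ | IsPartitionOf n π}
      {σ : Multiset ℕ × Multiset ℕ | IsSignedPartitionOf n σ.1 σ.2 ∧
        (∃ l : List ℕ, σ.1 = ↑l ∧ l.Pairwise (· < ·) ∧
          ∀ (i : ℕ) (h : i < l.length), l.get ⟨i, h⟩ % 2 = i % 2) ∧
        σ.2.Nodup ∧ (∀ x ∈ σ.2, x ≤ Multiset.card σ.1)} := by
    apply Set.InvOn.bijOn (f' := SgnP.Fmap)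
    · constructor
      · intro μ hμ
        exact (SgnP.Aside n μ hμ.1 hμ.2).2
      · intro σ hσ
        exact (SgnP.Bside n σ hσ.1 hσ.2.1 hσ.2.2.1 hσ.2.2.2).2.2
    · intro μ hμ
      exact (SgnP.Aside n μ hμ.1 hμ.2).1
    · intro σ hσ
      obtain ⟨h1, h2, _⟩ := SgnP.Bside n σ hσ.1 hσ.2.1 hσ.2.2.1 hσ.2.2.2
      exact ⟨h1, h2⟩
  rw [← hbij.image_eq, Set.ncard_image_of_injOn hbij.injOn]
end

section
/- For every nonnegative integer n, the number of partitions of n into distinct parts equals the number of signed partitions of n in which the positive parts are even and distinct, and the negative part sizes are distinct and each at most the number of positive parts. -/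
namespace SignedProof

def toS : ℕ → ℕ → List ℕ → List ℕ × List ℕ
  | _, _, [] => ([], [])
  | p, r, x :: xs =>
    let e := (x - p + 1) / 2
    let t := toS x (r + 2 * e) xs
    ((r + 2 * e) :: t.1, if (x - p) % 2 = 1 then (xs.length + 1) :: t.2 else t.2)

def fromS : ℕ → ℕ → List ℕ → Multiset ℕ → List ℕ
  | _, _, [], _ => []
  | p, r, y :: ys, ν =>
    let d := (y - r) - (if (ys.length + 1) ∈ ν then 1 else 0)
    (p + d) :: fromS (p + d) y ys ν

lemma toS_len (p r : ℕ) (l : List ℕ) : (toS p r l).1.length = l.length := by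
  induction l generalizing p r with
  | nil => rfl
  | cons x xs ih => simp [toS, ih]

lemma fromS_len (p r : ℕ) (A : List ℕ) (ν : Multiset ℕ) :
    (fromS p r A ν).length = A.length := by
  induction A generalizing p r with
  | nil => rfl
  | cons y ys ih => simp [fromS, ih]

lemma toS_chain (p r : ℕ) (l : List ℕ) (h : List.Chain (· < ·) p l) :
    List.Chain (· < ·) r (toS p r l).1 := by
  induction l generalizing p r with
  | nil => simp [toS, List.Chain]
  | cons x xs ih =>
    rcases List.chain_cons.mp h with ⟨hpx, hxs⟩
    simp only [toS]
    exact List.chain_cons.mpr ⟨by omega, ih x _ hxs⟩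

lemma toS_even (p r : ℕ) (l : List ℕ) (hr : r % 2 = 0) :
    ∀ y ∈ (toS p r l).1, y % 2 = 0 := by
  induction l generalizing p r with
  | nil => simp [toS]
  | cons x xs ih =>
    simp only [toS, List.mem_cons]
    rintro y (rfl | hy)
    · omega
    · exact ih x _ (by omega) y hy

lemma toS_snd_bounds (p r : ℕ) (l : List ℕ) :
    ∀ b ∈ (toS p r l).2, 1 ≤ b ∧ b ≤ l.length := by
  induction l generalizing p r with
  | nil => simp [toS]
  | cons x xs ih =>
    simp only [toS, List.length_cons]
    intro b hb
    by_cases hpar : (x - p) % 2 = 1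
    · rw [if_pos hpar] at hb
      rcases List.mem_cons.mp hb with rfl | hb
      · omega
      · have := ih x _ b hb; omega
    · rw [if_neg hpar] at hb
      have := ih x _ b hb; omega

lemma toS_snd_pairwise (p r : ℕ) (l : List ℕ) :
    (toS p r l).2.Pairwise (· > ·) := by
  induction l generalizing p r with
  | nil => simp [toS]
  | cons x xs ih =>
    simp only [toS]
    by_cases hpar : (x - p) % 2 = 1
    · rw [if_pos hpar]
      refine List.pairwise_cons.mpr ⟨fun b hb => ?_, ih x _⟩
      have := toS_snd_bounds x (r + 2 * ((x - p + 1) / 2)) xs b hb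
      omega
    · rw [if_neg hpar]; exact ih x _

lemma toS_sum (p r : ℕ) (l : List ℕ) (h : List.Chain (· < ·) p l) :
    ((toS p r l).1.sum : ℤ) =
      (l.sum : ℤ) + l.length * ((r : ℤ) - p) + ((toS p r l).2.sum : ℤ) := by
  induction l generalizing p r with
  | nil => simp [toS]
  | cons x xs ih =>
    rcases List.chain_cons.mp h with ⟨hpx, hxs⟩
    simp only [toS, List.sum_cons, List.length_cons]
    set e := (x - p + 1) / 2 with he
    have ih' := ih x (r + 2 * e) hxs
    have h2e : (2 * e : ℤ) = (x : ℤ) - p + ((x - p) % 2 : ℕ) := by omega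
    by_cases hpar : (x - p) % 2 = 1
    · rw [if_pos hpar, List.sum_cons]
      rw [hpar] at h2e
      push_cast
      push_cast at ih' h2e
      linear_combination ih' + ((xs.length : ℤ) + 1) * h2e
    · rw [if_neg hpar]
      have hpar0 : (x - p) % 2 = 0 := by omega
      rw [hpar0] at h2e
      push_cast
      push_cast at ih' h2e
      linear_combination ih' + ((xs.length : ℤ) + 1) * h2e

lemma fromS_toS (p r : ℕ) (l : List ℕ) (ν : Multiset ℕ) (h : List.Chain (· < ·) p l)
    (hν : ∀ i, 1 ≤ i → i ≤ l.length → (i ∈ ν ↔ i ∈ (toS p r l).2)) :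
    fromS p r (toS p r l).1 ν = l := by
  induction l generalizing p r with
  | nil => simp [toS, fromS]
  | cons x xs ih =>
    rcases List.chain_cons.mp h with ⟨hpx, hxs⟩
    simp only [toS, fromS, toS_len]
    have hmem : (xs.length + 1 ∈ ν) ↔ (x - p) % 2 = 1 := by
      rw [hν (xs.length + 1) (by omega) (by simp)]
      simp only [toS]
      by_cases hpar : (x - p) % 2 = 1
      · simp [hpar]
      · rw [if_neg hpar]
        constructor
        · intro hmem
          have := toS_snd_bounds x (r + 2 * ((x - p + 1) / 2)) xs _ hmem
          omega
        · intro hc; exact absurd hc hpar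
    have hd : p + (r + 2 * ((x - p + 1) / 2) - r -
        (if xs.length + 1 ∈ ν then 1 else 0)) = x := by
      by_cases hpar : (x - p) % 2 = 1
      · rw [if_pos (hmem.mpr hpar)]; omega
      · rw [if_neg (fun hc => hpar (hmem.mp hc))]; omega
    rw [hd]
    congr 1
    refine ih x _ hxs fun i h1 h2 => ?_
    rw [hν i h1 (by simp; omega)]
    simp only [toS]
    by_cases hpar : (x - p) % 2 = 1
    · rw [if_pos hpar, List.mem_cons]
      constructor
      · rintro (rfl | hh)
        · omega
        · exact hh
      · intro hh; exact Or.inr hh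
    · rw [if_neg hpar]

lemma toS_fromS (A : List ℕ) (p r : ℕ) (ν : Multiset ℕ)
    (hA : List.Chain (· < ·) r A) (heven : ∀ y ∈ A, y % 2 = 0) (hr : r % 2 = 0) :
    List.Chain (· < ·) p (fromS p r A ν) ∧
    (toS p r (fromS p r A ν)).1 = A ∧
    ∀ c, (c ∈ (toS p r (fromS p r A ν)).2 ↔ c ∈ ν ∧ 1 ≤ c ∧ c ≤ A.length) := by
  induction A generalizing p r with
  | nil =>
    refine ⟨List.Chain.nil, rfl, fun c => ?_⟩
    simp only [toS, fromS, List.not_mem_nil, List.length_nil, false_iff]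
    rintro ⟨h1, h2, h3⟩
    omega
  | cons y ys ih =>
    rcases List.chain_cons.mp hA with ⟨hry, hys⟩
    have hyev : y % 2 = 0 := heven y List.mem_cons_self
    have hyr : y - r ≥ 2 := by omega
    have hyrev : (y - r) % 2 = 0 := by omega
    simp only [fromS]
    set m : ℕ := if (ys.length + 1) ∈ ν then 1 else 0 with hm
    have hm01 : m = 0 ∨ m = 1 := by
      rcases (em ((ys.length + 1) ∈ ν)) with h | h <;> simp [hm, h]
    set d : ℕ := (y - r) - m with hd
    have hd1 : 1 ≤ d := by omega
    obtain ⟨ihc, ih1, ih2⟩ := ih (p + d) y hys (fun z hz => heven z (List.mem_cons_of_mem _ hz)) hyev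
    refine ⟨List.chain_cons.mpr ⟨by omega, ihc⟩, ?_, ?_⟩
    · simp only [toS]
      have hhead : r + 2 * ((p + d - p + 1) / 2) = y := by omega
      rw [hhead, ih1]
    · intro c
      simp only [toS]
      have hhead : r + 2 * ((p + d - p + 1) / 2) = y := by omega
      rw [hhead]
      have hlen : (fromS (p + d) y ys ν).length = ys.length := fromS_len _ _ _ _
      have hpar : (p + d - p) % 2 = 1 ↔ (ys.length + 1) ∈ ν := by
        constructor
        · intro hc
          by_contra hn
          simp [hm, hn] at hd
          omega
        · intro hc
          simp [hm, hc] at hd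
          omega
      by_cases hcase : (ys.length + 1) ∈ ν
      · rw [if_pos (hpar.mpr hcase), hlen, List.mem_cons, List.length_cons]
        constructor
        · rintro (rfl | hc)
          · exact ⟨hcase, by omega, by omega⟩
          · have := (ih2 c).mp hc; exact ⟨this.1, this.2.1, by omega⟩
        · rintro ⟨h1, h2, h3⟩
          rcases Nat.lt_or_ge c (ys.length + 1) with hlt | hge
          · exact Or.inr ((ih2 c).mpr ⟨h1, h2, by omega⟩)
          · exact Or.inl (by omega)
      · rw [if_neg (fun hc => hcase (hpar.mp hc)), List.length_cons]
        rw [ih2 c]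
        constructor
        · rintro ⟨h1, h2, h3⟩; exact ⟨h1, h2, by omega⟩
        · rintro ⟨h1, h2, h3⟩
          refine ⟨h1, h2, ?_⟩
          rcases Nat.lt_or_ge c (ys.length + 1) with hlt | hge
          · omega
          · have : c = ys.length + 1 := by omega
            rw [this] at h1; exact absurd h1 hcase

/-! ### Glue between multisets and sorted lists -/

lemma chain_sort (m : Multiset ℕ) (hd : m.Nodup) (hp : ∀ x ∈ m, 0 < x) :
    List.Chain (· < ·) 0 (m.sort (· ≤ ·)) := by
  unfold List.Chain
  rw [List.isChain_iff_pairwise, List.pairwise_cons]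
  have hs : (m.sort (· ≤ ·)).Pairwise (· ≤ ·) := Multiset.pairwise_sort _ _
  have hnd : (m.sort (· ≤ ·)).Nodup := by
    rw [← Multiset.coe_nodup, Multiset.sort_eq]; exact hd
  refine ⟨fun x hx => hp x ((Multiset.mem_sort _).mp hx), ?_⟩
  exact (hs.and hnd).imp fun h => lt_of_le_of_ne h.1 h.2

lemma sort_coe (l : List ℕ) (h : l.Pairwise (· ≤ ·)) :
    (↑l : Multiset ℕ).sort (· ≤ ·) = l :=
  List.Perm.eq_of_pairwise' (Multiset.pairwise_sort _ _) h
    (Multiset.coe_eq_coe.mp (Multiset.sort_eq _ _))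

lemma chain_pairwise {l : List ℕ} {a : ℕ} (h : List.Chain (· < ·) a l) :
    (∀ x ∈ l, a < x) ∧ l.Pairwise (· < ·) := by
  unfold List.Chain at h
  rw [List.isChain_iff_pairwise, List.pairwise_cons] at h
  exact h

/-- Forward map. -/
def fM (m : Multiset ℕ) : Multiset ℕ × Multiset ℕ :=
  ((↑(toS 0 0 (m.sort (· ≤ ·))).1 : Multiset ℕ), (↑(toS 0 0 (m.sort (· ≤ ·))).2 : Multiset ℕ))

/-- Backward map. -/
def gM (σ : Multiset ℕ × Multiset ℕ) : Multiset ℕ :=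
  (↑(fromS 0 0 (σ.1.sort (· ≤ ·)) σ.2) : Multiset ℕ)

def equivAB (n : ℕ) :
    {π : Multiset ℕ | IsPartitionOf n π ∧ π.Nodup} ≃
    {σ : Multiset ℕ × Multiset ℕ | IsSignedPartitionOf n σ.1 σ.2 ∧
      (∀ x ∈ σ.1, Even x) ∧ σ.1.Nodup ∧
      σ.2.Nodup ∧ (∀ x ∈ σ.2, x ≤ Multiset.card σ.1)} where
  toFun := fun ⟨m, hm⟩ => ⟨fM m, by
    obtain ⟨⟨hpos, hsum⟩, hnd⟩ := hm
    set l := m.sort (· ≤ ·) with hl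
    have hch : List.Chain (· < ·) 0 l := chain_sort m hnd hpos
    have hchA := chain_pairwise (toS_chain 0 0 l hch)
    have hsum' := toS_sum 0 0 l hch
    have hlsum : l.sum = n := by
      have : (↑l : Multiset ℕ).sum = m.sum := by rw [hl, Multiset.sort_eq]
      simpa [this, hsum] using (Multiset.sum_coe l).symm
    refine ⟨⟨fun x hx => hchA.1 x (Multiset.mem_coe.mp hx),
      fun x hx => (toS_snd_bounds 0 0 l x (Multiset.mem_coe.mp hx)).1, ?_⟩, ?_, ?_, ?_, ?_⟩
    · simp only [fM, Multiset.sum_coe]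
      rw [hsum']
      push_cast [hlsum]
      ring
    · intro x hx
      exact Nat.even_iff.mpr (toS_even 0 0 l rfl x (Multiset.mem_coe.mp hx))
    · exact Multiset.coe_nodup.mpr (hchA.2.imp ne_of_lt)
    · exact Multiset.coe_nodup.mpr ((toS_snd_pairwise 0 0 l).imp ne_of_gt)
    · intro x hx
      have hx' : x ∈ (toS 0 0 l).2 := Multiset.mem_coe.mp hx
      have hb := (toS_snd_bounds 0 0 l x hx').2
      show x ≤ Multiset.card (↑(toS 0 0 l).1 : Multiset ℕ)
      rw [Multiset.coe_card, toS_len]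
      exact hb⟩
  invFun := fun ⟨σ, hσ⟩ => ⟨gM σ, by
    obtain ⟨⟨hpos, hνpos, hsum⟩, heven, hnd, hνnd, hνle⟩ := hσ
    set l := σ.1.sort (· ≤ ·) with hl
    have hch : List.Chain (· < ·) 0 l := chain_sort σ.1 hnd hpos
    have heven' : ∀ y ∈ l, y % 2 = 0 := fun y hy =>
      Nat.even_iff.mp (heven y ((Multiset.mem_sort _).mp hy))
    obtain ⟨hc, h1, h2⟩ := toS_fromS l 0 0 σ.2 hch heven' rfl
    set L := fromS 0 0 l σ.2 with hL
    have hcp := chain_pairwise hc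
    have hBeq : (↑(toS 0 0 L).2 : Multiset ℕ) = σ.2 := by
      refine (Multiset.Nodup.ext
        (Multiset.coe_nodup.mpr ((toS_snd_pairwise 0 0 L).imp ne_of_gt)) hνnd).mpr fun a => ?_
      rw [Multiset.mem_coe, h2 a]
      constructor
      · exact fun h => h.1
      · intro ha
        refine ⟨ha, hνpos a ha, ?_⟩
        have := hνle a ha
        rw [hl, Multiset.length_sort]
        omega
    have hsum' := toS_sum 0 0 L hc
    rw [h1] at hsum'
    simp only [Nat.cast_zero, sub_zero, mul_zero, add_zero] at hsum'
    have hl1 : (l.sum : ℤ) = (σ.1.sum : ℤ) := by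
      rw [hl]
      norm_cast
      rw [← Multiset.sum_coe, Multiset.sort_eq]
    have hB : ((toS 0 0 L).2.sum : ℤ) = (σ.2.sum : ℤ) := by
      rw [← hBeq, Multiset.sum_coe]
    rw [hl1, hB] at hsum'
    have hLsum : L.sum = n := by
      have hz : (L.sum : ℤ) = (n : ℤ) := by linarith [hsum, hsum']
      exact_mod_cast hz
    refine ⟨⟨fun x hx => hcp.1 x (Multiset.mem_coe.mp hx), ?_⟩, ?_⟩
    · show (↑L : Multiset ℕ).sum = n
      rw [Multiset.sum_coe]
      exact hLsum
    · exact Multiset.coe_nodup.mpr (hcp.2.imp ne_of_lt)⟩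
  left_inv := fun ⟨m, hm⟩ => by
    obtain ⟨⟨hpos, hsum⟩, hnd⟩ := hm
    apply Subtype.ext
    set l := m.sort (· ≤ ·) with hl
    have hch : List.Chain (· < ·) 0 l := chain_sort m hnd hpos
    have hchA := chain_pairwise (toS_chain 0 0 l hch)
    simp only [gM, fM]
    have hsort : ((↑(toS 0 0 l).1 : Multiset ℕ)).sort (· ≤ ·) = (toS 0 0 l).1 :=
      sort_coe _ (hchA.2.imp le_of_lt)
    rw [hsort]
    have := fromS_toS 0 0 l (↑(toS 0 0 l).2) hch (fun i _ _ => Multiset.mem_coe)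
    rw [this, hl, Multiset.sort_eq]
  right_inv := fun ⟨σ, hσ⟩ => by
    obtain ⟨⟨hpos, hνpos, hsum⟩, heven, hnd, hνnd, hνle⟩ := hσ
    apply Subtype.ext
    set l := σ.1.sort (· ≤ ·) with hl
    have hch : List.Chain (· < ·) 0 l := chain_sort σ.1 hnd hpos
    have heven' : ∀ y ∈ l, y % 2 = 0 := fun y hy =>
      Nat.even_iff.mp (heven y ((Multiset.mem_sort _).mp hy))
    obtain ⟨hc, h1, h2⟩ := toS_fromS l 0 0 σ.2 hch heven' rfl
    set L := fromS 0 0 l σ.2 with hL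
    have hcp := chain_pairwise hc
    simp only [fM, gM, ← hl, ← hL]
    have hsort : ((↑L : Multiset ℕ)).sort (· ≤ ·) = L :=
      sort_coe _ (hcp.2.imp le_of_lt)
    rw [hsort]
    have hBeq : (↑(toS 0 0 L).2 : Multiset ℕ) = σ.2 := by
      refine (Multiset.Nodup.ext
        (Multiset.coe_nodup.mpr ((toS_snd_pairwise 0 0 L).imp ne_of_gt)) hνnd).mpr fun a => ?_
      rw [Multiset.mem_coe, h2 a]
      constructor
      · exact fun h => h.1
      · intro ha
        refine ⟨ha, hνpos a ha, ?_⟩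
        have := hνle a ha
        rw [hl, Multiset.length_sort]
        omega
    have hAeq : (↑(toS 0 0 L).1 : Multiset ℕ) = σ.1 := by
      rw [h1, hl, Multiset.sort_eq]
    exact Prod.ext hAeq hBeq

end SignedProof

/-- Theorem 3 (D(n) = D₋₁(n)). -/
theorem distinct_partitions_eq_signed (n : ℕ) :
    {π : Multiset ℕ | IsPartitionOf n π ∧ π.Nodup}.ncard =
    {σ : Multiset ℕ × Multiset ℕ | IsSignedPartitionOf n σ.1 σ.2 ∧
      (∀ x ∈ σ.1, Even x) ∧ σ.1.Nodup ∧
      σ.2.Nodup ∧ (∀ x ∈ σ.2, x ≤ Multiset.card σ.1)}.ncard := by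
  rw [← Nat.card_coe_set_eq, ← Nat.card_coe_set_eq]
  exact Nat.card_congr (SignedProof.equivAB n)
end

section
/- For every nonnegative integer n, the number of partitions of n in which any two parts differ by at least 2 equals the number of signed partitions of n in which the positive parts, listed in increasing order λ_1 < λ_2 < … < λ_k, satisfy λ_1 even, λ_{i+1} − λ_i ≥ 3, and λ_{i+1} − λ_i odd for all i (i.e., the positive parts differ by at least 3 and alternate in parity with the smallest positive part even), and the negative part sizes are distinct and each at most the number of positive parts. -/
namespace RRAux

def mk (step s : ℕ) : List ℕ → List ℕ
  | [] => []
  | a :: r => (s + a) :: mk step (s + a + step) r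

@[simp] lemma mk_nil (step s : ℕ) : mk step s [] = [] := rfl
@[simp] lemma mk_cons (step s a : ℕ) (r : List ℕ) :
    mk step s (a :: r) = (s + a) :: mk step (s + a + step) r := rfl

@[simp] lemma mk_length (step s : ℕ) (h : List ℕ) : (mk step s h).length = h.length := by
  induction h generalizing s with
  | nil => rfl
  | cons a r ih => simp [ih]

lemma mem_mk_le {step x : ℕ} : ∀ {h : List ℕ} {s : ℕ}, x ∈ mk step s h → s ≤ x := by
  intro h
  induction h with
  | nil => intro s hx; simp at hx
  | cons a r ih =>
    intro s hx
    rcases List.mem_cons.mp hx with h1 | h2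
    · omega
    · have := ih h2; omega

lemma mk_pairwise (step : ℕ) : ∀ (h : List ℕ) (s : ℕ),
    (mk step s h).Pairwise (fun a b => a + step ≤ b) := by
  intro h
  induction h with
  | nil => intro s; simp
  | cons a r ih =>
    intro s
    refine List.Pairwise.cons ?_ (ih _)
    intro x hx
    have := mem_mk_le (step := step) hx
    omega

lemma mk_sorted {step : ℕ} (hs : 1 ≤ step) (s : ℕ) (h : List ℕ) :
    (mk step s h).Pairwise (· < ·) :=
  (mk_pairwise step h s).imp (fun hab => by omega)

lemma mk_inj {step : ℕ} : ∀ {h h' : List ℕ} {s : ℕ}, mk step s h = mk step s h' → h = h' := by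
  intro h
  induction h with
  | nil => intro h' s e; cases h' <;> simp [mk] at e ⊢
  | cons a r ih =>
    intro h' s e
    cases h' with
    | nil => simp [mk] at e
    | cons a' r' =>
      simp only [mk_cons, List.cons.injEq] at e
      obtain ⟨e1, e2⟩ := e
      have ha : a = a' := by omega
      subst ha
      exact by rw [ih e2]

lemma mk_getElem_zero {step s : ℕ} : ∀ {h : List ℕ} (hh : 0 < h.length),
    (mk step s h)[0]'(by simpa using hh) = s + h[0]'hh := by
  intro h hh
  cases h with
  | nil => simp at hh
  | cons a r => simp

lemma mk_getElem_succ {step : ℕ} : ∀ {h : List ℕ} {s i : ℕ} (hi : i + 1 < h.length),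
    (mk step s h)[i+1]'(by simpa using hi) =
      (mk step s h)[i]'(by simp; omega) + step + h[i+1]'hi := by
  intro h
  induction h with
  | nil => intro s i hi; simp at hi
  | cons a r ih =>
    intro s i hi
    cases i with
    | zero =>
      have hr : 0 < r.length := by simpa using hi
      simp only [mk_cons, List.getElem_cons_succ, List.getElem_cons_zero]
      rw [mk_getElem_zero (step := step) (s := s + a + step) hr]
    | succ j =>
      have hj : j + 1 < r.length := by simpa using hi
      simp only [mk_cons, List.getElem_cons_succ]
      exact ih hj

lemma mk_surj (step : ℕ) : ∀ (l : List ℕ) (s : ℕ), (∀ x ∈ l, s ≤ x) →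
    l.Pairwise (fun a b => a + step ≤ b) → ∃ h, mk step s h = l := by
  intro l
  induction l with
  | nil => intro s _ _; exact ⟨[], rfl⟩
  | cons a t ih =>
    intro s hle hp
    have hp' := List.pairwise_cons.mp hp
    obtain ⟨h', hh'⟩ := ih (a + step) (fun x hx => hp'.1 x hx) hp'.2
    refine ⟨(a - s) :: h', ?_⟩
    have hsa : s ≤ a := hle a (by simp)
    simp only [mk_cons]
    rw [show s + (a - s) = a by omega, hh']

def T : ℕ → ℕ
  | 0 => 0
  | k + 1 => T k + k

def Wt : List ℕ → ℕ
  | [] => 0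
  | a :: r => a * (r.length + 1) + Wt r

lemma sum_mk (step : ℕ) : ∀ (h : List ℕ) (s : ℕ),
    (mk step s h).sum = s * h.length + step * T h.length + Wt h := by
  intro h
  induction h with
  | nil => intro s; simp [T, Wt]
  | cons a r ih =>
    intro s
    simp only [mk_cons, List.sum_cons, ih, List.length_cons, Wt, T]
    ring

lemma Wt_split : ∀ (h : List ℕ),
    Wt h = Wt (h.map fun a => 2 * (a / 2)) + Wt (h.map fun a => a % 2) := by
  intro h
  induction h with
  | nil => simp [Wt]
  | cons a r ih =>
    simp only [List.map_cons, Wt, List.length_map]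
    have ha : a = 2 * (a / 2) + a % 2 := by omega
    calc a * (r.length + 1) + Wt r
        = (2 * (a / 2)) * (r.length + 1) + (a % 2) * (r.length + 1) + Wt r := by
          rw [← add_mul, ← ha]
      _ = 2 * (a / 2) * (r.length + 1) + Wt (r.map fun a => 2 * (a / 2)) +
          ((a % 2) * (r.length + 1) + Wt (r.map fun a => a % 2)) := by rw [ih]; ring


def nuL : List ℕ → List ℕ
  | [] => []
  | a :: r => if a % 2 = 0 then (r.length + 1) :: nuL r else nuL r

lemma mem_nuL_le {x : ℕ} : ∀ {h : List ℕ}, x ∈ nuL h → 1 ≤ x ∧ x ≤ h.length := by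
  intro h
  induction h with
  | nil => intro hx; simp [nuL] at hx
  | cons a r ih =>
    intro hx
    simp only [nuL] at hx
    split at hx
    · rcases List.mem_cons.mp hx with h1 | h2
      · simp [h1]
      · have := ih h2; simp; omega
    · have := ih hx; simp; omega

lemma nuL_pairwise : ∀ (h : List ℕ), (nuL h).Pairwise (· > ·) := by
  intro h
  induction h with
  | nil => simp [nuL]
  | cons a r ih =>
    simp only [nuL]
    split
    · refine List.Pairwise.cons ?_ ih
      intro x hx
      have := mem_nuL_le hx
      omega
    · exact ih

lemma nuL_nodup (h : List ℕ) : (nuL h).Nodup :=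
  (nuL_pairwise h).imp (fun hab => by omega)

lemma nuL_sum : ∀ (h : List ℕ),
    (nuL h).sum + Wt (h.map fun a => a % 2) = T h.length + h.length := by
  intro h
  induction h with
  | nil => simp [nuL, Wt, T]
  | cons a r ih =>
    simp only [nuL, List.map_cons, Wt, List.length_map, List.length_cons, T]
    rcases Nat.even_or_odd a with he | ho
    · have h2 : a % 2 = 0 := Nat.even_iff.mp he
      rw [if_pos h2, h2]
      simp only [List.sum_cons, zero_mul, zero_add]
      omega
    · have h2 : a % 2 = 1 := Nat.odd_iff.mp ho
      rw [if_neg (by omega), h2]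
      simp only [one_mul]
      omega

lemma mem_nuL_iff {x : ℕ} : ∀ {h : List ℕ},
    (x ∈ nuL h ↔ ∃ j : ℕ, ∃ hj : j < h.length, h[j] % 2 = 0 ∧ x = h.length - j) := by
  intro h
  induction h with
  | nil => simp [nuL]
  | cons a r ih =>
    simp only [nuL]
    constructor
    · intro hx
      split at hx
      · rcases List.mem_cons.mp hx with h1 | h2
        · exact ⟨0, by simp, by simpa, by simp [h1]⟩
        · obtain ⟨j, hj, hpar, hx⟩ := ih.mp h2
          exact ⟨j + 1, by simp; omega, by simpa, by simp; omega⟩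
      · obtain ⟨j, hj, hpar, hx⟩ := ih.mp hx
        exact ⟨j + 1, by simp; omega, by simpa, by simp; omega⟩
    · rintro ⟨j, hj, hpar, hx⟩
      cases j with
      | zero =>
        simp only [List.getElem_cons_zero] at hpar
        rw [if_pos hpar]
        simp at hx
        simp [hx]
      | succ i =>
        have hi : i < r.length := by simpa using hj
        simp only [List.getElem_cons_succ] at hpar
        have hmem : x ∈ nuL r := ih.mpr ⟨i, hi, hpar, by simp at hx ⊢; omega⟩
        split
        · exact List.mem_cons_of_mem _ hmem
        · exact hmem

lemma sum_identity (h : List ℕ) :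
    (mk 3 2 (h.map fun a => 2 * (a / 2))).sum = (mk 2 1 h).sum + (nuL h).sum := by
  rw [sum_mk, sum_mk, List.length_map]
  have A := Wt_split h
  have B := nuL_sum h
  omega

lemma recover : ∀ {h h' : List ℕ},
    h.map (fun a => 2 * (a / 2)) = h'.map (fun a => 2 * (a / 2)) →
    nuL h = nuL h' → h = h' := by
  intro h
  induction h with
  | nil => intro h' e _; cases h' <;> simp at e ⊢
  | cons a r ih =>
    intro h' e enu
    cases h' with
    | nil => simp at e
    | cons a' r' =>
      simp only [List.map_cons, List.cons.injEq] at e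
      obtain ⟨e1, e2⟩ := e
      have hlen : r.length = r'.length := by
        have := congrArg List.length e2; simpa using this
      simp only [nuL] at enu
      by_cases hp : a % 2 = 0 <;> by_cases hp' : a' % 2 = 0
      · rw [if_pos hp, if_pos hp'] at enu
        simp only [List.cons.injEq] at enu
        have : a = a' := by omega
        subst this
        rw [ih e2 enu.2]
      · rw [if_pos hp, if_neg hp'] at enu
        exfalso
        have : (r.length + 1) ∈ nuL r' := by rw [← enu]; simp
        have := mem_nuL_le this
        omega
      · rw [if_neg hp, if_pos hp'] at enu
        exfalso
        have : (r'.length + 1) ∈ nuL r := by rw [enu]; simp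
        have := mem_nuL_le this
        omega
      · rw [if_neg hp, if_neg hp'] at enu
        have : a = a' := by omega
        subst this
        rw [ih e2 enu]


lemma setA_eq (n : ℕ) :
    {π : Multiset ℕ | IsPartitionOf n π ∧
      Multiset.Pairwise (fun a b => 2 ≤ |(a : ℤ) - (b : ℤ)|) π} =
    (fun h => ((mk 2 1 h : List ℕ) : Multiset ℕ)) '' {h : List ℕ | (mk 2 1 h).sum = n} := by
  ext π
  simp only [Set.mem_setOf_eq, Set.mem_image, Multiset.pure_def, Multiset.bind_def,
    Multiset.bind_singleton]
  constructor
  · rintro ⟨⟨hpos, hsum⟩, l₀, hl₀, hp₀⟩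
    set l := Multiset.sort π (· ≤ ·) with hldef
    have hcl : (l : Multiset ℕ) = π := Multiset.sort_eq π _
    have hml : Multiset.map (fun a : ℕ => (a : ℤ)) π = ↑(l.map (fun a : ℕ => (a : ℤ))) := by
      rw [← hcl, Multiset.map_coe]
    have hperm : l₀.Perm (l.map (fun a : ℕ => (a : ℤ))) :=
      Multiset.coe_eq_coe.mp (by rw [← hml, ← hl₀])
    have hsymm : ∀ {x y : ℤ}, 2 ≤ |x - y| → 2 ≤ |y - x| := by
      intro x y hxy; rwa [abs_sub_comm]
    have hpl : (l.map (fun a : ℕ => (a : ℤ))).Pairwise (fun a b => 2 ≤ |a - b|) :=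
      (List.Perm.pairwise_iff hsymm hperm).mp hp₀
    have hpl' : l.Pairwise (fun a b : ℕ => 2 ≤ |(a : ℤ) - (b : ℤ)|) :=
      List.pairwise_map.mp hpl
    have hsl : l.Pairwise (· ≤ ·) := Multiset.pairwise_sort π _
    have hcomb : l.Pairwise (fun a b => a + 2 ≤ b) := by
      refine (hsl.and hpl').imp ?_
      rintro a b ⟨h1, h2⟩
      have h3 : (a : ℤ) + 2 ≤ b := by
        rcases abs_cases ((a : ℤ) - b) with ⟨he, _⟩ | ⟨he, _⟩ <;> rw [he] at h2 <;> omega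
      exact_mod_cast h3
    have hmem : ∀ x ∈ l, 1 ≤ x := by
      intro x hx
      exact hpos x (by rw [← hcl]; exact Multiset.mem_coe.mpr hx)
    obtain ⟨h, hh⟩ := mk_surj 2 l 1 hmem hcomb
    refine ⟨h, ?_, by rw [hh, hcl]⟩
    show (mk 2 1 h).sum = n
    rw [hh]
    have : (l : Multiset ℕ).sum = π.sum := by rw [hcl]
    rw [Multiset.sum_coe] at this
    omega
  · rintro ⟨h, hmem, rfl⟩
    refine ⟨⟨?_, ?_⟩, (mk 2 1 h).map (fun a : ℕ => (a : ℤ)), ?_, ?_⟩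
    · intro x hx
      have := mem_mk_le (Multiset.mem_coe.mp hx)
      omega
    · rw [Multiset.sum_coe]; exact hmem
    · rw [Multiset.map_coe]
    · refine List.pairwise_map.mpr ((mk_pairwise 2 h 1).imp ?_)
      intro a b hab
      have h3 : (a : ℤ) + 2 ≤ b := by exact_mod_cast hab
      rcases abs_cases ((a : ℤ) - b) with ⟨he, _⟩ | ⟨he, _⟩ <;> rw [he] <;> omega

lemma injOn1 (n : ℕ) :
    Set.InjOn (fun h => ((mk 2 1 h : List ℕ) : Multiset ℕ))
      {h : List ℕ | (mk 2 1 h).sum = n} := by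
  intro h _ h' _ e
  have hperm : (mk 2 1 h).Perm (mk 2 1 h') := Multiset.coe_eq_coe.mp e
  have := List.Perm.eq_of_pairwise' (mk_sorted (by norm_num) 1 h)
    (mk_sorted (by norm_num) 1 h') hperm
  exact mk_inj this


def Phi2 (h : List ℕ) : Multiset ℕ × Multiset ℕ :=
  (((mk 3 2 (h.map fun a => 2 * (a / 2)) : List ℕ) : Multiset ℕ), ((nuL h : List ℕ) : Multiset ℕ))

lemma setB_eq (n : ℕ) :
    {σ : Multiset ℕ × Multiset ℕ | IsSignedPartitionOf n σ.1 σ.2 ∧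
      (∃ l : List ℕ, σ.1 = ↑l ∧ l.Pairwise (· < ·) ∧
        (∀ (h : 0 < l.length), Even (l.get ⟨0, h⟩)) ∧
        (∀ (i : ℕ) (h : i + 1 < l.length),
          3 ≤ l.get ⟨i + 1, h⟩ - l.get ⟨i, Nat.lt_of_succ_lt h⟩ ∧
          Odd (l.get ⟨i + 1, h⟩ - l.get ⟨i, Nat.lt_of_succ_lt h⟩))) ∧
      σ.2.Nodup ∧ (∀ x ∈ σ.2, x ≤ Multiset.card σ.1)} =
    Phi2 '' {h : List ℕ | (mk 2 1 h).sum = n} := by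
  ext σ
  simp only [Set.mem_setOf_eq, Set.mem_image]
  constructor
  · rintro ⟨⟨hpos1, hpos2, hsum⟩, ⟨l, hl, hsort, hev, hgap⟩, hnd, hble⟩
    classical
    set k := l.length with hk
    set F : Fin k → ℕ := fun j =>
      2 * (if (j : ℕ) = 0 then (l.getD 0 0 - 2) / 2
           else (l.getD (j : ℕ) 0 - l.getD ((j : ℕ) - 1) 0 - 3) / 2) +
      (if (k - (j : ℕ)) ∈ σ.2 then 0 else 1) with hF
    set hlist : List ℕ := List.ofFn F with hlist_def
    have hlen : hlist.length = k := by simp [hlist_def]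
    have hget : ∀ (j : ℕ) (hj : j < k), hlist[j]'(by omega) = F ⟨j, hj⟩ := by
      intro j hj
      simp only [hlist_def]
      exact List.getElem_ofFn (by simpa using hj)
    have hFdiv : ∀ (j : ℕ) (hj : j < k), (F ⟨j, hj⟩) / 2 =
        if j = 0 then (l.getD 0 0 - 2) / 2
        else (l.getD j 0 - l.getD (j - 1) 0 - 3) / 2 := by
      intro j hj
      simp only [hF]
      split <;> split <;> omega
    have hFmod : ∀ (j : ℕ) (hj : j < k), (F ⟨j, hj⟩) % 2 =
        if (k - j) ∈ σ.2 then 0 else 1 := by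
      intro j hj
      simp only [hF]
      split <;> split <;> omega
    have hl0pos : ∀ (h0 : 0 < k), 0 < l[0]'h0 := by
      intro h0
      refine hpos1 _ ?_
      rw [hl]
      exact Multiset.mem_coe.mpr (List.getElem_mem h0)
    -- key : the reconstructed mk-list agrees with l
    have hmaplen : (hlist.map fun a => 2 * (a / 2)).length = k := by
      simp [hlen]
    have key : ∀ (i : ℕ) (hi : i < k),
        (mk 3 2 (hlist.map fun a => 2 * (a / 2)))[i]'(by
          rw [mk_length, hmaplen]; exact hi) = l[i]'hi := by
      intro i
      induction i with
      | zero =>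
        intro hi
        have h0 : 0 < (hlist.map fun a => 2 * (a / 2)).length := by omega
        rw [mk_getElem_zero h0, List.getElem_map]
        rw [hget 0 (by omega), hFdiv 0 (by omega), if_pos rfl]
        have hevn : Even (l[0]'hi) := by
          have := hev (by omega)
          rwa [List.get_eq_getElem] at this
        obtain ⟨r, hr⟩ := hevn
        have hpos0 := hl0pos hi
        have hgd : l.getD 0 0 = l[0]'hi := List.getD_eq_getElem l 0 hi
        rw [hgd]
        omega
      | succ i ih =>
        intro hi
        have hi' : i < k := by omega
        have hmi : i + 1 < (hlist.map fun a => 2 * (a / 2)).length := by omega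
        rw [mk_getElem_succ hmi, List.getElem_map, ih hi', hget (i+1) hi,
          hFdiv (i+1) hi, if_neg (Nat.succ_ne_zero i)]
        have hgd1 : l.getD (i+1) 0 = l[i+1]'hi := List.getD_eq_getElem l 0 hi
        have hgd0 : l.getD i 0 = l[i]'hi' := List.getD_eq_getElem l 0 hi'
        have hg := hgap i (by omega)
        simp only [List.get_eq_getElem, Fin.val_mk] at hg
        obtain ⟨hg3, m, hm⟩ := hg
        rw [Nat.add_sub_cancel, hgd1, hgd0]
        omega
    have hmk : mk 3 2 (hlist.map fun a => 2 * (a / 2)) = l := by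
      refine List.ext_get (by rw [mk_length, hmaplen]) ?_
      intro i h1 h2
      rw [List.get_eq_getElem, List.get_eq_getElem]
      exact key i h2
    have hnu : ((nuL hlist : List ℕ) : Multiset ℕ) = σ.2 := by
      rw [Multiset.Nodup.ext (Multiset.coe_nodup.mpr (nuL_nodup hlist)) hnd]
      intro a
      rw [Multiset.mem_coe, mem_nuL_iff]
      constructor
      · rintro ⟨j, hj, hpar, ha⟩
        rw [hlen] at hj ha
        rw [hget j hj] at hpar
        have hmod := hFmod j hj
        rw [hpar] at hmod
        have : (k - j) ∈ σ.2 := by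
          by_contra hc
          rw [if_neg hc] at hmod
          omega
        rwa [← ha] at this
      · intro ha
        have ha1 : 0 < a := hpos2 a ha
        have ha2 : a ≤ k := by
          have := hble a ha
          rwa [hl, Multiset.coe_card] at this
        refine ⟨k - a, by omega, ?_, by omega⟩
        rw [hget (k - a) (by omega)]
        have hmod := hFmod (k - a) (by omega)
        have hmem' : (k - (k - a)) ∈ σ.2 := by
          rw [show k - (k - a) = a by omega]; exact ha
        rw [if_pos hmem'] at hmod
        omega
    refine ⟨hlist, ?_, ?_⟩
    · show (mk 2 1 hlist).sum = n
      have hsid := sum_identity hlist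
      rw [hmk] at hsid
      have hs1 : σ.1.sum = l.sum := by rw [hl, Multiset.sum_coe]
      have hs2 : σ.2.sum = (nuL hlist).sum := by rw [← hnu, Multiset.sum_coe]
      rw [hs1, hs2] at hsum
      omega
    · show Phi2 hlist = σ
      refine Prod.ext ?_ hnu
      show ((mk 3 2 (hlist.map fun a => 2 * (a / 2)) : List ℕ) : Multiset ℕ) = σ.1
      rw [hmk, hl]
  · rintro ⟨h, hmem, rfl⟩
    have hmem' : (mk 2 1 h).sum = n := hmem
    refine ⟨⟨?_, ?_, ?_⟩, ?_, ?_, ?_⟩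
    · intro x hx
      have := mem_mk_le (Multiset.mem_coe.mp hx)
      omega
    · intro x hx
      have := mem_nuL_le (Multiset.mem_coe.mp hx)
      omega
    · show (((mk 3 2 (h.map fun a => 2 * (a / 2)) : List ℕ) : Multiset ℕ).sum : ℤ) -
        (((nuL h : List ℕ) : Multiset ℕ).sum : ℤ) = n
      rw [Multiset.sum_coe, Multiset.sum_coe]
      have := sum_identity h
      omega
    · refine ⟨mk 3 2 (h.map fun a => 2 * (a / 2)), rfl, mk_sorted (by norm_num) _ _, ?_, ?_⟩
      · intro hlen
        have h0 : 0 < (h.map fun a => 2 * (a / 2)).length := by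
          rw [← mk_length (step := 3) (s := 2)]; exact hlen
        rw [List.get_eq_getElem]
        rw [mk_getElem_zero h0, List.getElem_map]
        exact ⟨1 + h[0]'(by simpa using h0) / 2, by omega⟩
      · intro i hi
        have hmi : i + 1 < (h.map fun a => 2 * (a / 2)).length := by
          rw [← mk_length (step := 3) (s := 2)]; exact hi
        simp only [List.get_eq_getElem, Fin.val_mk]
        rw [mk_getElem_succ hmi, List.getElem_map]
        constructor
        · omega
        · exact ⟨h[i+1]'(by simpa using hmi) / 2 + 1, by omega⟩
    · exact Multiset.coe_nodup.mpr (nuL_nodup h)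
    · intro x hx
      have := mem_nuL_le (Multiset.mem_coe.mp hx)
      show x ≤ Multiset.card ((mk 3 2 (h.map fun a => 2 * (a / 2)) : List ℕ) : Multiset ℕ)
      rw [Multiset.coe_card, mk_length, List.length_map]
      omega

lemma injOn2 (n : ℕ) :
    Set.InjOn Phi2 {h : List ℕ | (mk 2 1 h).sum = n} := by
  intro h _ h' _ e
  have e1 : ((mk 3 2 (h.map fun a => 2 * (a / 2)) : List ℕ) : Multiset ℕ) =
      ((mk 3 2 (h'.map fun a => 2 * (a / 2)) : List ℕ) : Multiset ℕ) := congrArg Prod.fst e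
  have e2 : ((nuL h : List ℕ) : Multiset ℕ) = ((nuL h' : List ℕ) : Multiset ℕ) :=
    congrArg Prod.snd e
  have p1 := Multiset.coe_eq_coe.mp e1
  have p2 := Multiset.coe_eq_coe.mp e2
  have q1 := List.Perm.eq_of_pairwise' (mk_sorted (by norm_num) _ _)
    (mk_sorted (by norm_num) _ _) p1
  have q2 := List.Perm.eq_of_pairwise' (nuL_pairwise h) (nuL_pairwise h') p2
  exact recover (mk_inj q1) q2

end RRAux

/-- Theorem 5 (RR₁(n) = RR₋₁(n)): first Rogers–Ramanujan partitions and signed partitions. -/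
theorem rogers_ramanujan_first_signed (n : ℕ) :
    {π : Multiset ℕ | IsPartitionOf n π ∧
      Multiset.Pairwise (fun a b => 2 ≤ |(a : ℤ) - (b : ℤ)|) π}.ncard =
    {σ : Multiset ℕ × Multiset ℕ | IsSignedPartitionOf n σ.1 σ.2 ∧
      (∃ l : List ℕ, σ.1 = ↑l ∧ l.Pairwise (· < ·) ∧
        (∀ (h : 0 < l.length), Even (l.get ⟨0, h⟩)) ∧
        (∀ (i : ℕ) (h : i + 1 < l.length),
          3 ≤ l.get ⟨i + 1, h⟩ - l.get ⟨i, Nat.lt_of_succ_lt h⟩ ∧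
          Odd (l.get ⟨i + 1, h⟩ - l.get ⟨i, Nat.lt_of_succ_lt h⟩))) ∧
      σ.2.Nodup ∧ (∀ x ∈ σ.2, x ≤ Multiset.card σ.1)}.ncard := by
  rw [RRAux.setA_eq n, RRAux.setB_eq n, Set.ncard_image_of_injOn (RRAux.injOn1 n),
    Set.ncard_image_of_injOn (RRAux.injOn2 n)]
end

section
/- For every nonnegative integer n, the number of partitions of n in which any two parts differ by at least 2, and by at least 4 if both parts are even, equals the number of signed partitions of n in which every positive part is even and at least twice the number of positive parts, and the negative part sizes are odd, distinct, and each at most twice the number of positive parts. -/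
/-- Göllnitz–Gordon gap condition: two parts differ by at least 2,
and by at least 4 if both are even. -/
def GGCond (a b : ℕ) : Prop :=
  2 ≤ |(a : ℤ) - (b : ℤ)| ∧ (Even a → Even b → 4 ≤ |(a : ℤ) - (b : ℤ)|)

namespace GGAux
open Finset

/-- partial sums of an indicator -/
def pc (o : ℕ → ℕ) (i : ℕ) : ℕ := ∑ j ∈ Finset.range i, o j

lemma pc_succ (o : ℕ → ℕ) (i : ℕ) : pc o (i+1) = pc o i + o i := Finset.sum_range_succ _ _

lemma pc_congr {o o' : ℕ → ℕ} {i : ℕ} (h : ∀ j, j < i → o j = o' j) : pc o i = pc o' i :=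
  Finset.sum_congr rfl (fun j hj => h j (Finset.mem_range.1 hj))

lemma sum_pc (o : ℕ → ℕ) (L : ℕ) :
    ∑ i ∈ range L, (2 * pc o i + o i) = ∑ j ∈ range L, o j * (2*(L-j)-1) := by
  induction L with
  | zero => simp
  | succ L ih =>
    rw [Finset.sum_range_succ, ih]
    have h1 : ∑ j ∈ range (L+1), o j * (2*(L+1-j)-1)
        = ∑ j ∈ range L, (o j * (2*(L-j)-1) + 2 * o j) + o L * 1 := by
      rw [Finset.sum_range_succ]
      congr 1
      · apply Finset.sum_congr rfl
        intro j hj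
        have hj' : j < L := Finset.mem_range.1 hj
        have h2 : 2*(L+1-j)-1 = (2*(L-j)-1) + 2 := by omega
        rw [h2]; ring
      · norm_num
    rw [h1, Finset.sum_add_distrib]
    unfold pc
    rw [Finset.mul_sum]
    ring

lemma sum_odds (L : ℕ) : ∑ j ∈ range L, (2*(L-j)-1) = L*L := by
  induction L with
  | zero => simp
  | succ L ih =>
    rw [Finset.sum_range_succ]
    have h1 : ∑ j ∈ range L, (2*(L+1-j)-1) = ∑ j ∈ range L, ((2*(L-j)-1) + 2) := by
      apply Finset.sum_congr rfl
      intro j hj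
      have := Finset.mem_range.1 hj
      omega
    rw [h1, Finset.sum_add_distrib, ih]
    simp [Finset.sum_const, Finset.card_range, smul_eq_mul]
    have h2 : (L+1)*(L+1) = L*L + 2*L + 1 := by ring
    omega

lemma sum_sq (L : ℕ) : ∑ i ∈ range L, (2*i+1) = L*L := by
  induction L with
  | zero => simp
  | succ L ih => rw [Finset.sum_range_succ, ih]; ring

lemma sum_split (o : ℕ → ℕ) (ho : ∀ j, o j ≤ 1) (L : ℕ) :
    (∑ j ∈ range L, o j * (2*(L-j)-1)) + (∑ j ∈ range L, (1 - o j) * (2*(L-j)-1)) = L*L := by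
  rw [← Finset.sum_add_distrib, ← sum_odds L]
  apply Finset.sum_congr rfl
  intro j _
  have := ho j
  interval_cases h : o j <;> simp

lemma list_sum_eq (l : List ℕ) : l.sum = ∑ i ∈ range l.length, l.getD i 0 := by
  induction l with
  | nil => simp
  | cons a t ih =>
    rw [List.sum_cons, ih, List.length_cons, Finset.sum_range_succ']
    simp
    omega

lemma sorted_sort_coe {l : List ℕ} (h : l.Pairwise (·≤·)) :
    Multiset.sort (↑l : Multiset ℕ) (·≤·) = l :=
  List.Perm.eq_of_pairwise' (Multiset.pairwise_sort _ _) h (Multiset.coe_eq_coe.1 (Multiset.sort_eq _ _))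

end GGAux

namespace GGAux
open Finset

/-- indicator that position j of l holds an even number -/
def ev (l : List ℕ) (j : ℕ) : ℕ := if l.getD j 0 % 2 = 0 then 1 else 0

def fpart (l : List ℕ) (i : ℕ) : ℕ :=
  l.getD i 0 + 2 * l.length - (2*i + 1 + 2 * pc (ev l) i + ev l i)

def fP (l : List ℕ) : List ℕ := List.ofFn (fun i : Fin l.length => fpart l i.1)

def fN (l : List ℕ) : Multiset ℕ :=
  ((Finset.range l.length).filter (fun j => ¬ (l.getD j 0 % 2 = 0))).val.map
    (fun j => 2 * (l.length - j) - 1)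

def ggF (m : Multiset ℕ) : Multiset ℕ × Multiset ℕ :=
  (↑(fP (m.sort (·≤·))), fN (m.sort (·≤·)))

def ox (ν : Multiset ℕ) (L : ℕ) (j : ℕ) : ℕ := if 2*(L-j)-1 ∈ ν then 0 else 1

def gpart (p : List ℕ) (ν : Multiset ℕ) (i : ℕ) : ℕ :=
  (p.getD i 0 - 2 * p.length) + 2 * pc (ox ν p.length) i + ox ν p.length i + 2*i + 1

def gl (p : List ℕ) (ν : Multiset ℕ) : List ℕ :=
  List.ofFn (fun i : Fin p.length => gpart p ν i.1)

def ggG (σ : Multiset ℕ × Multiset ℕ) : Multiset ℕ := ↑(gl (σ.1.sort (·≤·)) σ.2)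

/-- the conditions a sorted Göllnitz–Gordon list satisfies -/
def GoodGG (l : List ℕ) : Prop :=
  l.Pairwise (·≤·) ∧ l.Pairwise GGCond ∧ ∀ x ∈ l, 0 < x

lemma ggcond_symm : Symmetric GGCond := by
  intro a b ⟨h1, h2⟩
  refine ⟨by rwa [abs_sub_comm], fun hb ha => by rw [abs_sub_comm]; exact h2 ha hb⟩

lemma ev_spec (l : List ℕ) (j : ℕ) :
    (l.getD j 0 % 2 = 0 ∧ ev l j = 1) ∨ (l.getD j 0 % 2 = 1 ∧ ev l j = 0) := by
  unfold ev
  rcases Nat.even_or_odd (l.getD j 0) with h | h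
  · rw [Nat.even_iff] at h
    exact Or.inl ⟨h, if_pos h⟩
  · rw [Nat.odd_iff] at h
    exact Or.inr ⟨h, if_neg (by omega)⟩

lemma GoodGG.pos {l : List ℕ} (h : GoodGG l) {i : ℕ} (hi : i < l.length) :
    1 ≤ l.getD i 0 := by
  rw [List.getD_eq_getElem l 0 hi]
  exact h.2.2 _ (List.getElem_mem hi)

lemma GoodGG.step {l : List ℕ} (h : GoodGG l) {i j : ℕ} (hij : i < j) (hj : j < l.length) :
    l.getD i 0 + 2 ≤ l.getD j 0 ∧
      (l.getD i 0 % 2 = 0 → l.getD j 0 % 2 = 0 → l.getD i 0 + 4 ≤ l.getD j 0) := by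
  have hi : i < l.length := lt_trans hij hj
  have hle : l.get ⟨i, hi⟩ ≤ l.get ⟨j, hj⟩ :=
    List.pairwise_iff_get.1 h.1 ⟨i, hi⟩ ⟨j, hj⟩ hij
  have hgg : GGCond (l.get ⟨i, hi⟩) (l.get ⟨j, hj⟩) :=
    List.pairwise_iff_get.1 h.2.1 ⟨i, hi⟩ ⟨j, hj⟩ hij
  obtain ⟨h2, h4⟩ := hgg
  set a := l.get ⟨i, hi⟩ with ha
  set b := l.get ⟨j, hj⟩ with hb
  have habs : |(a : ℤ) - b| = (b : ℤ) - a := by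
    rw [abs_sub_comm, abs_of_nonneg (sub_nonneg.2 (Nat.cast_le.2 hle))]
  rw [habs] at h2 h4
  have hga : l.getD i 0 = a := by rw [List.getD_eq_getElem l 0 hi]; rfl
  have hgb : l.getD j 0 = b := by rw [List.getD_eq_getElem l 0 hj]; rfl
  rw [hga, hgb]
  refine ⟨by omega, fun hea heb => ?_⟩
  have := h4 (Nat.even_iff.2 hea) (Nat.even_iff.2 heb)
  omega

/-- the key inequality making all natural subtractions exact -/
lemma GoodGG.key {l : List ℕ} (h : GoodGG l) :
    ∀ i, i < l.length → 2*i + 1 + 2 * pc (ev l) i + ev l i ≤ l.getD i 0 := by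
  intro i
  induction i with
  | zero =>
    intro hi
    have h1 := h.pos hi
    have h3 : pc (ev l) 0 = 0 := by simp [pc]
    rcases ev_spec l 0 with ⟨e1, e2⟩ | ⟨e1, e2⟩ <;> rw [e2, h3] <;> omega
  | succ i ih =>
    intro hi
    have hi' : i < l.length := by omega
    have hk := ih hi'
    obtain ⟨hs1, hs2⟩ := h.step (show i < i + 1 by omega) hi
    rw [pc_succ]
    rcases ev_spec l i with ⟨e1, e2⟩ | ⟨e1, e2⟩ <;>
      rcases ev_spec l (i+1) with ⟨f1, f2⟩ | ⟨f1, f2⟩ <;>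
      rw [e2, f2] <;> rw [e2] at hk <;>
      first
        | (have h4 := hs2 e1 f1; omega)
        | omega

lemma fpart_ge {l : List ℕ} (h : GoodGG l) {i : ℕ} (hi : i < l.length) :
    2 * l.length ≤ fpart l i := by
  have := h.key i hi
  unfold fpart
  omega

lemma fpart_even {l : List ℕ} (h : GoodGG l) {i : ℕ} (hi : i < l.length) :
    fpart l i % 2 = 0 := by
  have hk := h.key i hi
  unfold fpart
  rcases ev_spec l i with ⟨e1, e2⟩ | ⟨e1, e2⟩ <;> rw [e2] at hk ⊢ <;> omega

lemma fpart_mono {l : List ℕ} (h : GoodGG l) {i j : ℕ} (hij : i ≤ j) (hj : j < l.length) :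
    fpart l i ≤ fpart l j := by
  induction j with
  | zero => have : i = 0 := Nat.le_zero.1 hij; rw [this]
  | succ j ihj =>
    rcases Nat.lt_or_ge i (j+1) with hlt | hge
    · have hj' : j < l.length := by omega
      refine le_trans (ihj (Nat.lt_succ_iff.1 hlt) hj') ?_
      have hk1 := h.key j hj'
      have hk2 := h.key (j+1) hj
      obtain ⟨hs1, hs2⟩ := h.step (show j < j + 1 by omega) hj
      unfold fpart
      rw [pc_succ] at hk2 ⊢
      rcases ev_spec l j with ⟨e1, e2⟩ | ⟨e1, e2⟩ <;>
        rcases ev_spec l (j+1) with ⟨f1, f2⟩ | ⟨f1, f2⟩ <;>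
        rw [e2, f2] at hk2 ⊢ <;> rw [e2] at hk1 <;>
        first
          | (have h4 := hs2 e1 f1; omega)
          | omega
    · have : i = j + 1 := le_antisymm hij hge
      rw [this]

lemma fP_length (l : List ℕ) : (fP l).length = l.length := by simp [fP]

lemma fP_getD {l : List ℕ} {i : ℕ} (hi : i < l.length) : (fP l).getD i 0 = fpart l i := by
  rw [List.getD_eq_getElem _ 0 (by rw [fP_length]; exact hi)]
  simp [fP]

lemma fP_sorted {l : List ℕ} (h : GoodGG l) : (fP l).Pairwise (·≤·) := by
  rw [fP, List.pairwise_ofFn]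
  intro a b hab
  exact fpart_mono h (Fin.le_def.1 hab.le) b.2

lemma mem_fN {l : List ℕ} {x : ℕ} :
    x ∈ fN l ↔ ∃ j, j < l.length ∧ ¬ (l.getD j 0 % 2 = 0) ∧ x = 2 * (l.length - j) - 1 := by
  unfold fN
  rw [Multiset.mem_map]
  constructor
  · rintro ⟨j, hj, rfl⟩
    rw [Finset.mem_val, Finset.mem_filter, Finset.mem_range] at hj
    exact ⟨j, hj.1, by simpa using hj.2, rfl⟩
  · rintro ⟨j, hj1, hj2, rfl⟩
    refine ⟨j, ?_, rfl⟩
    rw [Finset.mem_val, Finset.mem_filter, Finset.mem_range]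
    exact ⟨hj1, by simpa using hj2⟩

lemma fN_nodup (l : List ℕ) : (fN l).Nodup := by
  unfold fN
  apply Multiset.Nodup.map_on
  · intro a ha b hb hab
    rw [Finset.mem_val, Finset.mem_filter, Finset.mem_range] at ha hb
    omega
  · exact Finset.nodup _

end GGAux

namespace GGAux
open Finset

def Aset (n : ℕ) : Set (Multiset ℕ) := {π | IsPartitionOf n π ∧ Multiset.Pairwise GGCond π}

def Bset (n : ℕ) : Set (Multiset ℕ × Multiset ℕ) :=
  {σ | IsSignedPartitionOf (n : ℤ) σ.1 σ.2 ∧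
    (∀ x ∈ σ.1, Even x ∧ 2 * Multiset.card σ.1 ≤ x) ∧
    (∀ x ∈ σ.2, Odd x) ∧ σ.2.Nodup ∧
    (∀ x ∈ σ.2, x ≤ 2 * Multiset.card σ.1)}

lemma ev_le (l : List ℕ) (j : ℕ) : ev l j ≤ 1 := by
  unfold ev; split <;> omega

lemma good_of_mem {n : ℕ} {m : Multiset ℕ} (hm : m ∈ Aset n) :
    GoodGG (m.sort (·≤·)) ∧ (m.sort (·≤·)).sum = n := by
  obtain ⟨⟨hpos, hsum⟩, hpw⟩ := hm
  obtain ⟨l₀, hl₀, hp₀⟩ := hpw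
  have hperm : List.Perm (m.sort (·≤·)) l₀ := by
    rw [← Multiset.coe_eq_coe, Multiset.sort_eq, hl₀]
  refine ⟨⟨Multiset.pairwise_sort _ _, (hperm.pairwise_iff (fun hx => ggcond_symm hx)).2 hp₀, ?_⟩, ?_⟩
  · intro x hx
    exact hpos x (by rwa [← Multiset.mem_sort (α := ℕ) (·≤·)])
  · have h3 : (m.sort (·≤·)).sum = m.sum := by
      calc (m.sort (·≤·)).sum = ((↑(m.sort (·≤·)) : Multiset ℕ)).sum := rfl
        _ = m.sum := by rw [Multiset.sort_eq]
    exact h3.trans hsum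

lemma fN_sum (l : List ℕ) :
    (fN l).sum = ∑ j ∈ range l.length, (1 - ev l j) * (2 * (l.length - j) - 1) := by
  have h1 : (fN l).sum =
      ∑ j ∈ (range l.length).filter (fun j => ¬ (l.getD j 0 % 2 = 0)), (2 * (l.length - j) - 1) :=
    rfl
  rw [h1, Finset.sum_filter]
  apply Finset.sum_congr rfl
  intro j _
  rcases ev_spec l j with ⟨e1, e2⟩ | ⟨e1, e2⟩
  · rw [e2, if_neg (by omega)]
    simp
  · rw [e2, if_pos (by omega)]
    simp

lemma fP_sum {l : List ℕ} (h : GoodGG l) :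
    ((fP l).sum : ℤ) =
      (l.sum : ℤ) + 2 * l.length * l.length
        - ((l.length * l.length + ∑ j ∈ range l.length, ev l j * (2 * (l.length - j) - 1) : ℕ) : ℤ) := by
  set L := l.length with hL
  have h0 : (fP l).sum = ∑ i ∈ range L, fpart l i := by
    rw [fP, List.sum_ofFn, Fin.sum_univ_eq_sum_range]
  have hBn : ∑ i ∈ range L, (2*i + 1 + 2 * pc (ev l) i + ev l i)
      = L * L + ∑ j ∈ range L, ev l j * (2*(L-j)-1) := by
    have : ∀ i ∈ range L, 2*i + 1 + 2 * pc (ev l) i + ev l i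
        = (2*i+1) + (2 * pc (ev l) i + ev l i) := by intro i _; ring
    rw [Finset.sum_congr rfl this, Finset.sum_add_distrib, sum_sq, sum_pc]
  have h2 : ((fP l).sum : ℤ) = ∑ i ∈ range L, ((l.getD i 0 : ℤ) + 2*L
      - ((2*i + 1 + 2 * pc (ev l) i + ev l i : ℕ) : ℤ)) := by
    rw [h0, Nat.cast_sum]
    apply Finset.sum_congr rfl
    intro i hi
    have hk := h.key i (Finset.mem_range.1 hi)
    rw [fpart, Nat.cast_sub (by omega)]
    push_cast
    ring
  have hBz : ∑ i ∈ range L, ((2*i + 1 + 2 * pc (ev l) i + ev l i : ℕ) : ℤ)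
      = ((L * L + ∑ j ∈ range L, ev l j * (2*(L-j)-1) : ℕ) : ℤ) := by
    rw [← Nat.cast_sum, hBn]
  have hA : ∑ i ∈ range L, (l.getD i 0 : ℤ) = (l.sum : ℤ) := by
    rw [list_sum_eq, Nat.cast_sum]
  rw [h2, Finset.sum_sub_distrib, Finset.sum_add_distrib, Finset.sum_const, Finset.card_range,
    hBz, hA]
  push_cast
  ring

lemma fsum {l : List ℕ} (h : GoodGG l) :
    ((fP l).sum : ℤ) - ((fN l).sum : ℤ) = (l.sum : ℤ) := by
  set L := l.length with hL
  have hsplit := sum_split (ev l) (ev_le l) L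
  rw [fP_sum h, fN_sum l]
  push_cast [← hL]
  push_cast at hsplit
  linarith [hsplit]

lemma ggF_mem {n : ℕ} {m : Multiset ℕ} (hm : m ∈ Aset n) : ggF m ∈ Bset n := by
  obtain ⟨hgood, hsum⟩ := good_of_mem hm
  set l := m.sort (·≤·) with hl
  set L := l.length with hL
  have hcard : Multiset.card (↑(fP l) : Multiset ℕ) = L := by
    simp [fP_length, hL]
  have hmemP : ∀ x ∈ (↑(fP l) : Multiset ℕ), ∃ i, i < L ∧ x = fpart l i := by
    intro x hx
    rw [Multiset.mem_coe, fP, List.mem_ofFn] at hx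
    obtain ⟨i, hi⟩ := hx
    exact ⟨i.1, i.2, hi.symm⟩
  have hmemN : ∀ x ∈ fN l, ∃ j, j < L ∧ x = 2 * (L - j) - 1 := by
    intro x hx
    obtain ⟨j, hj1, _, hj3⟩ := mem_fN.1 hx
    exact ⟨j, hj1, hj3⟩
  refine ⟨⟨?_, ?_, ?_⟩, ?_, ?_, fN_nodup l, ?_⟩
  · intro x hx
    obtain ⟨i, hi, rfl⟩ := hmemP x hx
    have := fpart_ge hgood hi
    omega
  · intro x hx
    obtain ⟨j, hj, rfl⟩ := hmemN x hx
    omega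
  · show ((↑(fP l) : Multiset ℕ).sum : ℤ) - ((fN l).sum : ℤ) = (n : ℤ)
    have h1 : (↑(fP l) : Multiset ℕ).sum = (fP l).sum := by simp
    rw [h1, fsum hgood, hsum]
  · intro x hx
    obtain ⟨i, hi, rfl⟩ := hmemP x hx
    have h1 := fpart_ge hgood hi
    have h2 := fpart_even hgood hi
    have hgg1 : (ggF m).1 = (↑(fP l) : Multiset ℕ) := rfl
    rw [hgg1, hcard]
    exact ⟨Nat.even_iff.2 h2, h1⟩
  · intro x hx
    obtain ⟨j, hj, rfl⟩ := hmemN x hx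
    exact Nat.odd_iff.2 (by omega)
  · intro x hx
    obtain ⟨j, hj, rfl⟩ := hmemN x hx
    have hgg1 : (ggF m).1 = (↑(fP l) : Multiset ℕ) := rfl
    rw [hgg1, hcard]
    omega

end GGAux

namespace GGAux
open Finset

/-- conditions satisfied by the sorted positive-part list and negative parts of a signed
partition in `Bset` -/
def GoodSigned (p : List ℕ) (ν : Multiset ℕ) : Prop :=
  p.Pairwise (·≤·) ∧ (∀ i, i < p.length → p.getD i 0 % 2 = 0 ∧ 2 * p.length ≤ p.getD i 0) ∧
  (∀ x ∈ ν, x % 2 = 1) ∧ ν.Nodup ∧ (∀ x ∈ ν, x ≤ 2 * p.length)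

lemma ox_spec (ν : Multiset ℕ) (L j : ℕ) :
    (2*(L-j)-1 ∈ ν ∧ ox ν L j = 0) ∨ (¬ (2*(L-j)-1 ∈ ν) ∧ ox ν L j = 1) := by
  unfold ox
  by_cases h : 2*(L-j)-1 ∈ ν
  · exact Or.inl ⟨h, if_pos h⟩
  · exact Or.inr ⟨h, if_neg h⟩

lemma ox_le (ν : Multiset ℕ) (L j : ℕ) : ox ν L j ≤ 1 := by
  unfold ox; split <;> omega

lemma sorted_getD_mono {l : List ℕ} (h : l.Pairwise (·≤·)) {i j : ℕ} (hij : i ≤ j)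
    (hj : j < l.length) : l.getD i 0 ≤ l.getD j 0 := by
  rcases Nat.lt_or_ge i j with hlt | hge
  · have hi : i < l.length := lt_trans hlt hj
    have := List.pairwise_iff_get.1 h ⟨i, hi⟩ ⟨j, hj⟩ hlt
    rwa [List.getD_eq_getElem l 0 hi, List.getD_eq_getElem l 0 hj]
  · have : i = j := le_antisymm hij hge
    rw [this]

lemma gpart_succ {p : List ℕ} {ν : Multiset ℕ} (h : GoodSigned p ν) {i : ℕ}
    (hi : i + 1 < p.length) :
    gpart p ν i + 2 + ox ν p.length i + ox ν p.length (i+1) ≤ gpart p ν (i+1) := by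
  have hmono := sorted_getD_mono h.1 (show i ≤ i + 1 by omega) hi
  have h2L := (h.2.1 i (by omega)).2
  unfold gpart
  rw [pc_succ]
  omega

lemma gpart_gap {p : List ℕ} {ν : Multiset ℕ} (h : GoodSigned p ν) :
    ∀ i j : ℕ, i < j → j < p.length → gpart p ν i + 2*(j-i) ≤ gpart p ν j := by
  intro i j
  induction j with
  | zero => omega
  | succ j ihj =>
    intro hij hj
    rcases Nat.lt_or_ge i j with hlt | hge
    · have h1 := ihj hlt (by omega)
      have h2 := gpart_succ h hj
      omega
    · have : i = j := by omega
      subst this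
      have h2 := gpart_succ h hj
      omega

lemma gpart_parity {p : List ℕ} {ν : Multiset ℕ} (h : GoodSigned p ν) {i : ℕ}
    (hi : i < p.length) : gpart p ν i % 2 = 1 - ox ν p.length i := by
  obtain ⟨hev, h2L⟩ := h.2.1 i hi
  have hle := ox_le ν p.length i
  unfold gpart
  omega

lemma gl_length (p : List ℕ) (ν : Multiset ℕ) : (gl p ν).length = p.length := by simp [gl]

lemma gl_getD {p : List ℕ} {ν : Multiset ℕ} {i : ℕ} (hi : i < p.length) :
    (gl p ν).getD i 0 = gpart p ν i := by
  rw [List.getD_eq_getElem _ 0 (by rw [gl_length]; exact hi)]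
  simp [gl]

lemma gl_sorted {p : List ℕ} {ν : Multiset ℕ} (h : GoodSigned p ν) :
    (gl p ν).Pairwise (·≤·) := by
  rw [gl, List.pairwise_ofFn]
  intro a b hab
  rcases Nat.lt_or_ge a.1 b.1 with hlt | hge
  · have := gpart_gap h a.1 b.1 hlt b.2
    show gpart p ν a.1 ≤ gpart p ν b.1
    omega
  · have : a.1 = b.1 := le_antisymm (Fin.le_def.1 hab.le) hge
    simp only [this]
    exact le_refl _

lemma gl_pairwise {p : List ℕ} {ν : Multiset ℕ} (h : GoodSigned p ν) :
    (gl p ν).Pairwise GGCond := by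
  rw [gl, List.pairwise_ofFn]
  intro a b hab
  have hgap := gpart_gap h a.1 b.1 hab b.2
  have habs : |((gpart p ν a.1 : ℤ)) - (gpart p ν b.1 : ℤ)|
      = (gpart p ν b.1 : ℤ) - (gpart p ν a.1 : ℤ) := by
    rw [abs_sub_comm, abs_of_nonneg (sub_nonneg.2 (Nat.cast_le.2 (by omega)))]
  constructor
  · rw [habs]
    have : (a : ℕ) < b := hab
    omega
  · intro hea heb
    rw [habs]
    rw [Nat.even_iff] at hea heb
    have hpa := gpart_parity h (lt_trans hab b.2)
    have hpb := gpart_parity h b.2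
    have hoa := ox_le ν p.length a.1
    have hob := ox_le ν p.length b.1
    rcases Nat.lt_or_ge ((a : ℕ) + 1) b.1 with hlt | hge
    · omega
    · have hb : (b : ℕ) = a.1 + 1 := by omega
      have hsucc := gpart_succ h (hb ▸ b.2)
      rw [← hb] at hsucc
      omega

/-- the sum of the negative parts, recovered from the indicator -/
lemma nu_sum {p : List ℕ} {ν : Multiset ℕ} (h : GoodSigned p ν) :
    ∑ j ∈ range p.length, (1 - ox ν p.length j) * (2*(p.length - j)-1) = ν.sum := by
  set L := p.length with hL
  have h1 : ∑ j ∈ range L, (1 - ox ν L j) * (2*(L-j)-1)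
      = ∑ j ∈ (range L).filter (fun j => 2*(L-j)-1 ∈ ν), (2*(L-j)-1) := by
    rw [Finset.sum_filter]
    apply Finset.sum_congr rfl
    intro j _
    rcases ox_spec ν L j with ⟨e1, e2⟩ | ⟨e1, e2⟩
    · rw [e2, if_pos e1]; simp
    · rw [e2, if_neg e1]; simp
  rw [h1]
  have himg : ((range L).filter (fun j => 2*(L-j)-1 ∈ ν)).image (fun j => 2*(L-j)-1)
      = ν.toFinset := by
    ext x
    rw [Finset.mem_image, Multiset.mem_toFinset]
    constructor
    · rintro ⟨j, hj, rfl⟩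
      exact (Finset.mem_filter.1 hj).2
    · intro hx
      have hodd := h.2.2.1 x hx
      have hle := h.2.2.2.2 x hx
      refine ⟨L - (x+1)/2, ?_, ?_⟩
      · rw [Finset.mem_filter, Finset.mem_range]
        constructor
        · omega
        · have : 2*(L - (L - (x+1)/2)) - 1 = x := by omega
          rwa [this]
      · omega
  have hinj : ∀ x ∈ (range L).filter (fun j => 2*(L-j)-1 ∈ ν),
      ∀ y ∈ (range L).filter (fun j => 2*(L-j)-1 ∈ ν),
      (fun j => 2*(L-j)-1) x = (fun j => 2*(L-j)-1) y → x = y := by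
    intro x hx y hy hxy
    rw [Finset.mem_filter, Finset.mem_range] at hx hy
    simp only [] at hxy
    omega
  have h3 : ν.toFinset.sum id = ν.sum := by
    rw [Finset.sum_eq_multiset_sum, Multiset.toFinset_val, Multiset.dedup_eq_self.2 h.2.2.2.1,
      Multiset.map_id]
  rw [← h3, ← himg, Finset.sum_image hinj]
  rfl

lemma gsum {p : List ℕ} {ν : Multiset ℕ} (h : GoodSigned p ν) :
    ((gl p ν).sum : ℤ) = (p.sum : ℤ) - (ν.sum : ℤ) := by
  set L := p.length with hL
  have h0 : (gl p ν).sum = ∑ i ∈ range L, gpart p ν i := by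
    rw [gl, List.sum_ofFn, Fin.sum_univ_eq_sum_range]
  have hsplit := sum_split (ox ν L) (ox_le ν L) L
  have hnu := nu_sum h
  set W := ∑ j ∈ range L, ox ν L j * (2*(L-j)-1) with hW
  have hBn : ∑ i ∈ range L, (2*i+1 + (2 * pc (ox ν L) i + ox ν L i)) = L * L + W := by
    rw [Finset.sum_add_distrib, sum_sq, sum_pc]
  have h2 : ((gl p ν).sum : ℤ) = ∑ i ∈ range L, (((p.getD i 0 : ℤ) - 2*L)
      + ((2*i+1 + (2 * pc (ox ν L) i + ox ν L i) : ℕ) : ℤ)) := by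
    rw [h0, Nat.cast_sum]
    apply Finset.sum_congr rfl
    intro i hi
    have h2L := (h.2.1 i (Finset.mem_range.1 hi)).2
    unfold gpart
    rw [← hL]
    omega
  have hAz : ∑ i ∈ range L, (p.getD i 0 : ℤ) = (p.sum : ℤ) := by
    rw [list_sum_eq, Nat.cast_sum]
  have hBz : ∑ i ∈ range L, ((2*i+1 + (2 * pc (ox ν L) i + ox ν L i) : ℕ) : ℤ)
      = ((L * L + W : ℕ) : ℤ) := by
    rw [← Nat.cast_sum, hBn]
  rw [h2, Finset.sum_add_distrib, Finset.sum_sub_distrib, Finset.sum_const, Finset.card_range,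
    hAz, hBz]
  have hWv : W + ν.sum = L * L := by rw [← hnu]; exact hsplit
  have hWv' : (W : ℤ) + (ν.sum : ℤ) = (L : ℤ) * L := by exact_mod_cast hWv
  rw [nsmul_eq_mul, Nat.cast_add, Nat.cast_mul]
  ring_nf
  ring_nf at hWv'
  linarith [hWv']

end GGAux

namespace GGAux
open Finset

lemma goodsigned_of_mem {n : ℕ} {σ : Multiset ℕ × Multiset ℕ} (hσ : σ ∈ Bset n) :
    GoodSigned (σ.1.sort (·≤·)) σ.2 ∧ ((σ.1.sort (·≤·)).sum : ℤ) - (σ.2.sum : ℤ) = (n : ℤ) := by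
  obtain ⟨⟨hp1, hp2, hp3⟩, hB1, hB2, hB3, hB4⟩ := hσ
  set p := σ.1.sort (·≤·) with hp
  have hlen : p.length = Multiset.card σ.1 := Multiset.length_sort _
  have hsum : p.sum = σ.1.sum := by
    calc p.sum = ((↑p : Multiset ℕ)).sum := rfl
      _ = σ.1.sum := by rw [hp, Multiset.sort_eq]
  refine ⟨⟨Multiset.pairwise_sort _ _, ?_, ?_, hB3, ?_⟩, ?_⟩
  · intro i hi
    have hmem : p.getD i 0 ∈ σ.1 := by
      rw [List.getD_eq_getElem p 0 hi]
      rw [← Multiset.mem_sort (α := ℕ) (·≤·)]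
      exact List.getElem_mem hi
    obtain ⟨he, hg⟩ := hB1 _ hmem
    exact ⟨Nat.even_iff.1 he, by rw [hlen]; exact hg⟩
  · intro x hx
    exact Nat.odd_iff.1 (hB2 x hx)
  · intro x hx
    rw [hlen]
    exact hB4 x hx
  · rw [hsum]
    exact hp3

lemma ggG_mem {n : ℕ} {σ : Multiset ℕ × Multiset ℕ} (hσ : σ ∈ Bset n) : ggG σ ∈ Aset n := by
  obtain ⟨hgs, hsum⟩ := goodsigned_of_mem hσ
  set p := σ.1.sort (·≤·) with hp
  refine ⟨⟨?_, ?_⟩, ?_⟩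
  · intro x hx
    rw [ggG, Multiset.mem_coe, gl, List.mem_ofFn] at hx
    obtain ⟨i, hi⟩ := hx
    have hpos : 0 < gpart p σ.2 i.1 := by unfold gpart; omega
    rw [← hi]
    exact hpos
  · have h1 : (ggG σ).sum = (gl p σ.2).sum := by rw [ggG]; simp; rfl
    have h2 : ((gl p σ.2).sum : ℤ) = (n : ℤ) := by rw [gsum hgs, hsum]
    rw [h1]
    exact_mod_cast h2
  · exact ⟨gl p σ.2, rfl, gl_pairwise hgs⟩

lemma left_roundtrip {n : ℕ} {m : Multiset ℕ} (hm : m ∈ Aset n) : ggG (ggF m) = m := by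
  obtain ⟨hgood, -⟩ := good_of_mem hm
  set l := m.sort (·≤·) with hl
  have hsort : ((↑(fP l) : Multiset ℕ)).sort (·≤·) = fP l := sorted_sort_coe (fP_sorted hgood)
  have hoxev : ∀ j, j < l.length → ox (fN l) l.length j = ev l j := by
    intro j hj
    rcases ev_spec l j with ⟨e1, e2⟩ | ⟨e1, e2⟩
    · rw [e2]
      unfold ox
      rw [if_neg]
      intro hmem
      obtain ⟨j', hj1, hj2, hj3⟩ := mem_fN.1 hmem
      have : j' = j := by omega
      subst this
      exact hj2 e1
    · rw [e2]
      unfold ox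
      rw [if_pos (mem_fN.2 ⟨j, hj, by omega, rfl⟩)]
  have hgpart : ∀ i, i < l.length → gpart (fP l) (fN l) i = l.getD i 0 := by
    intro i hi
    have h3 : i < (fP l).length := by rw [fP_length]; exact hi
    have hkey := hgood.key i hi
    unfold gpart
    rw [fP_length, fP_getD hi, pc_congr (fun j hj => hoxev j (by omega)), hoxev i hi]
    unfold fpart
    omega
  have hggg : ggG (ggF m) = (↑(gl (fP l) (fN l)) : Multiset ℕ) := by
    rw [ggG, ggF, hsort]
  rw [hggg]
  have hgl : gl (fP l) (fN l) = l := by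
    apply List.ext_getElem
    · rw [gl_length, fP_length]
    · intro i h1 h2
      have h3 : i < (fP l).length := by rw [fP_length]; exact h2
      rw [← List.getD_eq_getElem (gl (fP l) (fN l)) 0 h1, ← List.getD_eq_getElem l 0 h2,
        gl_getD h3, hgpart i h2]
  rw [hgl, hl, Multiset.sort_eq]

lemma right_roundtrip {n : ℕ} {σ : Multiset ℕ × Multiset ℕ} (hσ : σ ∈ Bset n) :
    ggF (ggG σ) = σ := by
  obtain ⟨hgs, -⟩ := goodsigned_of_mem hσ
  set p := σ.1.sort (·≤·) with hp
  set ν := σ.2 with hν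
  have hsort : ((↑(gl p ν) : Multiset ℕ)).sort (·≤·) = gl p ν := sorted_sort_coe (gl_sorted hgs)
  have hev : ∀ j, j < p.length → ev (gl p ν) j = ox ν p.length j := by
    intro j hj
    have hpar := gpart_parity hgs hj
    unfold ev
    rw [gl_getD hj]
    rcases ox_spec ν p.length j with ⟨m1, m2⟩ | ⟨m1, m2⟩ <;> rw [m2] at hpar ⊢
    · rw [if_neg (by omega)]
    · rw [if_pos (by omega)]
  have hfpart : ∀ i, i < p.length → fpart (gl p ν) i = p.getD i 0 := by
    intro i hi
    have h2L := (hgs.2.1 i hi).2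
    unfold fpart
    rw [gl_length, gl_getD hi, pc_congr (fun j hj => hev j (by omega)), hev i hi]
    unfold gpart
    omega
  have hfp : fP (gl p ν) = p := by
    apply List.ext_getElem
    · rw [fP_length, gl_length]
    · intro i h1 h2
      have h3 : i < (gl p ν).length := by rw [gl_length]; exact h2
      rw [← List.getD_eq_getElem (fP (gl p ν)) 0 h1, ← List.getD_eq_getElem p 0 h2,
        fP_getD h3, hfpart i h2]
  have hfn : fN (gl p ν) = ν := by
    apply (Multiset.Nodup.ext (fN_nodup _) hgs.2.2.2.1).2
    intro a
    constructor
    · intro ha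
      obtain ⟨j, hj1, hj2, hj3⟩ := mem_fN.1 ha
      rw [gl_length] at hj1 hj3
      rw [gl_getD hj1] at hj2
      have hpar := gpart_parity hgs hj1
      rcases ox_spec ν p.length j with ⟨m1, m2⟩ | ⟨m1, m2⟩
      · rwa [hj3]
      · rw [m2] at hpar; omega
    · intro ha
      have hodd := hgs.2.2.1 a ha
      have hle := hgs.2.2.2.2 a ha
      apply mem_fN.2
      refine ⟨p.length - (a+1)/2, ?_, ?_, ?_⟩
      · rw [gl_length]; omega
      · rw [gl_getD (show p.length - (a+1)/2 < p.length by omega)]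
        have hpar := gpart_parity hgs (show p.length - (a+1)/2 < p.length by omega)
        rcases ox_spec ν p.length (p.length - (a+1)/2) with ⟨m1, m2⟩ | ⟨m1, m2⟩
        · rw [m2] at hpar; omega
        · exfalso
          apply m1
          have : 2*(p.length - (p.length - (a+1)/2))-1 = a := by omega
          rwa [this]
      · rw [gl_length]; omega
  have h1 : ggF (ggG σ) = ((↑(fP (gl p ν)) : Multiset ℕ), fN (gl p ν)) := by
    rw [ggG, ggF, hsort]
  rw [h1, hfp, hfn]
  have : (↑p : Multiset ℕ) = σ.1 := by rw [hp, Multiset.sort_eq]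
  rw [this]

end GGAux


/-- Theorem 7 (Andrews): GG₁(n) = GG₋₁(n). -/
theorem gollnitz_gordon_first_signed_andrews (n : ℕ) :
    {π : Multiset ℕ | IsPartitionOf n π ∧ Multiset.Pairwise GGCond π}.ncard =
    {σ : Multiset ℕ × Multiset ℕ | IsSignedPartitionOf n σ.1 σ.2 ∧
      (∀ x ∈ σ.1, Even x ∧ 2 * Multiset.card σ.1 ≤ x) ∧
      (∀ x ∈ σ.2, Odd x) ∧ σ.2.Nodup ∧
      (∀ x ∈ σ.2, x ≤ 2 * Multiset.card σ.1)}.ncard := by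
  show (GGAux.Aset n).ncard = (GGAux.Bset n).ncard
  have himg : GGAux.ggF '' (GGAux.Aset n) = GGAux.Bset n := by
    apply Set.Subset.antisymm
    · rintro _ ⟨m, hm, rfl⟩
      exact GGAux.ggF_mem hm
    · intro σ hσ
      exact ⟨GGAux.ggG σ, GGAux.ggG_mem hσ, GGAux.right_roundtrip hσ⟩
  have hinj : Set.InjOn GGAux.ggF (GGAux.Aset n) := by
    intro a ha b hb hab
    rw [← GGAux.left_roundtrip ha, ← GGAux.left_roundtrip hb, hab]
  rw [← himg, Set.ncard_image_of_injOn hinj]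
end

section
/- For every nonnegative integer n, the number of partitions of n in which any two parts differ by at least 2, and by at least 4 if both parts are even, equals the number of signed partitions of n in which the positive parts are even and any two positive parts differ by at least 4, and the negative part sizes are odd, distinct, and each at most 2ℓ⁺ − 1, where ℓ⁺ is the number of positive parts. -/
/-- source relation on sorted (ascending) lists -/
def SR (a b : ℕ) : Prop := a + 2 ≤ b ∧ (a % 2 = 0 → b % 2 = 0 → a + 4 ≤ b)

/-- target relation -/
def TR (a b : ℕ) : Prop := a + 4 ≤ b

/-- forward map on positive-parts: `d` = number of odd parts already seen (below). -/
def piL : ℕ → List ℕ → List ℕ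
  | _, [] => []
  | d, a :: t => (a + 2 * d + a % 2) :: piL (d + a % 2) t

/-- negative parts: odd part with `m` parts above it contributes `2m+1`. -/
def nuL : List ℕ → List ℕ
  | [] => []
  | a :: t => (if a % 2 = 1 then [2 * t.length + 1] else []) ++ nuL t

/-- inverse map -/
def gL : ℕ → Multiset ℕ → List ℕ → List ℕ
  | _, _, [] => []
  | d, ν, a :: t =>
      (a - (2 * d + (if 2 * t.length + 1 ∈ ν then 1 else 0))) ::
        gL (d + (if 2 * t.length + 1 ∈ ν then 1 else 0)) ν t

theorem piL_length (d : ℕ) (l : List ℕ) : (piL d l).length = l.length := by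
  induction l generalizing d with
  | nil => rfl
  | cons a t ih => simp [piL, ih]

theorem gL_length (d : ℕ) (ν : Multiset ℕ) (l : List ℕ) : (gL d ν l).length = l.length := by
  induction l generalizing d with
  | nil => rfl
  | cons a t ih => simp [gL, ih]

theorem piL_sum (d : ℕ) (l : List ℕ) :
    (piL d l).sum = l.sum + 2 * d * l.length + (nuL l).sum := by
  induction l generalizing d with
  | nil => simp [piL, nuL]
  | cons a t ih =>
    simp only [piL, nuL, List.sum_cons, List.sum_append, ih, List.length_cons]
    have h2 : a % 2 = 0 ∨ a % 2 = 1 := Nat.mod_two_eq_zero_or_one a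
    rcases h2 with h | h <;> simp [h] <;> ring

theorem nuL_mem {l : List ℕ} {x : ℕ} (hx : x ∈ nuL l) : x % 2 = 1 ∧ x < 2 * l.length := by
  induction l with
  | nil => simp [nuL] at hx
  | cons a t ih =>
    simp only [nuL, List.mem_append] at hx
    rcases hx with hx | hx
    · rcases Nat.mod_two_eq_zero_or_one a with h | h <;> simp [h] at hx
      subst hx
      refine ⟨by omega, by simp only [List.length_cons]; omega⟩
    · have := ih hx
      constructor
      · exact this.1
      · simp only [List.length_cons]; omega

theorem nuL_nodup (l : List ℕ) : (nuL l).Nodup := by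
  induction l with
  | nil => simp [nuL]
  | cons a t ih =>
    simp only [nuL]
    rcases Nat.mod_two_eq_zero_or_one a with h | h
    · simpa [h] using ih
    · simp only [h, if_pos]
      refine List.Nodup.cons ?_ ih
      intro hmem
      have := (nuL_mem hmem).2
      omega

theorem nuL_split (t₁ : List ℕ) (a : ℕ) (t₂ : List ℕ) :
    (2 * t₂.length + 1 ∈ nuL (t₁ ++ a :: t₂)) ↔ a % 2 = 1 := by
  induction t₁ with
  | nil =>
    simp only [List.nil_append, nuL, List.mem_append]
    constructor
    · rintro (h | h)
      · rcases Nat.mod_two_eq_zero_or_one a with h2 | h2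
        · simp [h2] at h
        · exact h2
      · exfalso; have := (nuL_mem h).2; omega
    · intro h; left; simp [h]
  | cons b t ih =>
    rw [List.cons_append]
    simp only [nuL, List.mem_append]
    constructor
    · rintro (h | h)
      · rcases Nat.mod_two_eq_zero_or_one b with h2 | h2
        · simp [h2] at h
        · simp only [h2, if_pos, List.mem_singleton] at h
          simp only [List.length_append, List.length_cons] at h
          omega
      · exact ih.1 h
    · intro h; right; exact ih.2 h

theorem piL_lower (d : ℕ) (l : List ℕ) {x : ℕ} (hx : x ∈ piL d l) :
    ∃ y ∈ l, y + 2 * d + y % 2 ≤ x := by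
  induction l generalizing d with
  | nil => simp [piL] at hx
  | cons a t ih =>
    simp only [piL, List.mem_cons] at hx
    rcases hx with hx | hx
    · exact ⟨a, List.mem_cons_self, by omega⟩
    · obtain ⟨y, hy, hle⟩ := ih _ hx
      exact ⟨y, List.mem_cons_of_mem _ hy, by omega⟩

theorem piL_mem_even_pos (d : ℕ) (l : List ℕ) (hpos : ∀ y ∈ l, 0 < y)
    {x : ℕ} (hx : x ∈ piL d l) : x % 2 = 0 ∧ 0 < x := by
  induction l generalizing d with
  | nil => simp [piL] at hx
  | cons a t ih =>
    simp only [piL, List.mem_cons] at hx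
    rcases hx with hx | hx
    · have := hpos a (List.mem_cons_self)
      subst hx; omega
    · exact ih _ (fun y hy => hpos y (List.mem_cons_of_mem _ hy)) hx

theorem piL_pairwise (d : ℕ) {l : List ℕ} (h : l.Pairwise SR) :
    (piL d l).Pairwise TR := by
  induction l generalizing d with
  | nil => simp [piL]
  | cons a t ih =>
    rw [List.pairwise_cons] at h
    simp only [piL, List.pairwise_cons]
    refine ⟨?_, ih _ h.2⟩
    intro x hx
    obtain ⟨y, hy, hle⟩ := piL_lower _ _ hx
    have hsr := h.1 y hy
    obtain ⟨h1, h2⟩ := hsr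
    unfold TR
    rcases Nat.mod_two_eq_zero_or_one a with ha | ha <;>
      rcases Nat.mod_two_eq_zero_or_one y with hy2 | hy2
    · have := h2 ha hy2; omega
    · omega
    · omega
    · omega

theorem SR_trans : Transitive SR := by
  intro a b c ⟨h1, _⟩ ⟨h2, _⟩
  exact ⟨by omega, fun _ _ => by omega⟩

theorem gL_pos (d : ℕ) (ν : Multiset ℕ) (l : List ℕ)
    (hge : ∀ y ∈ l, 2 * d + 2 ≤ y) (hpw : l.Pairwise TR) :
    ∀ x ∈ gL d ν l, 0 < x := by
  induction l generalizing d with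
  | nil => simp [gL]
  | cons a t ih =>
    rw [List.pairwise_cons] at hpw
    intro x hx
    simp only [gL, List.mem_cons] at hx
    have ha := hge a (List.mem_cons_self)
    rcases hx with hx | hx
    · subst hx
      split <;> omega
    · refine ih _ (fun y hy => ?_) hpw.2 x hx
      have h4 := hpw.1 y hy
      unfold TR at h4
      split <;> omega

theorem gL_chain (d : ℕ) (ν : Multiset ℕ) (l : List ℕ)
    (heven : ∀ y ∈ l, y % 2 = 0) (hge : ∀ y ∈ l, 2 * d + 2 ≤ y) (hpw : l.Pairwise TR) :
    (gL d ν l).Chain' SR := by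
  induction l generalizing d with
  | nil => simp [gL, List.Chain']
  | cons a t ih =>
    rw [List.pairwise_cons] at hpw
    have ha := hge a (List.mem_cons_self)
    have hae := heven a (List.mem_cons_self)
    have htail : ∀ y ∈ t, 2 * (d + (if 2 * t.length + 1 ∈ ν then 1 else 0)) + 2 ≤ y := by
      intro y hy
      have h4 := hpw.1 y hy
      unfold TR at h4
      split <;> omega
    have hc := ih _ (fun y hy => heven y (List.mem_cons_of_mem _ hy)) htail hpw.2
    rw [show gL d ν (a :: t) = _ :: gL (d + (if 2 * t.length + 1 ∈ ν then 1 else 0)) ν t from rfl]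
    refine List.isChain_cons.2 ⟨?_, hc⟩
    intro y hy
    cases t with
    | nil => simp [gL] at hy
    | cons a' t' =>
      rw [show gL (d + (if 2 * (a' :: t').length + 1 ∈ ν then 1 else 0)) ν (a' :: t') = _ :: _ from rfl] at hy
      simp only [Option.mem_def, List.head?_cons, Option.some.injEq] at hy
      subst hy
      have ha' := heven a' (List.mem_cons_of_mem _ (List.mem_cons_self))
      have h4 := hpw.1 a' (List.mem_cons_self)
      unfold TR at h4
      constructor
      · split <;> split <;> omega
      · intro h1 h2
        revert h1 h2
        split <;> split <;> omega

theorem piL_gL (d : ℕ) (ν : Multiset ℕ) (l : List ℕ)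
    (heven : ∀ y ∈ l, y % 2 = 0) (hge : ∀ y ∈ l, 2 * d + 2 ≤ y) (hpw : l.Pairwise TR) :
    piL d (gL d ν l) = l := by
  induction l generalizing d with
  | nil => simp [gL, piL]
  | cons a t ih =>
    rw [List.pairwise_cons] at hpw
    have ha := hge a (List.mem_cons_self)
    have hae := heven a (List.mem_cons_self)
    have htail : ∀ y ∈ t, 2 * (d + (if 2 * t.length + 1 ∈ ν then 1 else 0)) + 2 ≤ y := by
      intro y hy
      have h4 := hpw.1 y hy
      unfold TR at h4
      split <;> omega
    set b : ℕ := if 2 * t.length + 1 ∈ ν then 1 else 0 with hb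
    have hble : b ≤ 1 := by rw [hb]; split <;> omega
    have hmod : (a - (2 * d + b)) % 2 = b := by omega
    rw [show gL d ν (a :: t) = (a - (2 * d + b)) :: gL (d + b) ν t from rfl]
    rw [show piL d ((a - (2 * d + b)) :: gL (d + b) ν t)
        = ((a - (2 * d + b)) + 2 * d + (a - (2 * d + b)) % 2)
          :: piL (d + (a - (2 * d + b)) % 2) (gL (d + b) ν t) from rfl]
    rw [hmod]
    rw [ih _ (fun y hy => heven y (List.mem_cons_of_mem _ hy)) htail hpw.2]
    congr 1
    omega

theorem nuL_gL_mem (d : ℕ) (ν : Multiset ℕ) (l : List ℕ)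
    (heven : ∀ y ∈ l, y % 2 = 0) (hge : ∀ y ∈ l, 2 * d + 2 ≤ y) (hpw : l.Pairwise TR)
    (x : ℕ) : x ∈ nuL (gL d ν l) ↔ (x % 2 = 1 ∧ x < 2 * l.length ∧ x ∈ ν) := by
  induction l generalizing d with
  | nil => simp [gL, nuL]
  | cons a t ih =>
    rw [List.pairwise_cons] at hpw
    have ha := hge a (List.mem_cons_self)
    have hae := heven a (List.mem_cons_self)
    have htail : ∀ y ∈ t, 2 * (d + (if 2 * t.length + 1 ∈ ν then 1 else 0)) + 2 ≤ y := by
      intro y hy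
      have h4 := hpw.1 y hy
      unfold TR at h4
      split <;> omega
    set b : ℕ := if 2 * t.length + 1 ∈ ν then 1 else 0 with hb
    have hble : b ≤ 1 := by rw [hb]; split <;> omega
    have hmod : (a - (2 * d + b)) % 2 = b := by omega
    have hIH := ih _ (fun y hy => heven y (List.mem_cons_of_mem _ hy)) htail hpw.2
    rw [show gL d ν (a :: t) = (a - (2 * d + b)) :: gL (d + b) ν t from rfl]
    rw [show nuL ((a - (2 * d + b)) :: gL (d + b) ν t)
        = (if (a - (2 * d + b)) % 2 = 1 then [2 * (gL (d + b) ν t).length + 1] else [])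
          ++ nuL (gL (d + b) ν t) from rfl]
    rw [hmod, gL_length]
    rw [List.mem_append, hIH]
    by_cases hbv : 2 * t.length + 1 ∈ ν
    · have : b = 1 := by rw [hb, if_pos hbv]
      rw [this]
      simp only [if_pos, List.mem_singleton, List.length_cons]
      constructor
      · rintro (h | h)
        · subst h; exact ⟨by omega, by omega, hbv⟩
        · exact ⟨h.1, by omega, h.2.2⟩
      · rintro ⟨h1, h2, h3⟩
        by_cases hx : x = 2 * t.length + 1
        · left; exact hx
        · right; exact ⟨h1, by omega, h3⟩
    · have : b = 0 := by rw [hb, if_neg hbv]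
      rw [this]
      simp only [List.length_cons]
      norm_num
      intro h1 h3
      constructor
      · omega
      · intro h2
        by_cases hx : x = 2 * t.length + 1
        · exact absurd (hx ▸ h3) hbv
        · omega

theorem gL_piL (d : ℕ) (ν : Multiset ℕ) (l : List ℕ)
    (H : ∀ t₁ a t₂, l = t₁ ++ a :: t₂ → ((2 * t₂.length + 1 ∈ ν) ↔ a % 2 = 1)) :
    gL d ν (piL d l) = l := by
  induction l generalizing d with
  | nil => simp [gL, piL]
  | cons a t ih =>
    have hbit : (2 * t.length + 1 ∈ ν) ↔ a % 2 = 1 := H [] a t rfl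
    rw [show piL d (a :: t) = (a + 2 * d + a % 2) :: piL (d + a % 2) t from rfl]
    rw [show gL d ν ((a + 2 * d + a % 2) :: piL (d + a % 2) t)
        = ((a + 2 * d + a % 2)
            - (2 * d + (if 2 * (piL (d + a % 2) t).length + 1 ∈ ν then 1 else 0)))
          :: gL (d + (if 2 * (piL (d + a % 2) t).length + 1 ∈ ν then 1 else 0)) ν
              (piL (d + a % 2) t) from rfl]
    have hlen : (piL (d + a % 2) t).length = t.length := piL_length _ _
    have hbv : (if 2 * (piL (d + a % 2) t).length + 1 ∈ ν then 1 else 0) = a % 2 := by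
      rw [hlen]
      rcases Nat.mod_two_eq_zero_or_one a with h | h
      · rw [if_neg, h]; intro hm; have := hbit.1 hm; omega
      · rw [if_pos (hbit.2 h), h]
    rw [hbv, ih _ (fun t₁ a' t₂ heq => H (a :: t₁) a' t₂ (by rw [heq]; rfl))]
    congr 1
    omega

instance : IsTrans ℕ SR := ⟨fun _ _ _ ⟨h1, _⟩ ⟨h2, _⟩ => ⟨by omega, fun _ _ => by omega⟩⟩

def Fm (π : Multiset ℕ) : Multiset ℕ × Multiset ℕ :=
  (↑(piL 0 (π.sort (· ≤ ·))), ↑(nuL (π.sort (· ≤ ·))))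

def Gm (σ : Multiset ℕ × Multiset ℕ) : Multiset ℕ :=
  ↑(gL 0 σ.2 (σ.1.sort (· ≤ ·)))

theorem sort_coe {l : List ℕ} (h : l.Pairwise (· ≤ ·)) :
    Multiset.sort (↑l : Multiset ℕ) (· ≤ ·) = l :=
  List.Perm.eq_of_pairwise' (Multiset.pairwise_sort _ _) h
    (Multiset.coe_eq_coe.mp (Multiset.sort_eq _ _))

theorem abs_ge_of_add_le {a b k : ℕ} (h : a + k ≤ b) : (k : ℤ) ≤ |(a : ℤ) - (b : ℤ)| := by
  rw [abs_sub_comm, abs_of_nonneg (by push_cast; omega)]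
  push_cast; omega

theorem le_of_abs_ge {a b k : ℕ} (hab : a ≤ b) (h : (k : ℤ) ≤ |(a : ℤ) - (b : ℤ)|) :
    a + k ≤ b := by
  rw [abs_sub_comm, abs_of_nonneg (by push_cast; omega)] at h
  omega

theorem nuL_gL_eq (ν : Multiset ℕ) (l : List ℕ)
    (heven : ∀ y ∈ l, y % 2 = 0) (hge : ∀ y ∈ l, 2 * 0 + 2 ≤ y) (hpw : l.Pairwise TR)
    (hν : ∀ x ∈ ν, x % 2 = 1 ∧ x < 2 * l.length) (hnd : ν.Nodup) :
    (↑(nuL (gL 0 ν l)) : Multiset ℕ) = ν := by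
  rw [Multiset.Nodup.ext (Multiset.coe_nodup.2 (nuL_nodup _)) hnd]
  intro x
  rw [Multiset.mem_coe, nuL_gL_mem 0 ν l heven hge hpw]
  exact ⟨fun h => h.2.2, fun hx => ⟨(hν x hx).1, (hν x hx).2, hx⟩⟩

/-- membership data extracted for the source side -/
theorem src_list_facts {n : ℕ} {π : Multiset ℕ}
    (h : IsPartitionOf n π ∧ Multiset.Pairwise GGCond π) :
    (∀ y ∈ π.sort (· ≤ ·), 0 < y) ∧ (π.sort (· ≤ ·)).Pairwise SR ∧
      (π.sort (· ≤ ·)).sum = n := by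
  set l := π.sort (· ≤ ·) with hl
  have hcoe : (↑l : Multiset ℕ) = π := Multiset.sort_eq _ _
  have hpos : ∀ y ∈ l, 0 < y := fun y hy => h.1.1 y (by rw [← hcoe]; exact hy)
  have hGG : l.Pairwise GGCond := by
    have hsym : Symmetric GGCond := by
      intro a b ⟨h1, h2⟩
      exact ⟨by rwa [abs_sub_comm], fun hb ha => by rw [abs_sub_comm]; exact h2 ha hb⟩
    rw [← @Multiset.pairwise_coe_iff_pairwise _ _ ⟨fun _ _ h => hsym h⟩ _, hcoe]
    exact h.2
  have hsorted : l.Pairwise (· ≤ ·) := Multiset.pairwise_sort _ _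
  refine ⟨hpos, ?_, ?_⟩
  · refine (List.Pairwise.and hsorted hGG).imp ?_
    rintro a b ⟨hab, h2, h4⟩
    constructor
    · exact le_of_abs_ge hab h2
    · intro ha hb
      exact le_of_abs_ge hab (h4 (Nat.even_iff.2 ha) (Nat.even_iff.2 hb))
  · have : (↑l : Multiset ℕ).sum = n := by rw [hcoe]; exact h.1.2
    rwa [Multiset.sum_coe] at this

theorem coeZ (p : Multiset ℕ) :
    (do let a ← p; pure ((a : ℤ))) = Multiset.map (Nat.cast : ℕ → ℤ) p := by
  simp [Multiset.bind_singleton]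

theorem map_coe' (l : List ℕ) :
    Multiset.map (Nat.cast : ℕ → ℤ) (↑l : Multiset ℕ) = ↑(List.map (Nat.cast : ℕ → ℤ) l) := rfl

theorem tgt_list_facts {n : ℕ} {p ν : Multiset ℕ}
    (h1 : IsSignedPartitionOf n p ν) (h2 : ∀ x ∈ p, Even x)
    (h3 : Multiset.Pairwise (fun a b => 4 ≤ |(a : ℤ) - (b : ℤ)|) p)
    (h4 : ∀ x ∈ ν, Odd x)
    (h6 : ∀ x ∈ ν, (x : ℤ) ≤ 2 * (Multiset.card p : ℤ) - 1) :
    (∀ y ∈ p.sort (· ≤ ·), y % 2 = 0) ∧ (∀ y ∈ p.sort (· ≤ ·), 2 * 0 + 2 ≤ y) ∧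
      (p.sort (· ≤ ·)).Pairwise TR ∧
      (∀ x ∈ ν, x % 2 = 1 ∧ x < 2 * (p.sort (· ≤ ·)).length) ∧
      (p.sort (· ≤ ·)).sum = p.sum := by
  set l := p.sort (· ≤ ·) with hldef
  have hcoe : (↑l : Multiset ℕ) = p := Multiset.sort_eq _ _
  have hmem : ∀ y ∈ l, y ∈ p := fun y hy => by rw [← hcoe]; exact hy
  have heven : ∀ y ∈ l, y % 2 = 0 := fun y hy => Nat.even_iff.1 (h2 y (hmem y hy))
  have hge : ∀ y ∈ l, 2 * 0 + 2 ≤ y := by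
    intro y hy
    have := h1.1 y (hmem y hy)
    have := heven y hy
    omega
  have hlen : l.length = Multiset.card p := by
    rw [← hcoe, Multiset.coe_card]
  have hTR : l.Pairwise TR := by
    rw [coeZ, ← hcoe, map_coe'] at h3
    have hsym : Symmetric (fun a b : ℤ => 4 ≤ |a - b|) := by
      intro a b h; rwa [abs_sub_comm]
    rw [@Multiset.pairwise_coe_iff_pairwise _ _ ⟨fun _ _ h => hsym h⟩ _, List.pairwise_map] at h3
    refine (List.Pairwise.and (Multiset.pairwise_sort _ _) h3).imp ?_
    rintro a b ⟨hab, h4'⟩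
    exact le_of_abs_ge hab (by exact_mod_cast h4')
  refine ⟨heven, hge, hTR, ?_, ?_⟩
  · intro x hx
    have hodd := Nat.odd_iff.1 (h4 x hx)
    have hb := h6 x hx
    rw [← hlen] at hb
    exact ⟨hodd, by omega⟩
  · rw [← hcoe, Multiset.sum_coe]

/-- Theorem 8: GG₁(n) = GG'₋₁(n). -/
theorem gollnitz_gordon_first_signed (n : ℕ) :
    {π : Multiset ℕ | IsPartitionOf n π ∧ Multiset.Pairwise GGCond π}.ncard =
    {σ : Multiset ℕ × Multiset ℕ | IsSignedPartitionOf n σ.1 σ.2 ∧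
      (∀ x ∈ σ.1, Even x) ∧
      Multiset.Pairwise (fun a b => 4 ≤ |(a : ℤ) - (b : ℤ)|) σ.1 ∧
      (∀ x ∈ σ.2, Odd x) ∧ σ.2.Nodup ∧
      (∀ x ∈ σ.2, (x : ℤ) ≤ 2 * (Multiset.card σ.1 : ℤ) - 1)}.ncard := by
  classical
  set Src := {π : Multiset ℕ | IsPartitionOf n π ∧ Multiset.Pairwise GGCond π} with hSrcdef
  set Tgt := {σ : Multiset ℕ × Multiset ℕ | IsSignedPartitionOf n σ.1 σ.2 ∧
      (∀ x ∈ σ.1, Even x) ∧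
      Multiset.Pairwise (fun a b => 4 ≤ |(a : ℤ) - (b : ℤ)|) σ.1 ∧
      (∀ x ∈ σ.2, Odd x) ∧ σ.2.Nodup ∧
      (∀ x ∈ σ.2, (x : ℤ) ≤ 2 * (Multiset.card σ.1 : ℤ) - 1)} with hTgtdef
  have hmapsF : Set.MapsTo Fm Src Tgt := by
    intro π hπ
    obtain ⟨hpos, hSR, hsum⟩ := src_list_facts hπ
    set l := π.sort (· ≤ ·) with hldef
    have hF : Fm π = ((↑(piL 0 l) : Multiset ℕ), (↑(nuL l) : Multiset ℕ)) := rfl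
    have hTR : (piL 0 l).Pairwise TR := piL_pairwise 0 hSR
    have hep : ∀ x ∈ piL 0 l, x % 2 = 0 ∧ 0 < x := fun x hx => piL_mem_even_pos 0 l hpos hx
    have hnu : ∀ x ∈ nuL l, x % 2 = 1 ∧ x < 2 * l.length := fun x hx => nuL_mem hx
    rw [Set.mem_setOf_eq] at hπ
    show Fm π ∈ Tgt
    rw [hF, hTgtdef, Set.mem_setOf_eq]
    refine ⟨⟨?_, ?_, ?_⟩, ?_, ?_, ?_, ?_, ?_⟩
    · intro x hx
      exact (hep x (Multiset.mem_coe.1 hx)).2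
    · intro x hx
      have := (hnu x (Multiset.mem_coe.1 hx)).1
      omega
    · show ((↑(piL 0 l) : Multiset ℕ).sum : ℤ) - ((↑(nuL l) : Multiset ℕ).sum : ℤ) = n
      rw [Multiset.sum_coe, Multiset.sum_coe]
      have hps := piL_sum 0 l
      omega
    · intro x hx
      exact Nat.even_iff.2 (hep x (Multiset.mem_coe.1 hx)).1
    · show Multiset.Pairwise _ _
      rw [coeZ, map_coe']
      exact ⟨_, rfl, List.pairwise_map.2 (hTR.imp (fun h => by
        exact_mod_cast abs_ge_of_add_le h))⟩
    · intro x hx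
      exact Nat.odd_iff.2 (hnu x (Multiset.mem_coe.1 hx)).1
    · exact Multiset.coe_nodup.2 (nuL_nodup l)
    · intro x hx
      have := (hnu x (Multiset.mem_coe.1 hx)).2
      show (x : ℤ) ≤ 2 * (Multiset.card (↑(piL 0 l) : Multiset ℕ) : ℤ) - 1
      rw [Multiset.coe_card, piL_length]
      omega
  have hmapsG : Set.MapsTo Gm Tgt Src := by
    rintro ⟨p, ν⟩ hσ
    rw [hTgtdef, Set.mem_setOf_eq] at hσ
    obtain ⟨h1, h2, h3, h4, h5, h6⟩ := hσ
    obtain ⟨heven, hge, hTR, hν, hsum⟩ := tgt_list_facts h1 h2 h3 h4 h6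
    set l := p.sort (· ≤ ·) with hldef
    have hG : Gm (p, ν) = (↑(gL 0 ν l) : Multiset ℕ) := rfl
    have hround : piL 0 (gL 0 ν l) = l := piL_gL 0 ν l heven hge hTR
    have hnueq : (↑(nuL (gL 0 ν l)) : Multiset ℕ) = ν := nuL_gL_eq ν l heven hge hTR hν h5
    have hchain : (gL 0 ν l).Chain' SR := gL_chain 0 ν l heven hge hTR
    have hSR : (gL 0 ν l).Pairwise SR := List.isChain_iff_pairwise.1 hchain
    show Gm (p, ν) ∈ Src
    rw [hG, hSrcdef, Set.mem_setOf_eq]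
    refine ⟨⟨?_, ?_⟩, ?_⟩
    · intro x hx
      exact gL_pos 0 ν l hge hTR x (Multiset.mem_coe.1 hx)
    · show (↑(gL 0 ν l) : Multiset ℕ).sum = n
      rw [Multiset.sum_coe]
      have hps := piL_sum 0 (gL 0 ν l)
      rw [hround] at hps
      have hνsum : (nuL (gL 0 ν l)).sum = ν.sum := by
        rw [← Multiset.sum_coe, hnueq]
      have hz : ((p.sum : ℤ)) - ((ν.sum : ℤ)) = (n : ℤ) := h1.2.2
      have hs2 : l.sum = p.sum := hsum
      have hkey : (gL 0 ν l).sum + ν.sum = p.sum := by omega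
      omega
    · refine ⟨gL 0 ν l, rfl, hSR.imp ?_⟩
      rintro a b ⟨hA, hB⟩
      constructor
      · exact_mod_cast abs_ge_of_add_le (show a + 2 ≤ b by omega)
      · intro ha hb
        exact_mod_cast abs_ge_of_add_le (hB (Nat.even_iff.1 ha) (Nat.even_iff.1 hb))
  have hleft : Set.LeftInvOn Gm Fm Src := by
    intro π hπ
    obtain ⟨hpos, hSR, hsum⟩ := src_list_facts hπ
    set l := π.sort (· ≤ ·) with hldef
    have hTR : (piL 0 l).Pairwise TR := piL_pairwise 0 hSR
    have hsorted : (piL 0 l).Pairwise (· ≤ ·) := hTR.imp (fun h => by unfold TR at h; omega)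
    show (↑(gL 0 (↑(nuL l)) (Multiset.sort (↑(piL 0 l) : Multiset ℕ) (· ≤ ·))) : Multiset ℕ) = π
    rw [sort_coe hsorted]
    rw [gL_piL 0 _ l ?_]
    · exact Multiset.sort_eq _ _
    · intro t₁ a t₂ heq
      rw [Multiset.mem_coe, heq]
      exact nuL_split t₁ a t₂
  have hright : Set.RightInvOn Gm Fm Tgt := by
    rintro ⟨p, ν⟩ hσ
    rw [hTgtdef, Set.mem_setOf_eq] at hσ
    obtain ⟨h1, h2, h3, h4, h5, h6⟩ := hσ
    obtain ⟨heven, hge, hTR, hν, hsum⟩ := tgt_list_facts h1 h2 h3 h4 h6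
    set l := p.sort (· ≤ ·) with hldef
    have hround : piL 0 (gL 0 ν l) = l := piL_gL 0 ν l heven hge hTR
    have hnueq : (↑(nuL (gL 0 ν l)) : Multiset ℕ) = ν := nuL_gL_eq ν l heven hge hTR hν h5
    have hchain : (gL 0 ν l).Chain' SR := gL_chain 0 ν l heven hge hTR
    have hSR : (gL 0 ν l).Pairwise SR := List.isChain_iff_pairwise.1 hchain
    have hsorted : (gL 0 ν l).Pairwise (· ≤ ·) := hSR.imp (fun h => by
      have := h.1; omega)
    show Fm (Gm (p, ν)) = (p, ν)
    have hGm : Gm (p, ν) = (↑(gL 0 ν l) : Multiset ℕ) := rfl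
    rw [hGm]
    unfold Fm
    rw [sort_coe hsorted, hround, hnueq, Multiset.sort_eq]
  have hbij : Set.BijOn Fm Src Tgt := Set.InvOn.bijOn ⟨hleft, hright⟩ hmapsF hmapsG
  rw [← hbij.image_eq, Set.ncard_image_of_injOn hbij.injOn]
end

section
/- For every nonnegative integer n, the number of partitions of n into parts at least 3 in which any two parts differ by at least 2, and by at least 4 if both parts are even, equals the number of signed partitions of n in which the positive parts are even, each at least 4, and any two positive parts differ by at least 4, and the negative part sizes are odd, distinct, and each at most 2ℓ⁺ − 1, where ℓ⁺ is the number of positive parts. -/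
namespace GGaux

def fE (a : ℕ) : ℕ := if Even a then 1 else 0

lemma fE_le (a : ℕ) : fE a ≤ 1 := by unfold fE; split <;> omega

def muAux : ℕ → ℕ → List ℕ → List ℕ
  | _, _, [] => []
  | i, c, a :: t => (a + 2*(i - c) + (1 - fE a)) :: muAux (i+1) (c + fE a) t

def nuL : List ℕ → List ℕ
  | [] => []
  | a :: t => if Even a then nuL t else (2 * t.length + 1) :: nuL t

def lamAux (ν : Multiset ℕ) : ℕ → ℕ → List ℕ → List ℕ
  | _, _, [] => []
  | i, c, b :: t =>
    (b + (if (2 * t.length + 1) ∈ ν then 0 else 1) + 2*c - (2*i+1)) ::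
      lamAux ν (i+1) (c + (if (2 * t.length + 1) ∈ ν then 0 else 1)) t

def r2 (a b : ℕ) : Prop := a + 2 ≤ b ∧ (Even a → Even b → a + 4 ≤ b)

def r4 (a b : ℕ) : Prop := a + 4 ≤ b

instance : IsTrans ℕ r2 :=
  ⟨fun a b c h1 h2 => ⟨by have := h1.1; have := h2.1; omega,
    fun _ _ => by have := h1.1; have := h2.1; omega⟩⟩

instance : IsTrans ℕ r4 := ⟨fun a b c h1 h2 => by unfold r4 at *; omega⟩

lemma muAux_length (i c : ℕ) (l : List ℕ) : (muAux i c l).length = l.length := by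
  induction l generalizing i c with
  | nil => rfl
  | cons a t ih => simp [muAux, ih]

lemma lamAux_length (ν : Multiset ℕ) (i c : ℕ) (l : List ℕ) :
    (lamAux ν i c l).length = l.length := by
  induction l generalizing i c with
  | nil => rfl
  | cons a t ih => simp [lamAux, ih]

lemma nuL_mem_le {l : List ℕ} {x : ℕ} (hx : x ∈ nuL l) : x + 1 ≤ 2 * l.length := by
  induction l with
  | nil => simp [nuL] at hx
  | cons a t ih =>
    simp only [nuL] at hx
    split at hx
    · have := ih hx; simp; omega
    · rcases List.mem_cons.mp hx with h | h
      · simp [h]; omega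
      · have := ih h; simp; omega

lemma nuL_mem_odd {l : List ℕ} {x : ℕ} (hx : x ∈ nuL l) : Odd x := by
  induction l with
  | nil => simp [nuL] at hx
  | cons a t ih =>
    simp only [nuL] at hx
    split at hx
    · exact ih hx
    · rcases List.mem_cons.mp hx with h | h
      · exact h ▸ ⟨t.length, by omega⟩
      · exact ih h

lemma nuL_pairwise (l : List ℕ) : (nuL l).Pairwise (fun a b => b < a) := by
  induction l with
  | nil => exact List.Pairwise.nil
  | cons a t ih =>
    simp only [nuL]
    split
    · exact ih
    · exact List.Pairwise.cons (fun x hx => by have := nuL_mem_le hx; omega) ih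

lemma nuL_nodup (l : List ℕ) : (nuL l).Nodup :=
  (nuL_pairwise l).imp (fun h => by omega)

/-- membership characterization of nuL via suffixes -/
lemma nuL_mem_iff {l : List ℕ} {a : ℕ} {t : List ℕ} (h : (a :: t) <:+ l) :
    (2 * t.length + 1) ∈ nuL l ↔ ¬ Even a := by
  induction l with
  | nil => exact absurd (List.eq_nil_of_suffix_nil h) (by simp)
  | cons b s ih =>
    rcases List.suffix_cons_iff.mp h with h' | h'
    · injection h' with h1 h2
      subst h1; subst h2
      simp only [nuL]
      split_ifs with h2
      · constructor
        · intro hm; exact absurd (nuL_mem_le hm) (by omega)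
        · intro hna; exact absurd h2 hna
      · simp [h2]
    · have htlen : t.length + 1 ≤ s.length := by
        have := h'.length_le; simp at this; omega
      simp only [nuL]
      split_ifs with h2
      · exact ih h'
      · constructor
        · intro hm
          rcases List.mem_cons.mp hm with h3 | h3
          · omega
          · exact (ih h').mp h3
        · intro hna; exact List.mem_cons_of_mem _ ((ih h').mpr hna)

/-- the key sum identity -/
lemma mu_sum (l : List ℕ) (c d : ℕ) :
    ((muAux (c + d) c l).sum : ℤ) = (l.sum : ℤ) + ((nuL l).sum : ℤ) + 2 * d * l.length := by
  induction l generalizing c d with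
  | nil => simp [muAux, nuL]
  | cons a t ih =>
    have h2 : c + d - c = d := by omega
    by_cases h : Even a
    · have h1 : fE a = 1 := if_pos h
      have key := ih (c+1) d
      have h3 : c + 1 + d = c + d + 1 := by omega
      rw [h3] at key
      simp only [muAux, nuL, if_pos h, h1, List.sum_cons, List.length_cons, h2, Nat.sub_self]
      push_cast at key ⊢
      linear_combination key
    · have h1 : fE a = 0 := if_neg h
      have key := ih c (d+1)
      have h3 : c + (d + 1) = c + d + 1 := by omega
      rw [h3] at key
      simp only [muAux, nuL, if_neg h, h1, List.sum_cons, List.length_cons, h2, Nat.sub_zero, Nat.add_zero]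
      push_cast at key ⊢
      linear_combination key

/-- elements of muAux are even and ≥ 4 -/
lemma muAux_mem (i c : ℕ) (hc : c ≤ i) (l : List ℕ) (hl : ∀ x ∈ l, 3 ≤ x) :
    ∀ x ∈ muAux i c l, Even x ∧ 4 ≤ x := by
  induction l generalizing i c with
  | nil => simp [muAux]
  | cons a t ih =>
    intro x hx
    rcases List.mem_cons.mp hx with rfl | hx'
    · have ha : 3 ≤ a := hl a List.mem_cons_self
      rw [Nat.even_iff]
      unfold fE
      by_cases h : Even a
      · rw [Nat.even_iff] at h; rw [if_pos (Nat.even_iff.mpr h)]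
        constructor <;> omega
      · rw [Nat.even_iff] at h; rw [if_neg (fun hh => h (Nat.even_iff.mp hh))]
        constructor <;> omega
    · exact ih (i+1) (c + fE a) (by have := fE_le a; omega)
        (fun y hy => hl y (List.mem_cons_of_mem a hy)) x hx'

/-- chain' property of muAux -/
lemma muAux_chain (i c : ℕ) (hc : c ≤ i) (l : List ℕ) (hl : l.Chain' r2) :
    (muAux i c l).Chain' r4 := by
  induction l generalizing i c with
  | nil => exact List.isChain_nil
  | cons a t ih =>
    cases t with
    | nil => exact List.isChain_singleton _
    | cons b t' =>
      have hab : r2 a b := (List.isChain_cons_cons.mp hl).1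
      have htail : (a + 2*(i - c) + (1 - fE a)) :: muAux (i+1) (c + fE a) (b :: t')
          = muAux i c (a :: b :: t') := rfl
      rw [show muAux i c (a :: b :: t') = (a + 2*(i - c) + (1 - fE a)) ::
        (b + 2*((i+1) - (c + fE a)) + (1 - fE b)) :: muAux (i+2) (c + fE a + fE b) t'
        from rfl]
      refine List.isChain_cons_cons.mpr ⟨?_, ?_⟩
      · obtain ⟨h1, h2⟩ := hab
        unfold r4 fE
        by_cases ha : Even a <;> by_cases hb : Even b
        · have h3 := h2 ha hb
          rw [if_pos ha, if_pos hb]; omega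
        · rw [Nat.even_iff] at ha; rw [Nat.not_even_iff] at hb
          rw [if_pos (Nat.even_iff.mpr ha), if_neg (by rw [Nat.not_even_iff]; exact hb)]
          omega
        · rw [Nat.not_even_iff] at ha; rw [Nat.even_iff] at hb
          rw [if_neg (by rw [Nat.not_even_iff]; exact ha), if_pos (Nat.even_iff.mpr hb)]
          omega
        · rw [Nat.not_even_iff] at ha; rw [Nat.not_even_iff] at hb
          rw [if_neg (by rw [Nat.not_even_iff]; exact ha),
            if_neg (by rw [Nat.not_even_iff]; exact hb)]
          omega
      · exact ih (i+1) (c + fE a) (by have := fE_le a; omega) (List.isChain_cons_cons.mp hl).2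

/-- roundtrip 1: lamAux ∘ muAux = id -/
lemma lam_mu (l : List ℕ) (i c : ℕ) (hc : c ≤ i) (ν : Multiset ℕ)
    (hν : ∀ a t, (a :: t) <:+ l → ((2 * t.length + 1) ∈ ν ↔ ¬ Even a)) :
    lamAux ν i c (muAux i c l) = l := by
  induction l generalizing i c with
  | nil => rfl
  | cons a t ih =>
    have hmem := hν a t (List.suffix_refl _)
    show (a + 2*(i - c) + (1 - fE a) + (if (2 * (muAux (i+1) (c + fE a) t).length + 1) ∈ ν then 0 else 1) + 2*c - (2*i+1)) ::
      lamAux ν (i+1) (c + (if (2 * (muAux (i+1) (c + fE a) t).length + 1) ∈ ν then 0 else 1)) (muAux (i+1) (c + fE a) t) = a :: t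
    rw [muAux_length]
    by_cases h : Even a
    · have h1 : fE a = 1 := if_pos h
      rw [if_neg (fun hm => (hmem.mp hm) h), h1]
      congr 1
      · omega
      · exact ih (i+1) (c+1) (by omega)
          (fun a' t' hsuf => hν a' t' (hsuf.trans (List.suffix_cons a t)))
    · have h1 : fE a = 0 := if_neg h
      rw [if_pos (hmem.mpr h), h1]
      congr 1
      · omega
      · exact ih (i+1) (c+0) (by omega)
          (fun a' t' hsuf => hν a' t' (hsuf.trans (List.suffix_cons a t)))

/-- roundtrip 2 (positive parts): muAux ∘ lamAux = id -/
lemma mu_lam (m : List ℕ) (i c : ℕ) (ν : Multiset ℕ) (hc : c ≤ i)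
    (hev : ∀ x ∈ m, Even x) (hb : ∀ x ∈ m, 2*i + 2 ≤ x + 2*c)
    (hm : m.Pairwise r4) :
    muAux i c (lamAux ν i c m) = m := by
  induction m generalizing i c with
  | nil => rfl
  | cons b t ih =>
    obtain ⟨k, hk⟩ := hev b List.mem_cons_self
    have hbb := hb b List.mem_cons_self
    have htail : ∀ x ∈ t, b + 4 ≤ x := fun x hx => (List.pairwise_cons.mp hm).1 x hx
    by_cases hmem : (2 * t.length + 1) ∈ ν
    · simp only [lamAux, if_pos hmem, muAux]
      have hf : fE (b + 0 + 2*c - (2*i+1)) = 0 := by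
        apply if_neg
        rw [Nat.not_even_iff]
        omega
      rw [hf]
      congr 1
      · omega
      · exact ih (i+1) (c+0) (by omega)
          (fun x hx => hev x (List.mem_cons_of_mem b hx))
          (fun x hx => by have := htail x hx; omega)
          (List.pairwise_cons.mp hm).2
    · simp only [lamAux, if_neg hmem, muAux]
      have hf : fE (b + 1 + 2*c - (2*i+1)) = 1 := by
        apply if_pos
        rw [Nat.even_iff]
        omega
      rw [hf]
      congr 1
      · omega
      · exact ih (i+1) (c+1) (by omega)
          (fun x hx => hev x (List.mem_cons_of_mem b hx))
          (fun x hx => by have := htail x hx; omega)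
          (List.pairwise_cons.mp hm).2

def odds : ℕ → List ℕ
  | 0 => []
  | n+1 => (2*n+1) :: odds n

lemma odds_mem (n x : ℕ) : x ∈ odds n ↔ Odd x ∧ x < 2 * n := by
  induction n with
  | zero => simp [odds]
  | succ n ih =>
    simp only [odds, List.mem_cons, ih]
    constructor
    · rintro (rfl | ⟨h1, h2⟩)
      · exact ⟨⟨n, by omega⟩, by omega⟩
      · exact ⟨h1, by omega⟩
    · rintro ⟨⟨k, hk⟩, h2⟩
      by_cases h : x = 2*n+1
      · exact Or.inl h
      · exact Or.inr ⟨⟨k, hk⟩, by omega⟩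

lemma odds_nodup (n : ℕ) : (odds n).Nodup := by
  induction n with
  | zero => exact List.nodup_nil
  | succ n ih =>
    exact List.Nodup.cons (fun h => by have := (odds_mem n _).mp h; omega) ih

/-- roundtrip 2 (negative parts) -/
lemma nu_lam (m : List ℕ) (i c : ℕ) (ν : Multiset ℕ) (hc : c ≤ i)
    (hev : ∀ x ∈ m, Even x) (hb : ∀ x ∈ m, 2*i + 2 ≤ x + 2*c)
    (hm : m.Pairwise r4) :
    nuL (lamAux ν i c m) = (odds m.length).filter (· ∈ ν) := by
  induction m generalizing i c with
  | nil => rfl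
  | cons b t ih =>
    obtain ⟨k, hk⟩ := hev b List.mem_cons_self
    have hbb := hb b List.mem_cons_self
    have htail : ∀ x ∈ t, b + 4 ≤ x := fun x hx => (List.pairwise_cons.mp hm).1 x hx
    have ihres : ∀ f, f ≤ 1 → nuL (lamAux ν (i+1) (c+f) t) = (odds t.length).filter (· ∈ ν) :=
      fun f hf => ih (i+1) (c+f) (by omega)
        (fun x hx => hev x (List.mem_cons_of_mem b hx))
        (fun x hx => by have := htail x hx; omega)
        (List.pairwise_cons.mp hm).2
    show nuL (lamAux ν i c (b :: t)) = (odds (t.length + 1)).filter (· ∈ ν)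
    by_cases hmem : (2 * t.length + 1) ∈ ν
    · simp only [lamAux, if_pos hmem]
      have hodd : ¬ Even (b + 0 + 2*c - (2*i+1)) := by
        rw [Nat.not_even_iff]; omega
      simp only [nuL, if_neg hodd, lamAux_length, odds, List.filter_cons,
        decide_eq_true hmem]
      rw [ihres 0 (by omega)]
      simp
    · simp only [lamAux, if_neg hmem, muAux]
      have heven : Even (b + 1 + 2*c - (2*i+1)) := by
        rw [Nat.even_iff]; omega
      simp only [nuL, if_pos heven, lamAux_length, odds, List.filter_cons]
      rw [if_neg (by simp [hmem]), ihres 1 (by omega)]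

/-- GG conditions of lamAux output: elements ≥ 3 -/
lemma lamAux_mem (m : List ℕ) (i c : ℕ) (ν : Multiset ℕ) (hc : c ≤ i)
    (hev : ∀ x ∈ m, Even x) (hb : ∀ x ∈ m, 4*i + 4 ≤ x + 4*c) (hm : m.Pairwise r4) :
    ∀ x ∈ lamAux ν i c m, 3 ≤ x := by
  induction m generalizing i c with
  | nil => simp [lamAux]
  | cons b t ih =>
    have hbb := hb b List.mem_cons_self
    have htail : ∀ x ∈ t, b + 4 ≤ x := fun x hx => (List.pairwise_cons.mp hm).1 x hx
    intro x hx
    simp only [lamAux] at hx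
    rcases List.mem_cons.mp hx with rfl | hx'
    · split_ifs <;> omega
    · exact ih (i+1) (c + (if (2 * t.length + 1) ∈ ν then 0 else 1))
        (by split_ifs <;> omega)
        (fun y hy => hev y (List.mem_cons_of_mem b hy))
        (fun y hy => by have := htail y hy; split_ifs <;> omega)
        (List.pairwise_cons.mp hm).2 x hx'

lemma lamAux_chain (m : List ℕ) (i c : ℕ) (ν : Multiset ℕ) (hc : c ≤ i)
    (hev : ∀ x ∈ m, Even x) (hb : ∀ x ∈ m, 4*i + 4 ≤ x + 4*c) (hm : m.Pairwise r4) :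
    (lamAux ν i c m).Chain' r2 := by
  induction m generalizing i c with
  | nil => exact List.isChain_nil
  | cons b t ih =>
    have hbb := hb b List.mem_cons_self
    obtain ⟨k, hk⟩ := hev b List.mem_cons_self
    have htail : ∀ x ∈ t, b + 4 ≤ x := fun x hx => (List.pairwise_cons.mp hm).1 x hx
    cases t with
    | nil =>
      simp only [lamAux]
      exact List.isChain_singleton _
    | cons b' t' =>
      obtain ⟨k', hk'⟩ := hev b' (List.mem_cons_of_mem b List.mem_cons_self)
      have hbb' : b + 4 ≤ b' := htail b' List.mem_cons_self
      simp only [lamAux]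
      refine List.isChain_cons_cons.mpr ⟨?_, ?_⟩
      · constructor
        · split_ifs <;> omega
        · intro he1 he2
          rw [Nat.even_iff] at he1 he2
          split_ifs at he1 he2 ⊢ <;> omega
      · have := ih (i+1) (c + (if (2 * (b' :: t').length + 1) ∈ ν then 0 else 1))
          (by split_ifs <;> omega)
          (fun y hy => hev y (List.mem_cons_of_mem b hy))
          (fun y hy => by have := htail y hy; split_ifs <;> omega)
          (List.pairwise_cons.mp hm).2
        exact this



/-! ### assembly -/

lemma ggcond_symm : Symmetric GGCond := by
  intro a b ⟨h1, h2⟩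
  exact ⟨by rwa [abs_sub_comm], fun hb ha => by rw [abs_sub_comm]; exact h2 ha hb⟩

lemma abs4_symm : Symmetric (fun a b : ℕ => 4 ≤ |(a : ℤ) - (b : ℤ)|) := by
  intro a b h
  rwa [abs_sub_comm]

lemma sorted_pairwise_r2 {l : List ℕ} (hs : l.Pairwise (· ≤ ·)) (hp : l.Pairwise GGCond) :
    l.Pairwise r2 := by
  refine (List.Pairwise.and hs hp).imp ?_
  rintro a b ⟨hab, h1, h2⟩
  have habz : (a : ℤ) ≤ b := by exact_mod_cast hab
  rw [abs_sub_comm, abs_of_nonneg (by omega)] at h1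
  refine ⟨by omega, fun ha hb => ?_⟩
  have := h2 ha hb
  rw [abs_sub_comm, abs_of_nonneg (by omega)] at this
  omega

lemma sorted_pairwise_r4 {l : List ℕ} (hs : l.Pairwise (· ≤ ·))
    (hp : l.Pairwise (fun a b : ℕ => 4 ≤ |(a : ℤ) - (b : ℤ)|)) : l.Pairwise r4 := by
  refine (List.Pairwise.and hs hp).imp ?_
  rintro a b ⟨hab, h1⟩
  have habz : (a : ℤ) ≤ b := by exact_mod_cast hab
  rw [abs_sub_comm, abs_of_nonneg (by omega)] at h1
  unfold r4
  omega

lemma pairwise_r2_GG {l : List ℕ} (hp : l.Pairwise r2) : l.Pairwise GGCond := by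
  refine hp.imp ?_
  rintro a b ⟨h1, h2⟩
  have : (a : ℤ) + 2 ≤ b := by exact_mod_cast h1
  constructor
  · rw [abs_sub_comm, abs_of_nonneg (by omega)]; omega
  · intro ha hb
    have := h2 ha hb
    have : (a : ℤ) + 4 ≤ b := by exact_mod_cast this
    rw [abs_sub_comm, abs_of_nonneg (by omega)]; omega

lemma pairwise_r4_abs {l : List ℕ} (hp : l.Pairwise r4) :
    l.Pairwise (fun a b : ℕ => 4 ≤ |(a : ℤ) - (b : ℤ)|) := by
  refine hp.imp ?_
  intro a b h1
  have : (a : ℤ) + 4 ≤ b := by exact_mod_cast h1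
  rw [abs_sub_comm, abs_of_nonneg (by omega)]; omega

lemma pairwise_r2_sorted {l : List ℕ} (hp : l.Pairwise r2) : l.Pairwise (· ≤ ·) :=
  hp.imp (fun h => by have := h.1; omega)

lemma pairwise_r4_sorted {l : List ℕ} (hp : l.Pairwise r4) : l.Pairwise (· ≤ ·) :=
  hp.imp (fun h => by unfold r4 at h; omega)

lemma sort_coe (l : List ℕ) (hl : l.Pairwise (· ≤ ·)) :
    Multiset.sort (↑l : Multiset ℕ) (· ≤ ·) = l :=
  List.Perm.eq_of_pairwise' (Multiset.pairwise_sort _ _) hl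
    (by rw [← Multiset.coe_eq_coe, Multiset.sort_eq])

/-- filter of odds recovers ν -/
lemma filt_eq (n : ℕ) (ν : Multiset ℕ) (hnd : ν.Nodup) (hodd : ∀ x ∈ ν, Odd x)
    (hlt : ∀ x ∈ ν, x < 2 * n) :
    (↑((odds n).filter (· ∈ ν)) : Multiset ℕ) = ν := by
  rw [Multiset.Nodup.ext (Multiset.coe_nodup.mpr ((odds_nodup n).filter _)) hnd]
  intro a
  rw [Multiset.mem_coe, List.mem_filter]
  constructor
  · rintro ⟨_, h2⟩
    exact of_decide_eq_true h2
  · intro h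
    exact ⟨(odds_mem n a).mpr ⟨hodd a h, hlt a h⟩, decide_eq_true h⟩

def SetL (n : ℕ) : Set (Multiset ℕ) :=
  {π | IsPartitionOf n π ∧ (∀ x ∈ π, 3 ≤ x) ∧ Multiset.Pairwise GGCond π}

def SetR (n : ℕ) : Set (Multiset ℕ × Multiset ℕ) :=
  {σ | IsSignedPartitionOf n σ.1 σ.2 ∧
      (∀ x ∈ σ.1, Even x ∧ 4 ≤ x) ∧
      Multiset.Pairwise (fun a b => 4 ≤ |(a : ℤ) - (b : ℤ)|) σ.1 ∧
      (∀ x ∈ σ.2, Odd x) ∧ σ.2.Nodup ∧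
      (∀ x ∈ σ.2, (x : ℤ) ≤ 2 * (Multiset.card σ.1 : ℤ) - 1)}

def Fm (π : Multiset ℕ) : Multiset ℕ × Multiset ℕ :=
  (↑(muAux 0 0 (Multiset.sort π (· ≤ ·))), ↑(nuL (Multiset.sort π (· ≤ ·))))

def Gm (σ : Multiset ℕ × Multiset ℕ) : Multiset ℕ :=
  ↑(lamAux σ.2 0 0 (Multiset.sort σ.1 (· ≤ ·)))


lemma coeMZ (s : Multiset ℕ) :
    (do let a ← s; pure ((a:ℤ)) : Multiset ℤ) = Multiset.map Nat.cast s := by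
  show Multiset.bind s _ = _
  simp [Multiset.bind_singleton]

lemma relZ_symm : Symmetric (fun a b : ℤ => 4 ≤ |a - b|) := by
  intro a b h
  rwa [abs_sub_comm]

/-- the ℤ-level pairwise condition on a coerced sorted list -/
lemma pairwiseZ_iff (l : List ℕ) :
    Multiset.Pairwise (fun a b : ℤ => 4 ≤ |a - b|) (Multiset.map Nat.cast (↑l : Multiset ℕ))
      ↔ l.Pairwise (fun a b : ℕ => 4 ≤ |(a:ℤ) - (b:ℤ)|) := by
  rw [Multiset.map_coe, @Multiset.pairwise_coe_iff_pairwise _ _ ⟨fun _ _ h => relZ_symm h⟩ _, List.pairwise_map]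

lemma Fm_mem' {n : ℕ} (l : List ℕ) (hls : l.Pairwise (· ≤ ·)) (h : (↑l : Multiset ℕ) ∈ SetL n) :
    ((↑(muAux 0 0 l) : Multiset ℕ), (↑(nuL l) : Multiset ℕ)) ∈ SetR n := by
  obtain ⟨⟨hpos, hsum⟩, h3, hpw⟩ := h
  have hl3 : ∀ x ∈ l, 3 ≤ x := fun x hx => h3 x (Multiset.mem_coe.mpr hx)
  have hpl : l.Pairwise GGCond := (@Multiset.pairwise_coe_iff_pairwise _ _ ⟨fun _ _ h => ggcond_symm h⟩ _).mp hpw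
  have hr2 : l.Pairwise r2 := sorted_pairwise_r2 hls hpl
  have hμmem := muAux_mem 0 0 le_rfl l hl3
  have hμpw : (muAux 0 0 l).Pairwise r4 :=
    List.isChain_iff_pairwise.mp (muAux_chain 0 0 le_rfl l hr2.isChain)
  have hsum' : ((muAux 0 0 l).sum : ℤ) = (l.sum : ℤ) + ((nuL l).sum : ℤ) := by
    have := mu_sum l 0 0
    simpa using this
  have hlsum : l.sum = n := by rw [← Multiset.sum_coe l, hsum]
  refine ⟨⟨?_, ?_, ?_⟩, ?_, ?_, ?_, ?_, ?_⟩
  · intro x hx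
    have := hμmem x (Multiset.mem_coe.mp hx)
    omega
  · intro x hx
    obtain ⟨k, hk⟩ := nuL_mem_odd (Multiset.mem_coe.mp hx)
    omega
  · show ((↑(muAux 0 0 l) : Multiset ℕ).sum : ℤ) - ((↑(nuL l) : Multiset ℕ).sum : ℤ) = n
    rw [Multiset.sum_coe, Multiset.sum_coe, hsum', hlsum]
    ring
  · exact fun x hx => hμmem x (Multiset.mem_coe.mp hx)
  · show Multiset.Pairwise _ (do let a ← (↑(muAux 0 0 l) : Multiset ℕ); pure ((a:ℤ)))
    rw [coeMZ, pairwiseZ_iff]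
    exact pairwise_r4_abs hμpw
  · exact fun x hx => nuL_mem_odd (Multiset.mem_coe.mp hx)
  · exact Multiset.coe_nodup.mpr (nuL_nodup l)
  · intro x hx
    have hle := nuL_mem_le (Multiset.mem_coe.mp hx)
    show (x : ℤ) ≤ 2 * (Multiset.card (↑(muAux 0 0 l) : Multiset ℕ) : ℤ) - 1
    rw [Multiset.coe_card, muAux_length]
    omega

lemma Gm_mem' {n : ℕ} (m : List ℕ) (hms : m.Pairwise (· ≤ ·)) (ν : Multiset ℕ)
    (h : ((↑m : Multiset ℕ), ν) ∈ SetR n) :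
    (↑(lamAux ν 0 0 m) : Multiset ℕ) ∈ SetL n := by
  obtain ⟨⟨hpos1, hpos2, hsum⟩, hev4, hpw4, hodd, hnd, hbd⟩ := h
  have hevm : ∀ x ∈ m, Even x := fun x hx => (hev4 x (Multiset.mem_coe.mpr hx)).1
  have h4m : ∀ x ∈ m, 4 ≤ x := fun x hx => (hev4 x (Multiset.mem_coe.mpr hx)).2
  have hpw4' : m.Pairwise (fun a b : ℕ => 4 ≤ |(a:ℤ) - (b:ℤ)|) := by
    rw [← pairwiseZ_iff, ← coeMZ]
    exact hpw4
  have hr4 : m.Pairwise r4 := sorted_pairwise_r4 hms hpw4'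
  have hb4 : ∀ x ∈ m, 4*0 + 4 ≤ x + 4*0 := fun x hx => by have := h4m x hx; omega
  have hb2 : ∀ x ∈ m, 2*0 + 2 ≤ x + 2*0 := fun x hx => by have := h4m x hx; omega
  have hlt : ∀ x ∈ ν, x < 2 * m.length := by
    intro x hx
    have h1 := hbd x hx
    rw [Multiset.coe_card] at h1
    omega
  have hmem3 := lamAux_mem m 0 0 ν le_rfl hevm hb4 hr4
  have hpr2 : (lamAux ν 0 0 m).Pairwise r2 :=
    List.isChain_iff_pairwise.mp (lamAux_chain m 0 0 ν le_rfl hevm hb4 hr4)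
  have hμ : muAux 0 0 (lamAux ν 0 0 m) = m := mu_lam m 0 0 ν le_rfl hevm hb2 hr4
  have hνm : (↑(nuL (lamAux ν 0 0 m)) : Multiset ℕ) = ν := by
    rw [nu_lam m 0 0 ν le_rfl hevm hb2 hr4]
    exact filt_eq m.length ν hnd hodd hlt
  have hkey : ((muAux 0 0 (lamAux ν 0 0 m)).sum : ℤ)
      = ((lamAux ν 0 0 m).sum : ℤ) + ((nuL (lamAux ν 0 0 m)).sum : ℤ) := by
    have := mu_sum (lamAux ν 0 0 m) 0 0
    simpa using this
  have hsum2 : ((lamAux ν 0 0 m).sum : ℤ) = (n : ℤ) := by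
    rw [hμ] at hkey
    have h1 : (m.sum : ℤ) = ((↑m : Multiset ℕ).sum : ℤ) := by rw [Multiset.sum_coe]
    have h2 := congrArg Multiset.sum hνm
    rw [Multiset.sum_coe] at h2
    have h2' : ((nuL (lamAux ν 0 0 m)).sum : ℤ) = (ν.sum : ℤ) := by rw [h2]
    have hsum' : ((↑m : Multiset ℕ).sum : ℤ) - (ν.sum : ℤ) = n := hsum
    omega
  refine ⟨⟨?_, ?_⟩, ?_, ?_⟩
  · intro x hx
    have := hmem3 x (Multiset.mem_coe.mp hx)
    omega
  · show (↑(lamAux ν 0 0 m) : Multiset ℕ).sum = n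
    rw [Multiset.sum_coe]
    exact_mod_cast hsum2
  · exact fun x hx => hmem3 x (Multiset.mem_coe.mp hx)
  · exact (@Multiset.pairwise_coe_iff_pairwise _ _ ⟨fun _ _ h => ggcond_symm h⟩ _).mpr (pairwise_r2_GG hpr2)

lemma Fm_mem {n : ℕ} {π : Multiset ℕ} (h : π ∈ SetL n) : Fm π ∈ SetR n := by
  have h2 : (↑(Multiset.sort π (· ≤ ·)) : Multiset ℕ) ∈ SetL n := by
    rw [Multiset.sort_eq]; exact h
  exact Fm_mem' _ (Multiset.pairwise_sort _ _) h2

lemma Gm_mem {n : ℕ} {σ : Multiset ℕ × Multiset ℕ} (h : σ ∈ SetR n) : Gm σ ∈ SetL n := by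
  have h2 : ((↑(Multiset.sort σ.1 (· ≤ ·)) : Multiset ℕ), σ.2) ∈ SetR n := by
    rw [Multiset.sort_eq]; exact h
  exact Gm_mem' _ (Multiset.pairwise_sort _ _) σ.2 h2

lemma GF {n : ℕ} {π : Multiset ℕ} (h : π ∈ SetL n) : Gm (Fm π) = π := by
  obtain ⟨⟨hpos, hsum⟩, h3, hpw⟩ := h
  have hcoe : (↑(Multiset.sort π (· ≤ ·)) : Multiset ℕ) = π := Multiset.sort_eq _ _
  have hls : (Multiset.sort π (· ≤ ·)).Pairwise (· ≤ ·) := Multiset.pairwise_sort _ _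
  have hpl : (Multiset.sort π (· ≤ ·)).Pairwise GGCond :=
    (@Multiset.pairwise_coe_iff_pairwise _ _ ⟨fun _ _ h => ggcond_symm h⟩ _).mp (by rw [hcoe]; exact hpw)
  have hr2 := sorted_pairwise_r2 hls hpl
  have hμpw : (muAux 0 0 (Multiset.sort π (· ≤ ·))).Pairwise r4 :=
    List.isChain_iff_pairwise.mp (muAux_chain 0 0 le_rfl _ hr2.isChain)
  show (↑(lamAux (↑(nuL (Multiset.sort π (· ≤ ·)))) 0 0
      (Multiset.sort (↑(muAux 0 0 (Multiset.sort π (· ≤ ·))) : Multiset ℕ) (· ≤ ·))) : Multiset ℕ) = π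
  rw [sort_coe _ (pairwise_r4_sorted hμpw)]
  rw [lam_mu _ 0 0 le_rfl _ (fun a t hsuf => by
    rw [Multiset.mem_coe]
    exact nuL_mem_iff hsuf)]
  exact hcoe

lemma FG {n : ℕ} {σ : Multiset ℕ × Multiset ℕ} (h : σ ∈ SetR n) : Fm (Gm σ) = σ := by
  have h' : ((↑(Multiset.sort σ.1 (· ≤ ·)) : Multiset ℕ), σ.2) ∈ SetR n := by
    rw [Multiset.sort_eq]; exact h
  obtain ⟨⟨hpos1, hpos2, hsum⟩, hev4, hpw4, hodd, hnd, hbd⟩ := h'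
  have hcoe : (↑(Multiset.sort σ.1 (· ≤ ·)) : Multiset ℕ) = σ.1 := Multiset.sort_eq _ _
  have hms : (Multiset.sort σ.1 (· ≤ ·)).Pairwise (· ≤ ·) := Multiset.pairwise_sort _ _
  have hevm : ∀ x ∈ Multiset.sort σ.1 (· ≤ ·), Even x :=
    fun x hx => (hev4 x (Multiset.mem_coe.mpr hx)).1
  have h4m : ∀ x ∈ Multiset.sort σ.1 (· ≤ ·), 4 ≤ x :=
    fun x hx => (hev4 x (Multiset.mem_coe.mpr hx)).2
  have hpw4' : (Multiset.sort σ.1 (· ≤ ·)).Pairwise (fun a b : ℕ => 4 ≤ |(a:ℤ) - (b:ℤ)|) := by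
    rw [← pairwiseZ_iff, ← coeMZ]
    exact hpw4
  have hr4 := sorted_pairwise_r4 hms hpw4'
  have hb4 : ∀ x ∈ Multiset.sort σ.1 (· ≤ ·), 4*0 + 4 ≤ x + 4*0 :=
    fun x hx => by have := h4m x hx; omega
  have hb2 : ∀ x ∈ Multiset.sort σ.1 (· ≤ ·), 2*0 + 2 ≤ x + 2*0 :=
    fun x hx => by have := h4m x hx; omega
  have hlt : ∀ x ∈ σ.2, x < 2 * (Multiset.sort σ.1 (· ≤ ·)).length := by
    intro x hx
    have h1 := hbd x hx
    rw [Multiset.coe_card] at h1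
    omega
  have hpr2 : (lamAux σ.2 0 0 (Multiset.sort σ.1 (· ≤ ·))).Pairwise r2 :=
    List.isChain_iff_pairwise.mp (lamAux_chain _ 0 0 σ.2 le_rfl hevm hb4 hr4)
  show ((↑(muAux 0 0 (Multiset.sort
        (↑(lamAux σ.2 0 0 (Multiset.sort σ.1 (· ≤ ·))) : Multiset ℕ) (· ≤ ·))) : Multiset ℕ),
      (↑(nuL (Multiset.sort
        (↑(lamAux σ.2 0 0 (Multiset.sort σ.1 (· ≤ ·))) : Multiset ℕ) (· ≤ ·))) : Multiset ℕ)) = σ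
  rw [sort_coe _ (pairwise_r2_sorted hpr2)]
  rw [mu_lam _ 0 0 σ.2 le_rfl hevm hb2 hr4, nu_lam _ 0 0 σ.2 le_rfl hevm hb2 hr4]
  rw [filt_eq _ σ.2 hnd hodd hlt, hcoe]

theorem main (n : ℕ) : (SetL n).ncard = (SetR n).ncard := by
  rw [← Nat.card_coe_set_eq, ← Nat.card_coe_set_eq]
  exact Nat.card_congr
    ⟨fun x => ⟨Fm x.1, Fm_mem x.2⟩, fun y => ⟨Gm y.1, Gm_mem y.2⟩,
      fun x => Subtype.ext (GF x.2), fun y => Subtype.ext (FG y.2)⟩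

end GGaux

/-- Theorem 9, second equality: GG₂(n) = GG'₋₂(n). -/
theorem gollnitz_gordon_second_signed' (n : ℕ) :
    {π : Multiset ℕ | IsPartitionOf n π ∧ (∀ x ∈ π, 3 ≤ x) ∧
      Multiset.Pairwise GGCond π}.ncard =
    {σ : Multiset ℕ × Multiset ℕ | IsSignedPartitionOf n σ.1 σ.2 ∧
      (∀ x ∈ σ.1, Even x ∧ 4 ≤ x) ∧
      Multiset.Pairwise (fun a b => 4 ≤ |(a : ℤ) - (b : ℤ)|) σ.1 ∧
      (∀ x ∈ σ.2, Odd x) ∧ σ.2.Nodup ∧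
      (∀ x ∈ σ.2, (x : ℤ) ≤ 2 * (Multiset.card σ.1 : ℤ) - 1)}.ncard := by
  exact GGaux.main n
end

section
/- For every nonnegative integer n, GG₁(n) − GG₂(n) equals the number of signed partitions of n in which the positive parts are even, every positive part is at least 2ℓ⁺, the number 2ℓ⁺ occurs as a positive part (where ℓ⁺ ≥ 1 is the number of positive parts), and the negative part sizes are odd, distinct, and each less than 2ℓ⁺. Here GG₁(n) is the number of partitions of n in which any two parts differ by at least 2, and by at least 4 if both parts are even, and GG₂(n) is the number of such partitions whose parts are all at least 3. -/
namespace GGB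

def up (x : ℕ) : ℕ := x + x % 2
def R (x y : ℕ) : Prop := up x + 4 ≤ up y + 2 * (x % 2)

lemma R_trans : Transitive R := by intro x y z hxy hyz; unfold R up at *; omega

instance : IsTrans ℕ R := ⟨R_trans⟩

lemma R_gg {x y : ℕ} (h : R x y) : GGCond x y := by
  unfold R up at h
  have habs : |(x : ℤ) - (y : ℤ)| = (y : ℤ) - x := by
    rw [abs_sub_comm, abs_of_nonneg]; omega
  constructor
  · omega
  · intro hx hy
    rw [Nat.even_iff] at hx hy
    omega

lemma gg_R {x y : ℕ} (h : GGCond x y) (hxy : x ≤ y) : R x y := by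
  obtain ⟨h1, h2⟩ := h
  have habs : |(x : ℤ) - (y : ℤ)| = (y : ℤ) - x := by
    rw [abs_sub_comm, abs_of_nonneg]; omega
  rw [habs] at h1 h2
  unfold R up
  rcases Nat.even_or_odd x with hx | hx <;> rcases Nat.even_or_odd y with hy | hy
  · have := h2 hx hy; rw [Nat.even_iff] at hx hy; omega
  · rw [Nat.even_iff] at hx; rw [Nat.odd_iff] at hy; omega
  · rw [Nat.odd_iff] at hx; rw [Nat.even_iff] at hy; omega
  · rw [Nat.odd_iff] at hx hy; omega

lemma R_lt {x y : ℕ} (h : R x y) : x + 2 ≤ y := by unfold R up at h; omega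

lemma gg_symm : ∀ {x y : ℕ}, GGCond x y → GGCond y x := by
  intro x y ⟨h1, h2⟩
  rw [abs_sub_comm] at h1 h2
  exact ⟨h1, fun a b => h2 b a⟩

/-! forward map -/

def bnxt (b p a : ℕ) : ℕ := b + (up a - (up p + 4 - 2 * (p % 2)))

def bgo : ℕ → ℕ → List ℕ → List ℕ
  | _, _, [] => []
  | b, p, a :: t => bnxt b p a :: bgo (bnxt b p a) a t

def Fb : List ℕ → List ℕ
  | [] => []
  | a :: t => 2 * (t.length + 1) :: bgo (2 * (t.length + 1)) a t

def dgo : List ℕ → List ℕ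
  | [] => []
  | a :: t => if a % 2 = 0 then dgo t else (2 * t.length + 1) :: dgo t

/-! backward map -/

def nxt (D : Multiset ℕ) (p bp b tl : ℕ) : ℕ :=
  if (2 * tl + 1) ∈ D then up p + (b - bp) + 4 - 2 * (p % 2) - 1
  else up p + (b - bp) + 4 - 2 * (p % 2)

def ggo (D : Multiset ℕ) : ℕ → ℕ → List ℕ → List ℕ
  | _, _, [] => []
  | p, bp, b :: t => nxt D p bp b t.length :: ggo D (nxt D p bp b t.length) b t

def Gl (D : Multiset ℕ) : List ℕ → List ℕ
  | [] => []
  | b :: t => (if (2 * t.length + 1) ∈ D then 1 else 2) ::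
      ggo D (if (2 * t.length + 1) ∈ D then 1 else 2) b t

def pOK (D : Multiset ℕ) : List ℕ → Prop
  | [] => True
  | a :: t => ((2 * t.length + 1) ∈ D ↔ a % 2 = 1) ∧ pOK D t

/-! basic lemmas -/

lemma bgo_length (b p : ℕ) (t : List ℕ) : (bgo b p t).length = t.length := by
  induction t generalizing b p with
  | nil => rfl
  | cons a t ih => simp [bgo, ih]

lemma ggo_length (D : Multiset ℕ) (p bp : ℕ) (t : List ℕ) :
    (ggo D p bp t).length = t.length := by
  induction t generalizing p bp with
  | nil => rfl
  | cons a t ih => simp [ggo, ih]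

lemma bgo_chain_le {p : ℕ} {t : List ℕ} (b : ℕ) :
    List.Chain (· ≤ ·) b (bgo b p t) := by
  induction t generalizing b p with
  | nil => simp [bgo, List.Chain]
  | cons a t ih => exact List.Chain.cons (Nat.le_add_right _ _) (ih _)

lemma chain_le_mem {b : ℕ} {m : List ℕ} (h : List.Chain (· ≤ ·) b m) :
    ∀ x ∈ m, b ≤ x :=
  fun _ hx => List.rel_of_pairwise_cons (List.isChain_iff_pairwise.mp h) hx

lemma bgo_even {p : ℕ} {t : List ℕ} {b : ℕ} (hch : List.Chain R p t) (hb : b % 2 = 0) :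
    ∀ x ∈ bgo b p t, x % 2 = 0 := by
  induction t generalizing b p with
  | nil => simp [bgo]
  | cons a t ih =>
    simp only [List.Chain, List.chain_cons] at hch
    have hR := hch.1
    have hb' : bnxt b p a % 2 = 0 := by unfold bnxt R up at *; omega
    intro x hx
    rcases List.mem_cons.mp hx with h | h
    · omega
    · exact ih hch.2 hb' x h

lemma chain_R_lt {p : ℕ} {t : List ℕ} (h : List.Chain R p t) : ∀ x ∈ t, p + 2 ≤ x := by
  induction t generalizing p with
  | nil => simp
  | cons a t ih =>
    simp only [List.Chain, List.chain_cons] at h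
    intro x hx
    have h1 : p + 2 ≤ a := by have := h.1; unfold R up at this; omega
    rcases List.mem_cons.mp hx with rfl | hx
    · exact h1
    · have := ih h.2 x hx; omega

lemma dgo_mem {t : List ℕ} : ∀ x ∈ dgo t, x % 2 = 1 ∧ x < 2 * t.length + 1 := by
  induction t with
  | nil => simp [dgo]
  | cons a t ih =>
    intro x hx
    unfold dgo at hx
    split at hx
    · have := ih x hx; simp at *; omega
    · rcases List.mem_cons.mp hx with rfl | hx
      · simp
      · have := ih x hx; simp at *; omega

lemma dgo_sorted (t : List ℕ) : List.Pairwise (· > ·) (dgo t) := by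
  induction t with
  | nil => simp [dgo]
  | cons a t ih =>
    unfold dgo
    split
    · exact ih
    · exact List.pairwise_cons.mpr ⟨fun b hb => (dgo_mem b hb).2, ih⟩

lemma dgo_nodup (t : List ℕ) : (dgo t).Nodup := (dgo_sorted t).nodup

lemma map_up_sum (t : List ℕ) :
    (t.map up).sum = t.sum + t.countP (fun x => x % 2 = 1) := by
  induction t with
  | nil => simp
  | cons a t ih =>
    rw [List.map_cons, List.sum_cons, List.sum_cons, List.countP_cons, ih]
    unfold up
    rcases Nat.mod_two_eq_zero_or_one a with h | h <;> simp [h] <;> omega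

lemma bgo_sum {p : ℕ} {t : List ℕ} (b : ℕ) (hch : List.Chain R p t) :
    ((bgo b p t).sum : ℤ) = t.length * b + ((t.map up).sum : ℤ)
      - t.length * up p - 2 * t.length * (t.length + 1)
      + 2 * t.length * ((p % 2 : ℕ) : ℤ) + ((dgo t).sum : ℤ)
      - t.countP (fun x => x % 2 = 1) := by
  induction t generalizing b p with
  | nil => simp [bgo, dgo]
  | cons a t ih =>
    simp only [List.Chain, List.chain_cons] at hch
    have hR := hch.1
    have hδ : (bnxt b p a : ℤ) = b + up a - up p - 4 + 2 * ((p % 2 : ℕ) : ℤ) := by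
      unfold bnxt R up at *; push_cast; omega
    have hIH := ih (bnxt b p a) hch.2
    have hcnt : ((a :: t).countP (fun x => x % 2 = 1) : ℤ)
        = t.countP (fun x => x % 2 = 1) + ((a % 2 : ℕ) : ℤ) := by
      rw [List.countP_cons]
      rcases Nat.mod_two_eq_zero_or_one a with h | h <;> simp [h]
    rcases Nat.mod_two_eq_zero_or_one a with ha | ha
    · have hd : dgo (a :: t) = dgo t := by simp only [dgo, ha, if_pos]
      simp only [bgo, List.sum_cons, List.map_cons, List.length_cons, hd]
      push_cast [hcnt, ha] at *
      linear_combination hIH + (1 + (t.length : ℤ)) * hδ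
    · have hd : dgo (a :: t) = (2 * t.length + 1) :: dgo t := by
        simp only [dgo, ha]; simp
      simp only [bgo, List.sum_cons, List.map_cons, List.length_cons, hd]
      push_cast [hcnt, ha] at *
      linear_combination hIH + (1 + (t.length : ℤ)) * hδ

lemma Fb_sum {p : ℕ} {t : List ℕ} (hp : up p = 2) (hch : List.Chain R p t) :
    ((Fb (p :: t)).sum : ℤ) = ((p :: t).sum : ℤ) + ((dgo (p :: t)).sum : ℤ) := by
  have hs := bgo_sum (2 * (t.length + 1)) hch
  have hmu : ((t.map up).sum : ℤ) = (t.sum : ℤ) + (t.countP (fun x => x % 2 = 1) : ℤ) := by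
    rw [map_up_sum]; push_cast; ring
  have hup : (up p : ℤ) = 2 := by rw [hp]; rfl
  have hpp : ((p : ℤ)) + ((p % 2 : ℕ) : ℤ) = 2 := by unfold up at hp; push_cast; omega
  rcases Nat.mod_two_eq_zero_or_one p with hq | hq
  · have hd : dgo (p :: t) = dgo t := by simp only [dgo, hq, if_pos]
    simp only [Fb, List.sum_cons, hd]
    push_cast [hq] at *
    linear_combination hs + hmu - (t.length : ℤ) * hup - hpp
  · have hd : dgo (p :: t) = (2 * t.length + 1) :: dgo t := by
      simp only [dgo, hq]; simp
    simp only [Fb, List.sum_cons, hd]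
    push_cast [hq] at *
    linear_combination hs + hmu - (t.length : ℤ) * hup - hpp

/-! backward lemmas -/

lemma nxt_parity {D : Multiset ℕ} {p bp b tl : ℕ} (hbp : bp % 2 = 0) (hb : b % 2 = 0)
    (hle : bp ≤ b) : (nxt D p bp b tl) % 2 = if (2 * tl + 1) ∈ D then 1 else 0 := by
  unfold nxt up; split <;> omega

lemma nxt_R {D : Multiset ℕ} {p bp b tl : ℕ} (hbp : bp % 2 = 0) (hb : b % 2 = 0)
    (hle : bp ≤ b) : R p (nxt D p bp b tl) := by
  unfold nxt R up; split <;> omega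

lemma ggo_chain {D : Multiset ℕ} {t : List ℕ} {p bp : ℕ}
    (hs : List.Chain (· ≤ ·) bp t) (he : ∀ x ∈ t, x % 2 = 0) (hbp : bp % 2 = 0) :
    List.Chain R p (ggo D p bp t) := by
  induction t generalizing p bp with
  | nil => simp [ggo, List.Chain]
  | cons b t ih =>
    simp only [List.Chain, List.chain_cons] at hs
    refine List.Chain.cons (nxt_R hbp (he b (by simp)) hs.1) ?_
    exact ih hs.2 (fun x hx => he x (by simp [hx])) (he b (by simp))

lemma bgo_ggo {D : Multiset ℕ} {t : List ℕ} {p bp : ℕ}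
    (hs : List.Chain (· ≤ ·) bp t) (he : ∀ x ∈ t, x % 2 = 0) (hbp : bp % 2 = 0) :
    bgo bp p (ggo D p bp t) = t := by
  induction t generalizing p bp with
  | nil => simp [ggo, bgo]
  | cons b t ih =>
    simp only [List.Chain, List.chain_cons] at hs
    have hb := he b (by simp)
    have h1 : bnxt bp p (nxt D p bp b t.length) = b := by
      unfold bnxt nxt up at *
      split <;> omega
    simp only [ggo, bgo, h1]
    rw [ih hs.2 (fun x hx => he x (by simp [hx])) hb]

lemma ggo_dgo {D : Multiset ℕ} {t : List ℕ} {p b : ℕ}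
    (hpok : pOK D t) (hch : List.Chain R p t) :
    ggo D p b (bgo b p t) = t := by
  induction t generalizing p b with
  | nil => simp [ggo, bgo]
  | cons a t ih =>
    simp only [List.Chain, List.chain_cons] at hch
    obtain ⟨hmem, hpok'⟩ := hpok
    have hlen : (bgo (bnxt b p a) a t).length = t.length := bgo_length _ _ _
    have h1 : nxt D p b (bnxt b p a) (bgo (bnxt b p a) a t).length = a := by
      rw [hlen]
      unfold nxt bnxt R up at *
      rcases Nat.mod_two_eq_zero_or_one a with ha | ha
      · have : ¬ ((2 * t.length + 1) ∈ D) := by rw [hmem]; omega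
        rw [if_neg this]; omega
      · rw [if_pos (hmem.mpr ha)]; omega
    simp only [bgo, ggo, h1]
    rw [ih hpok' hch.2]

lemma pOK_cons {D : Multiset ℕ} {t : List ℕ} {x : ℕ} (h : pOK D t)
    (hx : 2 * t.length ≤ x) : pOK (x ::ₘ D) t := by
  induction t with
  | nil => trivial
  | cons a t ih =>
    obtain ⟨h1, h2⟩ := h
    have hx' : 2 * t.length + 2 ≤ x := by simp at hx; omega
    refine ⟨?_, ih h2 (by omega)⟩
    rw [Multiset.mem_cons]
    constructor
    · rintro (h | h)
      · omega
      · exact h1.mp h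
    · intro h; exact Or.inr (h1.mpr h)

lemma pOK_dgo (t : List ℕ) : pOK ↑(dgo t) t := by
  induction t with
  | nil => trivial
  | cons a t ih =>
    constructor
    · unfold dgo
      rcases Nat.mod_two_eq_zero_or_one a with ha | ha
      · simp [ha]
        intro h
        have := (dgo_mem _ h).2; omega
      · simp [ha]
    · unfold dgo
      split
      · exact ih
      · exact pOK_cons ih (by omega)

lemma pOK_dgo' (p : ℕ) (t : List ℕ) : pOK ↑(dgo (p :: t)) t := by
  unfold dgo
  split
  · exact pOK_dgo t
  · exact pOK_cons (pOK_dgo t) (by omega)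

lemma dgo_ggo_mem {D : Multiset ℕ} {t : List ℕ} {p bp : ℕ}
    (hs : List.Chain (· ≤ ·) bp t) (he : ∀ x ∈ t, x % 2 = 0) (hbp : bp % 2 = 0)
    (hp : ((2 * t.length + 1) ∈ D ↔ p % 2 = 1)) :
    ∀ x, x ∈ dgo (p :: ggo D p bp t) ↔ (x ∈ D ∧ x % 2 = 1 ∧ x ≤ 2 * t.length + 1) := by
  induction t generalizing p bp with
  | nil =>
    intro x
    norm_num at hp ⊢
    rcases Nat.mod_two_eq_zero_or_one p with hq | hq
    · have h0 : dgo (p :: ggo D p bp []) = [] := by simp [ggo, dgo, hq]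
      rw [h0]
      simp only [List.not_mem_nil, false_iff]
      rintro ⟨h1, h2, h3⟩
      have hx1 : x = 1 := by omega
      subst hx1
      have := hp.mp h1; omega
    · have h0 : dgo (p :: ggo D p bp []) = [1] := by simp [ggo, dgo, hq]
      rw [h0]
      simp only [List.mem_singleton]
      constructor
      · rintro rfl; exact ⟨hp.mpr hq, by omega, le_refl 1⟩
      · rintro ⟨h1, h2, h3⟩; omega
  | cons b t ih =>
    intro x
    simp only [List.Chain, List.chain_cons] at hs
    have hb : b % 2 = 0 := he b (by simp)
    have ha : (nxt D p bp b t.length) % 2 = if (2 * t.length + 1) ∈ D then 1 else 0 :=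
      nxt_parity hbp hb hs.1
    have hpa : ((2 * t.length + 1) ∈ D ↔ (nxt D p bp b t.length) % 2 = 1) := by
      split at ha <;> simp_all
    have hIH := ih hs.2 (fun y hy => he y (by simp [hy])) hb hpa x
    show x ∈ dgo (p :: nxt D p bp b t.length :: ggo D (nxt D p bp b t.length) b t) ↔ _
    rw [show dgo (p :: nxt D p bp b t.length :: ggo D (nxt D p bp b t.length) b t)
        = if p % 2 = 0 then dgo (nxt D p bp b t.length :: ggo D (nxt D p bp b t.length) b t)
          else (2 * (nxt D p bp b t.length :: ggo D (nxt D p bp b t.length) b t).length + 1)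
            :: dgo (nxt D p bp b t.length :: ggo D (nxt D p bp b t.length) b t) from rfl]
    have hlen : (nxt D p bp b t.length :: ggo D (nxt D p bp b t.length) b t).length
        = t.length + 1 := by simp [ggo_length]
    rw [hlen]
    rcases Nat.mod_two_eq_zero_or_one p with hq | hq
    · rw [if_pos hq, hIH]
      simp only [List.length_cons]
      constructor
      · rintro ⟨h1, h2, h3⟩; exact ⟨h1, h2, by omega⟩
      · rintro ⟨h1, h2, h3⟩
        refine ⟨h1, h2, ?_⟩
        rcases Nat.lt_or_ge x (2 * t.length + 2) with h | h
        · omega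
        · exfalso
          have hx23 : x = 2 * t.length + 3 ∨ x = 2 * t.length + 2 := by omega
          rcases hx23 with rfl | rfl
          · simp only [List.length_cons] at hp
            have := hp.mp h1; omega
          · omega
    · rw [if_neg (by omega)]
      simp only [List.length_cons] at hp ⊢
      rw [List.mem_cons, hIH]
      constructor
      · rintro (rfl | ⟨h1, h2, h3⟩)
        · exact ⟨hp.mpr hq, by omega, by omega⟩
        · exact ⟨h1, h2, by omega⟩
      · rintro ⟨h1, h2, h3⟩
        rcases Nat.lt_or_ge x (2 * t.length + 2) with h | h
        · exact Or.inr ⟨h1, h2, by omega⟩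
        · left; omega

/-! wrappers and structural lemmas -/

def Fm (m : Multiset ℕ) : Multiset ℕ × Multiset ℕ :=
  (↑(Fb (m.sort (· ≤ ·))), ↑(dgo (m.sort (· ≤ ·))))

def Gm (σ : Multiset ℕ × Multiset ℕ) : Multiset ℕ := ↑(Gl σ.2 (σ.1.sort (· ≤ ·)))

lemma chain_to_chain' {p : ℕ} {t : List ℕ} (h : List.Chain R p t) :
    List.Chain' R (p :: t) := h

lemma chain_le_to_chain' {p : ℕ} {t : List ℕ} (h : List.Chain (· ≤ ·) p t) :
    List.Chain' (· ≤ ·) (p :: t) := h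

lemma sort_coe_of_sorted {l : List ℕ} (h : List.Pairwise (· ≤ ·) l) :
    (↑l : Multiset ℕ).sort (· ≤ ·) = l := by
  refine List.Perm.eq_of_pairwise' (Multiset.pairwise_sort _ _) h ?_
  rw [← Multiset.coe_eq_coe, Multiset.sort_eq]

lemma chainR_sorted {p : ℕ} {t : List ℕ} (h : List.Chain R p t) :
    List.Pairwise (· ≤ ·) (p :: t) := by
  refine List.Pairwise.imp ?_ (List.isChain_iff_pairwise.mp (chain_to_chain' h))
  intro a b hr
  have := R_lt hr; omega

lemma chainR_pairwise {p : ℕ} {t : List ℕ} (h : List.Chain R p t) :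
    List.Pairwise GGCond (p :: t) :=
  List.Pairwise.imp (fun hr => R_gg hr) (List.isChain_iff_pairwise.mp (chain_to_chain' h))

lemma A_struct {n : ℕ} {π : Multiset ℕ} (h1 : IsPartitionOf n π)
    (h2 : Multiset.Pairwise GGCond π) (h3 : ∃ x ∈ π, x < 3) :
    ∃ p t, π.sort (· ≤ ·) = p :: t ∧ up p = 2 ∧ List.Chain R p t ∧ (p :: t).sum = n := by
  have hcoe : ↑(π.sort (· ≤ ·)) = π := Multiset.sort_eq _ _
  have hsorted : List.Pairwise (· ≤ ·) (π.sort (· ≤ ·)) := Multiset.pairwise_sort _ _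
  have hpw : (π.sort (· ≤ ·)).Pairwise GGCond := by
    obtain ⟨l', hl', hp'⟩ := h2
    refine hp'.perm ?_ (fun h => gg_symm h)
    rw [← Multiset.coe_eq_coe, ← hl', hcoe]
  have hchain' : List.Chain' R (π.sort (· ≤ ·)) := by
    refine (List.Pairwise.isChain (hsorted.and hpw)).imp ?_
    rintro a b ⟨hle, hgg⟩
    exact gg_R hgg hle
  obtain ⟨x, hx, hx3⟩ := h3
  have hne : π.sort (· ≤ ·) ≠ [] := by
    intro h
    rw [← hcoe, h] at hx
    simp at hx
  obtain ⟨p, t, hl⟩ := List.exists_cons_of_ne_nil hne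
  have hchain : List.Chain R p t := by rw [hl] at hchain'; exact hchain'
  refine ⟨p, t, hl, ?_, hchain, ?_⟩
  · have hp1 : 0 < p := by
      apply h1.1
      rw [← hcoe, hl]
      simp
    have hpx : p ≤ x := by
      rw [← hcoe, Multiset.mem_coe, hl, List.mem_cons] at hx
      rcases hx with rfl | hx
      · exact le_refl _
      · rw [hl] at hsorted
        exact List.rel_of_pairwise_cons hsorted hx
    unfold up; omega
  · have hsum : (π.sort (· ≤ ·)).sum = π.sum := by
      conv_rhs => rw [← hcoe]
      rw [Multiset.sum_coe]
    rw [← hl, hsum, h1.2]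

lemma T_struct {σ : Multiset ℕ × Multiset ℕ} (hcard : 1 ≤ Multiset.card σ.1)
    (hall : ∀ x ∈ σ.1, Even x ∧ 2 * Multiset.card σ.1 ≤ x)
    (hmem : 2 * Multiset.card σ.1 ∈ σ.1) :
    ∃ t, σ.1.sort (· ≤ ·) = (2 * (t.length + 1)) :: t ∧
      List.Chain (· ≤ ·) (2 * (t.length + 1)) t ∧ (∀ x ∈ t, x % 2 = 0) ∧
      t.length + 1 = Multiset.card σ.1 := by
  have hcoe : ↑(σ.1.sort (· ≤ ·)) = σ.1 := Multiset.sort_eq _ _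
  have hsorted : List.Pairwise (· ≤ ·) (σ.1.sort (· ≤ ·)) := Multiset.pairwise_sort _ _
  have hlen : (σ.1.sort (· ≤ ·)).length = Multiset.card σ.1 := Multiset.length_sort _
  have hne : σ.1.sort (· ≤ ·) ≠ [] := by
    intro h
    rw [h] at hlen
    simp at hlen
    omega
  obtain ⟨b0, t, hl⟩ := List.exists_cons_of_ne_nil hne
  have hlt : t.length + 1 = Multiset.card σ.1 := by rw [← hlen, hl]; simp
  have hb0mem : b0 ∈ σ.1 := by rw [← hcoe, hl]; simp
  have hchain : List.Chain (· ≤ ·) b0 t := by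
    rw [hl] at hsorted
    exact List.isChain_iff_pairwise.mpr hsorted
  have hb0 : b0 = 2 * Multiset.card σ.1 := by
    have h1 : 2 * Multiset.card σ.1 ≤ b0 := (hall b0 hb0mem).2
    have h2 : b0 ≤ 2 * Multiset.card σ.1 := by
      have hm : 2 * Multiset.card σ.1 ∈ (σ.1.sort (· ≤ ·)) := by
        rw [← Multiset.mem_coe, hcoe]; exact hmem
      rw [hl, List.mem_cons] at hm
      rcases hm with h | h
      · omega
      · exact chain_le_mem hchain _ h
    omega
  refine ⟨t, ?_, ?_, ?_, hlt⟩
  · rw [hl, hb0, hlt]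
  · rw [hlt, ← hb0]; exact hchain
  · intro x hx
    have hxm : x ∈ σ.1 := by rw [← hcoe, hl]; simp [hx]
    have := (hall x hxm).1
    rwa [Nat.even_iff] at this

lemma Fb_cons (a : ℕ) (t : List ℕ) :
    Fb (a :: t) = 2 * (t.length + 1) :: bgo (2 * (t.length + 1)) a t := rfl

lemma Gl_cons (D : Multiset ℕ) (b : ℕ) (t : List ℕ) :
    Gl D (b :: t) = (if (2 * t.length + 1) ∈ D then 1 else 2) ::
      ggo D (if (2 * t.length + 1) ∈ D then 1 else 2) b t := rfl

lemma Fm_mem {n : ℕ} {π : Multiset ℕ} (h1 : IsPartitionOf n π)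
    (h2 : Multiset.Pairwise GGCond π) (h3 : ∃ x ∈ π, x < 3) :
    IsSignedPartitionOf n (Fm π).1 (Fm π).2 ∧ 1 ≤ Multiset.card (Fm π).1 ∧
    (∀ x ∈ (Fm π).1, Even x ∧ 2 * Multiset.card (Fm π).1 ≤ x) ∧
    (2 * Multiset.card (Fm π).1) ∈ (Fm π).1 ∧
    (∀ x ∈ (Fm π).2, Odd x) ∧ (Fm π).2.Nodup ∧
    (∀ x ∈ (Fm π).2, x < 2 * Multiset.card (Fm π).1) := by
  obtain ⟨p, t, hl, hup, hch, hsum⟩ := A_struct h1 h2 h3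
  have hF1 : (Fm π).1 = ↑(Fb (p :: t)) := by simp [Fm, hl]
  have hF2 : (Fm π).2 = ↑(dgo (p :: t)) := by simp [Fm, hl]
  have hcard : Multiset.card (Fm π).1 = t.length + 1 := by
    rw [hF1, Multiset.coe_card, Fb_cons, List.length_cons, bgo_length]
  have hmem1 : ∀ x ∈ Fb (p :: t), x % 2 = 0 ∧ 2 * (t.length + 1) ≤ x := by
    intro x hx
    rw [Fb_cons, List.mem_cons] at hx
    rcases hx with rfl | hx
    · exact ⟨by omega, le_refl _⟩
    · exact ⟨bgo_even hch (by omega) x hx, chain_le_mem (bgo_chain_le _) x hx⟩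
  have hmemD : ∀ x ∈ dgo (p :: t), x % 2 = 1 ∧ x < 2 * (t.length + 1) := by
    intro x hx
    have := dgo_mem x hx
    simp only [List.length_cons] at this
    omega
  refine ⟨⟨?_, ?_, ?_⟩, ?_, ?_, ?_, ?_, ?_, ?_⟩
  · intro x hx
    rw [hF1, Multiset.mem_coe] at hx
    have := hmem1 x hx; omega
  · intro x hx
    rw [hF2, Multiset.mem_coe] at hx
    have := hmemD x hx; omega
  · rw [hF1, hF2, Multiset.sum_coe, Multiset.sum_coe]
    have := Fb_sum hup hch
    rw [hsum] at this
    omega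
  · omega
  · intro x hx
    rw [hF1, Multiset.mem_coe] at hx
    have := hmem1 x hx
    rw [hcard]
    exact ⟨Nat.even_iff.mpr this.1, this.2⟩
  · rw [hcard, hF1, Multiset.mem_coe, Fb_cons]
    exact List.mem_cons_self
  · intro x hx
    rw [hF2, Multiset.mem_coe] at hx
    exact Nat.odd_iff.mpr (hmemD x hx).1
  · rw [hF2]
    exact Multiset.coe_nodup.mpr (dgo_nodup _)
  · intro x hx
    rw [hF2, Multiset.mem_coe] at hx
    rw [hcard]
    exact (hmemD x hx).2

lemma Gm_Fm {n : ℕ} {π : Multiset ℕ} (h1 : IsPartitionOf n π)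
    (h2 : Multiset.Pairwise GGCond π) (h3 : ∃ x ∈ π, x < 3) :
    Gm (Fm π) = π := by
  obtain ⟨p, t, hl, hup, hch, hsum⟩ := A_struct h1 h2 h3
  have hF1 : (Fm π).1 = ↑(Fb (p :: t)) := by simp [Fm, hl]
  have hF2 : (Fm π).2 = ↑(dgo (p :: t)) := by simp [Fm, hl]
  have hsorted : List.Pairwise (· ≤ ·) (Fb (p :: t)) := by
    rw [Fb_cons]
    exact List.isChain_iff_pairwise.mp (chain_le_to_chain' (bgo_chain_le _))
  have hsort : ((Fm π).1).sort (· ≤ ·) = Fb (p :: t) := by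
    rw [hF1]
    exact sort_coe_of_sorted hsorted
  have hmemD : ((2 * t.length + 1) ∈ (↑(dgo (p :: t)) : Multiset ℕ)) ↔ p % 2 = 1 := by
    rw [Multiset.mem_coe]
    rcases Nat.mod_two_eq_zero_or_one p with hq | hq
    · have hd : dgo (p :: t) = dgo t := by simp only [dgo, hq, if_pos]
      rw [hd]
      constructor
      · intro h; have := (dgo_mem _ h).2; omega
      · omega
    · have hd : dgo (p :: t) = (2 * t.length + 1) :: dgo t := by
        simp only [dgo, hq]; simp
      rw [hd]
      simp [hq]
  have hGl : Gl (↑(dgo (p :: t))) (Fb (p :: t)) = p :: t := by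
    rw [Fb_cons, Gl_cons, bgo_length]
    have hhead : (if (2 * t.length + 1) ∈ (↑(dgo (p :: t)) : Multiset ℕ) then 1 else 2) = p := by
      rcases Nat.mod_two_eq_zero_or_one p with hq | hq
      · rw [if_neg (fun h => by have := hmemD.mp h; omega)]
        unfold up at hup; omega
      · rw [if_pos (hmemD.mpr hq)]
        unfold up at hup; omega
    rw [hhead]
    congr 1
    exact ggo_dgo (pOK_dgo' p t) hch
  show (↑(Gl (Fm π).2 (((Fm π).1).sort (· ≤ ·))) : Multiset ℕ) = π
  rw [hsort, hF2, hGl, ← hl, Multiset.sort_eq]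

lemma Gm_mem {n : ℕ} {σ : Multiset ℕ × Multiset ℕ}
    (hsg : IsSignedPartitionOf n σ.1 σ.2) (hcard : 1 ≤ Multiset.card σ.1)
    (hall : ∀ x ∈ σ.1, Even x ∧ 2 * Multiset.card σ.1 ≤ x)
    (hmem : (2 * Multiset.card σ.1) ∈ σ.1)
    (hodd : ∀ x ∈ σ.2, Odd x) (hnd : σ.2.Nodup)
    (hlt : ∀ x ∈ σ.2, x < 2 * Multiset.card σ.1) :
    (IsPartitionOf n (Gm σ) ∧ Multiset.Pairwise GGCond (Gm σ) ∧ ∃ x ∈ Gm σ, x < 3)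
      ∧ Fm (Gm σ) = σ := by
  obtain ⟨t, hc, hchain, he, hk⟩ := T_struct hcard hall hmem
  set D := σ.2 with hD
  set b0 := 2 * (t.length + 1) with hb0
  set p0 := if (2 * t.length + 1) ∈ D then 1 else 2 with hp0
  have hb0e : b0 % 2 = 0 := by omega
  have hp012 : p0 = 1 ∨ p0 = 2 := by rw [hp0]; split <;> simp
  have hup0 : up p0 = 2 := by unfold up; omega
  have hp0par : ((2 * t.length + 1) ∈ D ↔ p0 % 2 = 1) := by
    rw [hp0]; split <;> simp_all
  have hchR : List.Chain R p0 (ggo D p0 b0 t) := ggo_chain hchain he hb0e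
  have hGlc : Gl D (b0 :: t) = p0 :: ggo D p0 b0 t := Gl_cons D b0 t
  have hFbGl : Fb (Gl D (b0 :: t)) = b0 :: t := by
    rw [hGlc, Fb_cons, ggo_length]
    rw [bgo_ggo hchain he hb0e]
  have hdgoGl : (↑(dgo (Gl D (b0 :: t))) : Multiset ℕ) = D := by
    refine (Multiset.Nodup.ext (Multiset.coe_nodup.mpr (dgo_nodup _)) hnd).mpr ?_
    intro x
    rw [Multiset.mem_coe, hGlc, dgo_ggo_mem hchain he hb0e hp0par x]
    constructor
    · rintro ⟨hx, _, _⟩; exact hx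
    · intro hx
      refine ⟨hx, Nat.odd_iff.mp (hodd x hx), ?_⟩
      have := hlt x hx
      omega
  have hcsum : (b0 :: t).sum = σ.1.sum := by
    rw [← Multiset.sum_coe, ← hc, Multiset.sort_eq]
  have hdsum : (dgo (Gl D (b0 :: t))).sum = D.sum := by
    rw [← Multiset.sum_coe, hdgoGl]
  have hGlsum : ((Gl D (b0 :: t)).sum : ℤ) = n := by
    have hFs := Fb_sum hup0 hchR
    rw [← hGlc, hFbGl, hdsum] at hFs
    have hsgn := hsg.2.2
    rw [← hcsum] at hsgn
    omega
  have hGm : Gm σ = ↑(Gl D (b0 :: t)) := by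
    show (↑(Gl σ.2 (σ.1.sort (· ≤ ·))) : Multiset ℕ) = _
    rw [hc]
  have hpos : ∀ x ∈ Gl D (b0 :: t), 0 < x := by
    intro x hx
    rw [hGlc, List.mem_cons] at hx
    rcases hx with rfl | hx
    · omega
    · have := chain_R_lt hchR x hx; omega
  refine ⟨⟨⟨?_, ?_⟩, ?_, ?_⟩, ?_⟩
  · intro x hx
    rw [hGm, Multiset.mem_coe] at hx
    exact hpos x hx
  · rw [hGm, Multiset.sum_coe]
    exact_mod_cast hGlsum
  · rw [hGm]
    exact ⟨Gl D (b0 :: t), rfl, by rw [hGlc]; exact chainR_pairwise hchR⟩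
  · refine ⟨p0, ?_, by omega⟩
    rw [hGm, Multiset.mem_coe, hGlc]
    exact List.mem_cons_self
  · -- Fm (Gm σ) = σ
    have hsorted : List.Pairwise (· ≤ ·) (Gl D (b0 :: t)) := by
      rw [hGlc]
      exact chainR_sorted hchR
    have hsort : ((Gm σ) : Multiset ℕ).sort (· ≤ ·) = Gl D (b0 :: t) := by
      rw [hGm]
      exact sort_coe_of_sorted hsorted
    have h1 : (Fm (Gm σ)).1 = σ.1 := by
      show (↑(Fb ((Gm σ).sort (· ≤ ·))) : Multiset ℕ) = σ.1
      rw [hsort, hFbGl, ← hc, Multiset.sort_eq]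
    have h2 : (Fm (Gm σ)).2 = σ.2 := by
      show (↑(dgo ((Gm σ).sort (· ≤ ·))) : Multiset ℕ) = σ.2
      rw [hsort, hdgoGl]
    exact Prod.ext h1 h2

end GGB


/-- Remark: GG₁(n) − GG₂(n) counts signed partitions with even positive parts all
at least 2ℓ⁺, with 2ℓ⁺ occurring as a part, and odd distinct negative parts < 2ℓ⁺. -/
theorem gollnitz_gordon_difference_signed (n : ℕ) :
    {π : Multiset ℕ | IsPartitionOf n π ∧ Multiset.Pairwise GGCond π}.ncard -
    {π : Multiset ℕ | IsPartitionOf n π ∧ (∀ x ∈ π, 3 ≤ x) ∧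
      Multiset.Pairwise GGCond π}.ncard =
    {σ : Multiset ℕ × Multiset ℕ | IsSignedPartitionOf n σ.1 σ.2 ∧
      1 ≤ Multiset.card σ.1 ∧
      (∀ x ∈ σ.1, Even x ∧ 2 * Multiset.card σ.1 ≤ x) ∧
      (2 * Multiset.card σ.1) ∈ σ.1 ∧
      (∀ x ∈ σ.2, Odd x) ∧ σ.2.Nodup ∧
      (∀ x ∈ σ.2, x < 2 * Multiset.card σ.1)}.ncard := by
  classical
  set S1 := {π : Multiset ℕ | IsPartitionOf n π ∧ Multiset.Pairwise GGCond π} with hS1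
  set S2 := {π : Multiset ℕ | IsPartitionOf n π ∧ (∀ x ∈ π, 3 ≤ x) ∧
      Multiset.Pairwise GGCond π} with hS2
  set T := {σ : Multiset ℕ × Multiset ℕ | IsSignedPartitionOf n σ.1 σ.2 ∧
      1 ≤ Multiset.card σ.1 ∧
      (∀ x ∈ σ.1, Even x ∧ 2 * Multiset.card σ.1 ≤ x) ∧
      (2 * Multiset.card σ.1) ∈ σ.1 ∧
      (∀ x ∈ σ.2, Odd x) ∧ σ.2.Nodup ∧
      (∀ x ∈ σ.2, x < 2 * Multiset.card σ.1)} with hT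
  set A := {π : Multiset ℕ | IsPartitionOf n π ∧ Multiset.Pairwise GGCond π ∧
      ∃ x ∈ π, x < 3} with hA
  have hfin1 : S1.Finite := by
    refine (Set.finite_range (fun p : Nat.Partition n => p.parts)).subset ?_
    rintro π ⟨⟨hpos, hsum⟩, _⟩
    exact ⟨⟨π, fun {i} hi => hpos i hi, hsum⟩, rfl⟩
  have hsub : S2 ⊆ S1 := fun π h => ⟨h.1, h.2.2⟩
  have hdiff : S1 \ S2 = A := by
    ext π
    simp only [hS1, hS2, hA, Set.mem_diff, Set.mem_setOf_eq]
    constructor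
    · rintro ⟨⟨hp, hpw⟩, hn⟩
      refine ⟨hp, hpw, ?_⟩
      by_contra hno
      push_neg at hno
      exact hn ⟨hp, fun x hx => by have := hno x hx; omega, hpw⟩
    · rintro ⟨hp, hpw, x, hx, hx3⟩
      exact ⟨⟨hp, hpw⟩, fun h => by have := h.2.1 x hx; omega⟩
  have hstep : S1.ncard - S2.ncard = A.ncard := by
    rw [← hdiff]
    exact (Set.ncard_diff hsub (hfin1.subset hsub)).symm
  rw [hstep]
  have hmapsF : Set.MapsTo GGB.Fm A T := by
    rintro π ⟨hp, hpw, hx⟩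
    exact GGB.Fm_mem hp hpw hx
  have hmapsG : Set.MapsTo GGB.Gm T A := by
    rintro σ ⟨hsg, hcard, hall, hmem, hodd, hnd, hlt⟩
    exact (GGB.Gm_mem hsg hcard hall hmem hodd hnd hlt).1
  have hinv : Set.InvOn GGB.Gm GGB.Fm A T := by
    constructor
    · rintro π ⟨hp, hpw, hx⟩
      exact GGB.Gm_Fm hp hpw hx
    · rintro σ ⟨hsg, hcard, hall, hmem, hodd, hnd, hlt⟩
      exact (GGB.Gm_mem hsg hcard hall hmem hodd hnd hlt).2
  have hbij := Set.InvOn.bijOn hinv hmapsF hmapsG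
  rw [← hbij.image_eq, Set.ncard_image_of_injOn hbij.injOn]
end
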